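/- arXiv:2306.16800 — 4 statements merged into one kernel-verified Lean document; each statement's English description precedes it below -/
import Mathlib

section
/- Let D ⊆ ℂ be an open set and let f be holomorphic on D×D. For every z ∈ D and t ∈ ℂ with 2|t| < d(z,∂D), and every radius r with 2|t| < r < d(z,∂D), the polynomial Q(ζ₁,ζ₂) = (ζ₁−z)(ζ₂−z) + t(ζ₁−ζ₂) has no zeros on C₁×C₂ where C₁ = C₂ is the circle of radius r centered at z; the double contour integral (Tf)(z,t) = (2πi)⁻² ∮_{C₁}∮_{C₂} f(ζ₁,ζ₂)/Q(ζ₁,ζ₂) dζ₁ dζ₂ is independent of the choice of such r; and the resulting function (z,t) ↦ (Tf)(z,t) is holomorphic on U_D = {(z,t) ∈ D×ℂ : 2|t| < d(z,∂D)}. -/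
open Complex Metric MeasureTheory

noncomputable section

/-- The quadratic polynomial `Q(ζ₁,ζ₂) = (ζ₁−z)(ζ₂−z) + t(ζ₁−ζ₂)`. -/
def Qpoly (z t ζ₁ ζ₂ : ℂ) : ℂ := (ζ₁ - z) * (ζ₂ - z) + t * (ζ₁ - ζ₂)

/-- The double contour integral `(Tf)(z,t)` computed over circles of radius `r`
centered at `z`. -/
def Tgen (f : ℂ × ℂ → ℂ) (z t : ℂ) (r : ℝ) : ℂ :=
  (1 / (2 * Real.pi * Complex.I)) ^ 2 *
    ∮ ζ₁ in C(z, r), ∮ ζ₂ in C(z, r), f (ζ₁, ζ₂) / Qpoly z t ζ₁ ζ₂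

/-- The distance from `z` to the boundary of the open set `D`
(realized as the extended distance to the complement, which is `∞` when `D = ℂ`). -/
def distB (D : Set ℂ) (z : ℂ) : ENNReal := EMetric.infEdist z Dᶜ


namespace Stmt0

open Real

lemma norm_Qpoly_lower (z t ζ₁ ζ₂ : ℂ) :
    ‖ζ₁ - z‖ * ‖ζ₂ - z‖ - ‖t‖ * (‖ζ₁ - z‖ + ‖ζ₂ - z‖) ≤ ‖Qpoly z t ζ₁ ζ₂‖ := by
  have h2 : ‖t * (ζ₁ - ζ₂)‖ ≤ ‖t‖ * (‖ζ₁ - z‖ + ‖ζ₂ - z‖) := by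
    rw [norm_mul]
    refine mul_le_mul_of_nonneg_left ?_ (norm_nonneg t)
    calc ‖ζ₁ - ζ₂‖ = ‖(ζ₁ - z) - (ζ₂ - z)‖ := by ring_nf
      _ ≤ ‖ζ₁ - z‖ + ‖ζ₂ - z‖ := norm_sub_le _ _
  have h3 : ‖(ζ₁ - z) * (ζ₂ - z)‖ ≤ ‖Qpoly z t ζ₁ ζ₂‖ + ‖t * (ζ₁ - ζ₂)‖ := by
    have : (ζ₁ - z) * (ζ₂ - z) = Qpoly z t ζ₁ ζ₂ - t * (ζ₁ - ζ₂) := by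
      unfold Qpoly; ring
    rw [this]
    exact norm_sub_le _ _
  rw [norm_mul] at h3
  linarith

lemma Qpoly_ne (z t ζ₁ ζ₂ : ℂ) (h₁ : 2 * ‖t‖ < ‖ζ₁ - z‖) (h₂ : 2 * ‖t‖ < ‖ζ₂ - z‖) :
    Qpoly z t ζ₁ ζ₂ ≠ 0 := by
  have hl := norm_Qpoly_lower z t ζ₁ ζ₂
  have ht : (0:ℝ) ≤ ‖t‖ := norm_nonneg t
  have ha : (0:ℝ) < ‖ζ₁ - z‖ := lt_of_le_of_lt (by linarith) h₁
  have hb : (0:ℝ) < ‖ζ₂ - z‖ := lt_of_le_of_lt (by linarith) h₂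
  intro h
  rw [h, norm_zero] at hl
  nlinarith

lemma subset_of_lt_infEdist {D : Set ℂ} {z : ℂ} {r : ℝ}
    (h : ENNReal.ofReal r < EMetric.infEdist z Dᶜ) : closedBall z r ⊆ D := by
  intro x hx
  by_contra hxD
  have h0 : EMetric.infEdist x Dᶜ = 0 := EMetric.infEdist_zero_of_mem hxD
  have h1 : EMetric.infEdist z Dᶜ ≤ EMetric.infEdist x Dᶜ + edist z x :=
    EMetric.infEdist_le_infEdist_add_edist
  rw [h0, zero_add] at h1
  have h2 : edist z x ≤ ENNReal.ofReal r := by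
    rw [edist_dist]
    exact ENNReal.ofReal_le_ofReal (by rw [dist_comm]; exact mem_closedBall.mp hx)
  exact absurd (h.trans_le (h1.trans h2)) (lt_irrefl _)

/-! ### Iterated integrals over the product measure -/

def μθ : Measure ℝ := volume.restrict (Set.Ioc 0 (2*π))

lemma integrable_cont {k : ℝ × ℝ → ℂ} (hk : Continuous k) : Integrable k (μθ.prod μθ) := by
  unfold μθ
  rw [Measure.prod_restrict, ← Measure.volume_eq_prod]
  exact (hk.continuousOn.integrableOn_compact (isCompact_Icc.prod isCompact_Icc)).mono_set
    (Set.prod_mono Set.Ioc_subset_Icc_self Set.Ioc_subset_Icc_self)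

lemma iterated_eq_prod {k : ℝ × ℝ → ℂ} (hk : Continuous k) :
    (∫ θ₁ in (0:ℝ)..(2*π), ∫ θ₂ in (0:ℝ)..(2*π), k (θ₁, θ₂)) = ∫ a, k a ∂(μθ.prod μθ) := by
  have hle : (0:ℝ) ≤ 2*π := by positivity
  rw [intervalIntegral.integral_of_le hle]
  simp_rw [intervalIntegral.integral_of_le hle]
  exact MeasureTheory.integral_integral (integrable_cont hk)

lemma iterated_swap {k : ℝ × ℝ → ℂ} (hk : Continuous k) :
    (∫ θ₁ in (0:ℝ)..(2*π), ∫ θ₂ in (0:ℝ)..(2*π), k (θ₁, θ₂)) =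
      ∫ θ₂ in (0:ℝ)..(2*π), ∫ θ₁ in (0:ℝ)..(2*π), k (θ₁, θ₂) := by
  have hle : (0:ℝ) ≤ 2*π := by positivity
  rw [intervalIntegral.integral_of_le hle, intervalIntegral.integral_of_le hle]
  simp_rw [intervalIntegral.integral_of_le hle]
  exact MeasureTheory.integral_integral_swap (integrable_cont hk)

lemma double_circleIntegral_eq (G : ℂ → ℂ → ℂ) (z : ℂ) (ra rb : ℝ) :
    (∮ ζ₁ in C(z, ra), ∮ ζ₂ in C(z, rb), G ζ₁ ζ₂) =
      ∫ θ₁ in (0:ℝ)..(2*π), ∫ θ₂ in (0:ℝ)..(2*π),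
        (circleMap 0 ra θ₁ * I) * ((circleMap 0 rb θ₂ * I) *
          G (circleMap z ra θ₁) (circleMap z rb θ₂)) := by
  simp only [circleIntegral, deriv_circleMap, smul_eq_mul]
  simp_rw [← intervalIntegral.integral_const_mul]

lemma circleMap_eq_add (z : ℂ) (r θ : ℝ) : circleMap z r θ = z + circleMap 0 r θ := by
  simp [circleMap]

lemma Qpoly_translate (z t c₁ c₂ : ℂ) : Qpoly z t (z + c₁) (z + c₂) = Qpoly 0 t c₁ c₂ := by
  unfold Qpoly; ring_nf

lemma norm_circleMap (r : ℝ) (hr : 0 ≤ r) (θ : ℝ) : ‖circleMap 0 r θ‖ = r := by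
  rw [norm_circleMap_zero, _root_.abs_of_nonneg hr]

/-! ### Bound for the derivative on compact sets -/

lemma fderiv_bound_on_compact {f : ℂ × ℂ → ℂ} {S : Set (ℂ × ℂ)} (hS : IsOpen S)
    (hf : DifferentiableOn ℂ f S) {K : Set (ℂ × ℂ)} (hK : IsCompact K) (hKS : K ⊆ S) :
    ∃ M₁ : ℝ, 0 ≤ M₁ ∧ ∀ p ∈ K, ‖fderiv ℂ f p‖ ≤ M₁ := by
  obtain ⟨ρ, hρ, hρsub⟩ := hK.exists_cthickening_subset_open hS hKS
  have hLc : IsCompact (cthickening ρ K) := hK.cthickening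
  obtain ⟨M₀, hM₀⟩ := hLc.exists_bound_of_continuousOn (hf.continuousOn.mono hρsub)
  have hM₀0 : ∀ x ∈ cthickening ρ K, ‖f x‖ ≤ max M₀ 0 :=
    fun x hx => (hM₀ x hx).trans (le_max_left _ _)
  set M : ℝ := max M₀ 0 with hM
  have hMnn : 0 ≤ M := le_max_right _ _
  refine ⟨2 * ((2*M+1)/ρ), by positivity, fun p hp => ?_⟩
  have hpS : p ∈ S := hKS hp
  have hfp : DifferentiableAt ℂ f p := hf.differentiableAt (hS.mem_nhds hpS)
  have key : ∀ v : ℂ × ℂ, (∀ u : ℂ, dist u (0:ℂ) < ρ → p + u • v ∈ cthickening ρ K) →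
      ‖fderiv ℂ f p v‖ ≤ (2*M+1)/ρ := by
    intro v hv
    set g : ℂ → ℂ := fun u => f (p + u • v) with hg
    have hline : ∀ u ∈ ball (0:ℂ) ρ, p + u • v ∈ S := fun u hu =>
      hρsub (hv u (mem_ball.mp hu))
    have hgd : DifferentiableOn ℂ g (ball (0:ℂ) ρ) := by
      intro u hu
      have hfd : DifferentiableAt ℂ f (p + u • v) :=
        hf.differentiableAt (hS.mem_nhds (hline u hu))
      exact (hfd.comp u (by fun_prop)).differentiableWithinAt
    have hmaps : Set.MapsTo g (ball (0:ℂ) ρ) (ball (g 0) (2*M+1)) := by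
      intro u hu
      have h1 : ‖g u‖ ≤ M := hM₀0 _ (hv u (mem_ball.mp hu))
      have h2 : ‖g 0‖ ≤ M := hM₀0 _ (hv 0 (by simpa using hρ))
      have : dist (g u) (g 0) ≤ 2*M := by
        rw [dist_eq_norm]
        calc ‖g u - g 0‖ ≤ ‖g u‖ + ‖g 0‖ := norm_sub_le _ _
          _ ≤ 2*M := by linarith
      exact mem_ball.mpr (lt_of_le_of_lt this (by linarith))
    have hder := Complex.norm_deriv_le_div_of_mapsTo_ball hgd (hmaps.mono_right ball_subset_closedBall) hρ
    have hgder : HasDerivAt g (fderiv ℂ f p v) 0 := by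
      have h1 : HasDerivAt (fun u : ℂ => p + u • v) v 0 := by
        simpa using ((hasDerivAt_id (0:ℂ)).smul_const v).const_add p
      have h2 : HasFDerivAt f (fderiv ℂ f p) (p + (0:ℂ) • v) := by
        simpa using hfp.hasFDerivAt
      exact h2.comp_hasDerivAt 0 h1
    rwa [← hgder.deriv]
  have hmem : ∀ (w : ℂ × ℂ), ‖w‖ ≤ 1 → ∀ u : ℂ, dist u (0:ℂ) < ρ → p + u • w ∈ cthickening ρ K := by
    intro w hw u hu
    refine mem_cthickening_of_dist_le _ p ρ K hp ?_
    have hdd : dist (p + u • w) p = ‖u • w‖ := by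
      simp [dist_eq_norm]
    rw [hdd, norm_smul]
    calc ‖u‖ * ‖w‖ ≤ ‖u‖ * 1 := by
          exact mul_le_mul_of_nonneg_left hw (norm_nonneg u)
      _ ≤ ρ := by rw [mul_one]; simpa [dist_eq_norm] using hu.le
  have h₁ : ‖fderiv ℂ f p ((1:ℂ), (0:ℂ))‖ ≤ (2*M+1)/ρ := by
    refine key _ (hmem _ ?_)
    simp [Prod.norm_def]
  have h₂ : ‖fderiv ℂ f p ((0:ℂ), (1:ℂ))‖ ≤ (2*M+1)/ρ := by
    refine key _ (hmem _ ?_)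
    simp [Prod.norm_def]
  refine ContinuousLinearMap.opNorm_le_bound _ (by positivity) fun v => ?_
  have hsplit : v = v.1 • ((1:ℂ), (0:ℂ)) + v.2 • ((0:ℂ), (1:ℂ)) := by
    simp [Prod.ext_iff]
  calc ‖fderiv ℂ f p v‖
      = ‖v.1 • fderiv ℂ f p ((1:ℂ),(0:ℂ)) + v.2 • fderiv ℂ f p ((0:ℂ),(1:ℂ))‖ := by
        conv_lhs => rw [hsplit]
        rw [map_add, (fderiv ℂ f p).map_smul, (fderiv ℂ f p).map_smul]
    _ ≤ ‖v.1‖ * ‖fderiv ℂ f p ((1:ℂ),(0:ℂ))‖ + ‖v.2‖ * ‖fderiv ℂ f p ((0:ℂ),(1:ℂ))‖ := by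
        refine (norm_add_le _ _).trans ?_
        rw [norm_smul, norm_smul]
    _ ≤ ‖v‖ * ((2*M+1)/ρ) + ‖v‖ * ((2*M+1)/ρ) := by
        have l1 : ‖v.1‖ ≤ ‖v‖ := norm_fst_le v
        have l2 : ‖v.2‖ ≤ ‖v‖ := norm_snd_le v
        have b1 : ‖v.1‖ * ‖fderiv ℂ f p ((1:ℂ),(0:ℂ))‖ ≤ ‖v‖ * ((2*M+1)/ρ) :=
          mul_le_mul l1 h₁ (norm_nonneg _) (norm_nonneg v)
        have b2 : ‖v.2‖ * ‖fderiv ℂ f p ((0:ℂ),(1:ℂ))‖ ≤ ‖v‖ * ((2*M+1)/ρ) :=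
          mul_le_mul l2 h₂ (norm_nonneg _) (norm_nonneg v)
        linarith
    _ = 2 * ((2*M+1)/ρ) * ‖v‖ := by ring

/-! ### The parametrized integrand and its derivative -/

def Ldiag : (ℂ × ℂ) →L[ℂ] (ℂ × ℂ) :=
  (ContinuousLinearMap.fst ℂ ℂ ℂ).prod (ContinuousLinearMap.fst ℂ ℂ ℂ)

def sndL : (ℂ × ℂ) →L[ℂ] ℂ := ContinuousLinearMap.snd ℂ ℂ ℂ

lemma norm_Ldiag_le : ‖Ldiag‖ ≤ 1 := by
  refine ContinuousLinearMap.opNorm_le_bound _ zero_le_one fun v => ?_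
  rw [one_mul]
  show ‖((v.1 : ℂ), (v.1 : ℂ))‖ ≤ ‖v‖
  rw [Prod.norm_def]
  simpa using norm_fst_le v

def Fint (f : ℂ × ℂ → ℂ) (r : ℝ) (x : ℂ × ℂ) (a : ℝ × ℝ) : ℂ :=
  (circleMap 0 r a.1 * I) * ((circleMap 0 r a.2 * I) *
    (f (x.1 + circleMap 0 r a.1, x.1 + circleMap 0 r a.2) *
      (Qpoly 0 x.2 (circleMap 0 r a.1) (circleMap 0 r a.2))⁻¹))

def Fder (f : ℂ × ℂ → ℂ) (r : ℝ) (x : ℂ × ℂ) (a : ℝ × ℝ) : (ℂ × ℂ) →L[ℂ] ℂ :=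
  ((circleMap 0 r a.1 * I) * (circleMap 0 r a.2 * I) *
      (Qpoly 0 x.2 (circleMap 0 r a.1) (circleMap 0 r a.2))⁻¹) •
    ((fderiv ℂ f (x.1 + circleMap 0 r a.1, x.1 + circleMap 0 r a.2)).comp Ldiag) +
  (-((circleMap 0 r a.1 * I) * (circleMap 0 r a.2 * I) *
      (f (x.1 + circleMap 0 r a.1, x.1 + circleMap 0 r a.2)) *
      (circleMap 0 r a.1 - circleMap 0 r a.2)) *
      (((Qpoly 0 x.2 (circleMap 0 r a.1) (circleMap 0 r a.2)) ^ 2)⁻¹)) • sndL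

lemma hasFDerivAt_Fint {f : ℂ × ℂ → ℂ} {r : ℝ} {x : ℂ × ℂ} {a : ℝ × ℝ}
    (hfd : DifferentiableAt ℂ f (x.1 + circleMap 0 r a.1, x.1 + circleMap 0 r a.2))
    (hΔ : Qpoly 0 x.2 (circleMap 0 r a.1) (circleMap 0 r a.2) ≠ 0) :
    HasFDerivAt (fun y => Fint f r y a) (Fder f r x a) x := by
  set c₁ := circleMap 0 r a.1
  set c₂ := circleMap 0 r a.2
  set q := Qpoly 0 x.2 c₁ c₂ with hq
  set p := (x.1 + c₁, x.1 + c₂) with hp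
  have hpd : HasFDerivAt (fun y : ℂ × ℂ => (y.1 + c₁, y.1 + c₂)) Ldiag x :=
    ((hasFDerivAt_fst).add_const c₁).prodMk ((hasFDerivAt_fst).add_const c₂)
  have h1 : HasFDerivAt (fun y : ℂ × ℂ => f (y.1 + c₁, y.1 + c₂))
      ((fderiv ℂ f p).comp Ldiag) x :=
    HasFDerivAt.comp x (hfd.hasFDerivAt) hpd
  have hQ : HasFDerivAt (fun y : ℂ × ℂ => Qpoly 0 y.2 c₁ c₂) ((c₁ - c₂) • sndL) x := by
    have h0 : HasFDerivAt (fun y : ℂ × ℂ => (c₁ - 0) * (c₂ - 0) + y.2 * (c₁ - c₂))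
        ((0 : (ℂ × ℂ) →L[ℂ] ℂ) + (c₁ - c₂) • sndL) x :=
      (hasFDerivAt_const _ _).add ((hasFDerivAt_snd).mul_const _)
    simpa [Qpoly, sndL] using h0
  have hinv : HasFDerivAt (fun y : ℂ × ℂ => (Qpoly 0 y.2 c₁ c₂)⁻¹)
      ((-ContinuousLinearMap.mulLeftRight ℂ ℂ q⁻¹ q⁻¹).comp ((c₁ - c₂) • sndL)) x :=
    (hasFDerivAt_inv' hΔ).comp x hQ
  have hmul := h1.mul hinv
  have hfin := (hmul.const_mul (c₂ * I)).const_mul (c₁ * I)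
  have heq : (c₁ * I) • ((c₂ * I) • (f (x.1 + c₁, x.1 + c₂) •
        ((-ContinuousLinearMap.mulLeftRight ℂ ℂ q⁻¹ q⁻¹).comp ((c₁ - c₂) • sndL)) +
      (Qpoly 0 x.2 c₁ c₂)⁻¹ • ((fderiv ℂ f p).comp Ldiag))) = Fder f r x a := by
    apply ContinuousLinearMap.ext
    intro v
    simp only [Fder, ContinuousLinearMap.add_apply, ContinuousLinearMap.smul_apply,
      ContinuousLinearMap.comp_apply, ContinuousLinearMap.neg_apply,
      ContinuousLinearMap.mulLeftRight_apply, smul_eq_mul, ← hq, ← hp]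
    change _ = c₁ * I * (c₂ * I) * q⁻¹ * (fderiv ℂ f p) (Ldiag v) +
      -(c₁ * I * (c₂ * I) * f p * (c₁ - c₂)) * (q ^ 2)⁻¹ * sndL v
    field_simp
    ring
  rw [← heq]
  exact hfin

section

variable {D : Set ℂ} {f : ℂ × ℂ → ℂ}

lemma memD_of_closedBall {x : ℂ × ℂ} {r : ℝ} (hr : 0 < r) (hsub : closedBall x.1 r ⊆ D)
    (θ : ℝ) : x.1 + circleMap 0 r θ ∈ D := by
  apply hsub
  rw [mem_closedBall, dist_eq_norm]
  have : x.1 + circleMap 0 r θ - x.1 = circleMap 0 r θ := by ring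
  rw [this, norm_circleMap r hr.le]

lemma Qpoly_circle_ne {t : ℂ} {r : ℝ} (ht : 2 * ‖t‖ < r) (θ₁ θ₂ : ℝ) :
    Qpoly 0 t (circleMap 0 r θ₁) (circleMap 0 r θ₂) ≠ 0 := by
  have hr : 0 ≤ r := le_trans (by positivity) ht.le
  apply Qpoly_ne <;> rw [sub_zero, norm_circleMap r hr] <;> exact ht

lemma norm_Qpoly_circle_ge {t : ℂ} {r : ℝ} (hr : 0 ≤ r) (θ₁ θ₂ : ℝ) :
    r * r - ‖t‖ * (2 * r) ≤ ‖Qpoly 0 t (circleMap 0 r θ₁) (circleMap 0 r θ₂)‖ := by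
  have h := norm_Qpoly_lower 0 t (circleMap 0 r θ₁) (circleMap 0 r θ₂)
  rw [sub_zero, sub_zero, norm_circleMap r hr, norm_circleMap r hr] at h
  linarith

lemma continuous_Fint (hD : IsOpen D) (hf : DifferentiableOn ℂ f (D ×ˢ D))
    {r : ℝ} {x : ℂ × ℂ} (hr : 0 < r) (hsub : closedBall x.1 r ⊆ D) (ht : 2 * ‖x.2‖ < r) :
    Continuous (Fint f r x) := by
  have hc1 : Continuous fun b : ℝ × ℝ => circleMap 0 r b.1 :=
    (continuous_circleMap 0 r).comp continuous_fst
  have hc2 : Continuous fun b : ℝ × ℝ => circleMap 0 r b.2 :=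
    (continuous_circleMap 0 r).comp continuous_snd
  have hq : Continuous fun b : ℝ × ℝ =>
      (x.1 + circleMap 0 r b.1, x.1 + circleMap 0 r b.2) :=
    (continuous_const.add hc1).prodMk (continuous_const.add hc2)
  have hQc : Continuous fun b : ℝ × ℝ =>
      Qpoly 0 x.2 (circleMap 0 r b.1) (circleMap 0 r b.2) := by
    unfold Qpoly
    exact ((hc1.sub continuous_const).mul (hc2.sub continuous_const)).add
      (continuous_const.mul (hc1.sub hc2))
  rw [continuous_iff_continuousAt]
  intro a
  have hfa : ContinuousAt (fun b : ℝ × ℝ =>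
      f (x.1 + circleMap 0 r b.1, x.1 + circleMap 0 r b.2)) a := by
    have hmem : (x.1 + circleMap 0 r a.1, x.1 + circleMap 0 r a.2) ∈ D ×ˢ D :=
      ⟨memD_of_closedBall hr hsub a.1, memD_of_closedBall hr hsub a.2⟩
    exact ContinuousAt.comp (x := a)
      (f := fun b : ℝ × ℝ => (x.1 + circleMap 0 r b.1, x.1 + circleMap 0 r b.2)) (g := f)
      ((hf.differentiableAt ((hD.prod hD).mem_nhds hmem)).continuousAt) hq.continuousAt
  exact ((hc1.continuousAt).mul continuousAt_const).mul
    (((hc2.continuousAt).mul continuousAt_const).mul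
      (hfa.mul ((hQc.continuousAt).inv₀ (Qpoly_circle_ne ht a.1 a.2))))

lemma aesm_Fder (hD : IsOpen D) (hf : DifferentiableOn ℂ f (D ×ˢ D))
    {r : ℝ} {x : ℂ × ℂ} (hr : 0 < r) (hsub : closedBall x.1 r ⊆ D) (ht : 2 * ‖x.2‖ < r) :
    AEStronglyMeasurable (Fder f r x) (μθ.prod μθ) := by
  have hc1 : Continuous fun b : ℝ × ℝ => circleMap 0 r b.1 :=
    (continuous_circleMap 0 r).comp continuous_fst
  have hc2 : Continuous fun b : ℝ × ℝ => circleMap 0 r b.2 :=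
    (continuous_circleMap 0 r).comp continuous_snd
  have hq : Continuous fun b : ℝ × ℝ =>
      (x.1 + circleMap 0 r b.1, x.1 + circleMap 0 r b.2) :=
    (continuous_const.add hc1).prodMk (continuous_const.add hc2)
  have hQc : Continuous fun b : ℝ × ℝ =>
      Qpoly 0 x.2 (circleMap 0 r b.1) (circleMap 0 r b.2) := by
    unfold Qpoly
    exact ((hc1.sub continuous_const).mul (hc2.sub continuous_const)).add
      (continuous_const.mul (hc1.sub hc2))
  have hQne : ∀ b : ℝ × ℝ, Qpoly 0 x.2 (circleMap 0 r b.1) (circleMap 0 r b.2) ≠ 0 :=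
    fun b => Qpoly_circle_ne ht b.1 b.2
  have hfc : Continuous fun b : ℝ × ℝ =>
      f (x.1 + circleMap 0 r b.1, x.1 + circleMap 0 r b.2) := by
    rw [continuous_iff_continuousAt]
    intro a
    have hmem : (x.1 + circleMap 0 r a.1, x.1 + circleMap 0 r a.2) ∈ D ×ˢ D :=
      ⟨memD_of_closedBall hr hsub a.1, memD_of_closedBall hr hsub a.2⟩
    exact ContinuousAt.comp (x := a)
      (f := fun b : ℝ × ℝ => (x.1 + circleMap 0 r b.1, x.1 + circleMap 0 r b.2)) (g := f)
      ((hf.differentiableAt ((hD.prod hD).mem_nhds hmem)).continuousAt) hq.continuousAt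
  have hg1 : Continuous fun b : ℝ × ℝ => (circleMap 0 r b.1 * I) * (circleMap 0 r b.2 * I) *
      (Qpoly 0 x.2 (circleMap 0 r b.1) (circleMap 0 r b.2))⁻¹ := by
    rw [continuous_iff_continuousAt]
    intro a
    exact ((hc1.continuousAt.mul continuousAt_const).mul
      (hc2.continuousAt.mul continuousAt_const)).mul (hQc.continuousAt.inv₀ (hQne a))
  have hg2 : Continuous fun b : ℝ × ℝ => -((circleMap 0 r b.1 * I) * (circleMap 0 r b.2 * I) *
      (f (x.1 + circleMap 0 r b.1, x.1 + circleMap 0 r b.2)) *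
      (circleMap 0 r b.1 - circleMap 0 r b.2)) *
      (((Qpoly 0 x.2 (circleMap 0 r b.1) (circleMap 0 r b.2)) ^ 2)⁻¹) := by
    rw [continuous_iff_continuousAt]
    intro a
    refine ContinuousAt.mul ?_ (((hQc.continuousAt).pow 2).inv₀ (pow_ne_zero 2 (hQne a)))
    exact ((((hc1.continuousAt.mul continuousAt_const).mul
      (hc2.continuousAt.mul continuousAt_const)).mul hfc.continuousAt).mul
      (hc1.continuousAt.sub hc2.continuousAt)).neg
  have hDf : Measurable fun b : ℝ × ℝ =>
      (fderiv ℂ f (x.1 + circleMap 0 r b.1, x.1 + circleMap 0 r b.2)).comp Ldiag := by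
    have hcont : Continuous (fun S : (ℂ × ℂ) →L[ℂ] ℂ => S.comp Ldiag) :=
      ((ContinuousLinearMap.compL ℂ (ℂ × ℂ) (ℂ × ℂ) ℂ).flip Ldiag).continuous
    exact hcont.measurable.comp ((measurable_fderiv ℂ f).comp hq.measurable)
  refine Measurable.aestronglyMeasurable ?_
  exact (hg1.measurable.smul hDf).add (hg2.measurable.smul measurable_const)

lemma norm_Fder_le {r : ℝ} {x : ℂ × ℂ} {a : ℝ × ℝ} {M₀ M₁ δ : ℝ} (hr : 0 < r) (hδ : 0 < δ)
    (hδΔ : δ ≤ ‖Qpoly 0 x.2 (circleMap 0 r a.1) (circleMap 0 r a.2)‖)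
    (hM₀ : ‖f (x.1 + circleMap 0 r a.1, x.1 + circleMap 0 r a.2)‖ ≤ M₀)
    (hM₁ : ‖fderiv ℂ f (x.1 + circleMap 0 r a.1, x.1 + circleMap 0 r a.2)‖ ≤ M₁) :
    ‖Fder f r x a‖ ≤ r^2 * δ⁻¹ * M₁ + r^2 * M₀ * (2*r) * (δ^2)⁻¹ := by
  set c₁ := circleMap 0 r a.1 with hc₁
  set c₂ := circleMap 0 r a.2 with hc₂
  set q := Qpoly 0 x.2 c₁ c₂ with hqd
  set p := (x.1 + c₁, x.1 + c₂) with hpd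
  have hM₁0 : 0 ≤ M₁ := le_trans (norm_nonneg _) hM₁
  have hM₀0 : 0 ≤ M₀ := le_trans (norm_nonneg _) hM₀
  have hnc₁ : ‖c₁‖ = r := norm_circleMap r hr.le a.1
  have hnc₂ : ‖c₂‖ = r := norm_circleMap r hr.le a.2
  have hq0 : (0:ℝ) < ‖q‖ := lt_of_lt_of_le hδ hδΔ
  have hinv : ‖q‖⁻¹ ≤ δ⁻¹ := by gcongr
  have hinv2 : (‖q‖^2)⁻¹ ≤ (δ^2)⁻¹ := by gcongr
  have hI : ‖(I:ℂ)‖ = 1 := by simp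
  have hb1 : ‖(c₁ * I) * (c₂ * I) * q⁻¹‖ ≤ r^2 * δ⁻¹ := by
    have he : ‖(c₁ * I) * (c₂ * I) * q⁻¹‖ = r * r * ‖q‖⁻¹ := by
      simp [norm_mul, hnc₁, hnc₂]
    rw [he]
    calc r * r * ‖q‖⁻¹ ≤ r * r * δ⁻¹ := by gcongr
      _ = r^2 * δ⁻¹ := by ring
  have hcomp : ‖(fderiv ℂ f p).comp Ldiag‖ ≤ M₁ := by
    refine (ContinuousLinearMap.opNorm_comp_le _ _).trans ?_
    calc ‖fderiv ℂ f p‖ * ‖Ldiag‖ ≤ M₁ * 1 :=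
          mul_le_mul hM₁ norm_Ldiag_le (norm_nonneg _) hM₁0
      _ = M₁ := mul_one _
  have hb2 : ‖-((c₁ * I) * (c₂ * I) * f p * (c₁ - c₂)) * ((q^2)⁻¹)‖ ≤
      r^2 * M₀ * (2*r) * (δ^2)⁻¹ := by
    have he : ‖-((c₁ * I) * (c₂ * I) * f p * (c₁ - c₂)) * ((q^2)⁻¹)‖ =
        r * r * ‖f p‖ * ‖c₁ - c₂‖ * (‖q‖^2)⁻¹ := by
      simp [norm_mul, hnc₁, hnc₂]
    rw [he]
    have hsub2 : ‖c₁ - c₂‖ ≤ 2*r := by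
      calc ‖c₁ - c₂‖ ≤ ‖c₁‖ + ‖c₂‖ := norm_sub_le _ _
        _ = 2*r := by rw [hnc₁, hnc₂]; ring
    calc r * r * ‖f p‖ * ‖c₁ - c₂‖ * (‖q‖^2)⁻¹ ≤ r * r * M₀ * (2*r) * (δ^2)⁻¹ := by gcongr
      _ = r^2 * M₀ * (2*r) * (δ^2)⁻¹ := by ring
  set s₁ := (c₁ * I) * (c₂ * I) * q⁻¹ with hs₁
  set s₂ := -((c₁ * I) * (c₂ * I) * f p * (c₁ - c₂)) * ((q^2)⁻¹) with hs₂
  set T₁ := (fderiv ℂ f p).comp Ldiag with hT₁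
  have hFd : Fder f r x a = s₁ • T₁ + s₂ • sndL := rfl
  rw [hFd]
  calc ‖s₁ • T₁ + s₂ • sndL‖ ≤ ‖s₁‖ * ‖T₁‖ + ‖s₂‖ * ‖sndL‖ := by
        refine (norm_add_le _ _).trans ?_
        rw [norm_smul s₁ T₁, norm_smul s₂ sndL]
    _ ≤ (r^2 * δ⁻¹) * M₁ + (r^2 * M₀ * (2*r) * (δ^2)⁻¹) * 1 := by
        have hsnd : ‖sndL‖ ≤ 1 := ContinuousLinearMap.norm_snd_le ℂ ℂ ℂ
        exact add_le_add
          (mul_le_mul hb1 hcomp (norm_nonneg _) (by positivity))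
          (mul_le_mul hb2 hsnd (norm_nonneg _) (by positivity))
    _ = r^2 * δ⁻¹ * M₁ + r^2 * M₀ * (2*r) * (δ^2)⁻¹ := by ring

lemma Tgen_eq_int (hD : IsOpen D) (hf : DifferentiableOn ℂ f (D ×ˢ D)) {x : ℂ × ℂ} {r : ℝ}
    (hr : 0 < r) (hsub : closedBall x.1 r ⊆ D) (ht : 2 * ‖x.2‖ < r) :
    Tgen f x.1 x.2 r = (1 / (2 * π * I)) ^ 2 * ∫ a, Fint f r x a ∂(μθ.prod μθ) := by
  unfold Tgen
  rw [double_circleIntegral_eq (fun ζ₁ ζ₂ => f (ζ₁, ζ₂) / Qpoly x.1 x.2 ζ₁ ζ₂) x.1 r r]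
  congr 1
  rw [← iterated_eq_prod (continuous_Fint hD hf hr hsub ht)]
  refine intervalIntegral.integral_congr fun θ₁ _ => ?_
  refine intervalIntegral.integral_congr fun θ₂ _ => ?_
  unfold Fint
  rw [circleMap_eq_add x.1 r θ₁, circleMap_eq_add x.1 r θ₂, Qpoly_translate, div_eq_mul_inv]

instance : IsFiniteMeasure μθ := by
  constructor
  unfold μθ
  rw [Measure.restrict_apply_univ]
  exact measure_Ioc_lt_top

lemma differentiableAt_Tgen (hD : IsOpen D) (hf : DifferentiableOn ℂ f (D ×ˢ D))
    {z₀ t₀ : ℂ} {r : ℝ} (hr1 : 2 * ‖t₀‖ < r)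
    (hr2 : ENNReal.ofReal r < EMetric.infEdist z₀ Dᶜ) :
    DifferentiableAt ℂ (fun x : ℂ × ℂ => Tgen f x.1 x.2 r) (z₀, t₀) := by
  have ht0 : (0:ℝ) ≤ ‖t₀‖ := norm_nonneg _
  have hr0 : 0 < r := by linarith
  obtain ⟨ε, hε, hεr, hεt⟩ : ∃ ε > 0,
      ENNReal.ofReal (r + ε) < EMetric.infEdist z₀ Dᶜ ∧ 2 * (‖t₀‖ + ε) < r := by
    rcases eq_or_ne (EMetric.infEdist z₀ Dᶜ) ⊤ with he | he
    · exact ⟨(r - 2*‖t₀‖)/4, by linarith,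
        by rw [he]; exact ENNReal.ofReal_lt_top, by linarith⟩
    · have hre : r < (EMetric.infEdist z₀ Dᶜ).toReal :=
        (ENNReal.ofReal_lt_iff_lt_toReal (by linarith) he).mp hr2
      refine ⟨min (((EMetric.infEdist z₀ Dᶜ).toReal - r)/2) ((r - 2*‖t₀‖)/4),
        lt_min (by linarith) (by linarith), ?_, ?_⟩
      · have h1 := min_le_left (((EMetric.infEdist z₀ Dᶜ).toReal - r)/2) ((r - 2*‖t₀‖)/4)
        have h1b : 0 ≤ r + min (((EMetric.infEdist z₀ Dᶜ).toReal - r)/2) ((r - 2*‖t₀‖)/4) := by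
          have := lt_min (show (0:ℝ) < ((EMetric.infEdist z₀ Dᶜ).toReal - r)/2 by linarith)
            (show (0:ℝ) < (r - 2*‖t₀‖)/4 by linarith)
          linarith
        exact (ENNReal.ofReal_lt_iff_lt_toReal h1b he).mpr (by linarith)
      · have h2 := min_le_right (((EMetric.infEdist z₀ Dᶜ).toReal - r)/2) ((r - 2*‖t₀‖)/4)
        linarith
  have hK1D : closedBall z₀ (r+ε) ⊆ D := subset_of_lt_infEdist hεr
  have hK2c : IsCompact ((closedBall z₀ (r+ε)) ×ˢ (closedBall z₀ (r+ε))) :=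
    (isCompact_closedBall _ _).prod (isCompact_closedBall _ _)
  have hK2S : (closedBall z₀ (r+ε)) ×ˢ (closedBall z₀ (r+ε)) ⊆ D ×ˢ D :=
    Set.prod_mono hK1D hK1D
  obtain ⟨M₁, hM₁0, hM₁⟩ := fderiv_bound_on_compact (hD.prod hD) hf hK2c hK2S
  obtain ⟨M₀', hM₀'⟩ := hK2c.exists_bound_of_continuousOn (hf.continuousOn.mono hK2S)
  set M₀ : ℝ := max M₀' 0 with hM₀d
  have hM₀ : ∀ p ∈ (closedBall z₀ (r+ε)) ×ˢ (closedBall z₀ (r+ε)), ‖f p‖ ≤ M₀ :=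
    fun p hp => (hM₀' p hp).trans (le_max_left _ _)
  have hM₀0 : (0:ℝ) ≤ M₀ := le_max_right _ _
  set δ : ℝ := r*r - (‖t₀‖+ε) * (2*r) with hδd
  have hδ : 0 < δ := by nlinarith
  have hball : ∀ x : ℂ × ℂ, x ∈ ball ((z₀, t₀) : ℂ × ℂ) ε →
      (closedBall x.1 r ⊆ closedBall z₀ (r+ε)) ∧ ‖x.2‖ ≤ ‖t₀‖ + ε := by
    intro x hx
    rw [mem_ball, Prod.dist_eq, max_lt_iff] at hx
    constructor
    · exact closedBall_subset_closedBall' (by linarith [hx.1.le])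
    · calc ‖x.2‖ = ‖t₀ + (x.2 - t₀)‖ := by ring_nf
        _ ≤ ‖t₀‖ + ‖x.2 - t₀‖ := norm_add_le _ _
        _ ≤ ‖t₀‖ + ε := by
            have h3 := hx.2.le
            rw [dist_eq_norm] at h3
            linarith
  have hmemK2 : ∀ x : ℂ × ℂ, closedBall x.1 r ⊆ closedBall z₀ (r+ε) → ∀ a : ℝ × ℝ,
      (x.1 + circleMap 0 r a.1, x.1 + circleMap 0 r a.2) ∈
        (closedBall z₀ (r+ε)) ×ˢ (closedBall z₀ (r+ε)) := by
    intro x hs a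
    have hm : ∀ θ : ℝ, x.1 + circleMap 0 r θ ∈ closedBall z₀ (r+ε) := by
      intro θ
      apply hs
      rw [mem_closedBall, dist_eq_norm]
      have h4 : x.1 + circleMap 0 r θ - x.1 = circleMap 0 r θ := by ring
      rw [h4, norm_circleMap r hr0.le]
    exact ⟨hm a.1, hm a.2⟩
  have key := hasFDerivAt_integral_of_dominated_of_fderiv_le (𝕜 := ℂ) (μ := μθ.prod μθ)
    (F := fun x a => Fint f r x a) (F' := fun x a => Fder f r x a)
    (x₀ := ((z₀, t₀) : ℂ × ℂ))
    (bound := fun _ => r^2 * δ⁻¹ * M₁ + r^2 * M₀ * (2*r) * (δ^2)⁻¹) (ball_mem_nhds _ hε)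
    ?_ ?_ ?_ ?_ ?_ ?_
  · have hdiff : DifferentiableAt ℂ
        (fun x : ℂ × ℂ => (1 / (2 * π * I)) ^ 2 * ∫ a, Fint f r x a ∂(μθ.prod μθ))
        (z₀, t₀) := (key.differentiableAt).const_mul _
    refine hdiff.congr_of_eventuallyEq ?_
    filter_upwards [ball_mem_nhds ((z₀, t₀) : ℂ × ℂ) hε] with x hx
    obtain ⟨hs, ht'⟩ := hball x hx
    exact Tgen_eq_int hD hf hr0 (hs.trans hK1D) (by linarith)
  · filter_upwards [ball_mem_nhds ((z₀, t₀) : ℂ × ℂ) hε] with x hx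
    obtain ⟨hs, ht'⟩ := hball x hx
    exact (continuous_Fint hD hf hr0 (hs.trans hK1D) (by linarith)).aestronglyMeasurable
  · exact integrable_cont (continuous_Fint hD hf hr0
      ((closedBall_subset_closedBall (by linarith)).trans hK1D) (by show 2*‖t₀‖ < r; linarith))
  · exact aesm_Fder hD hf hr0
      ((closedBall_subset_closedBall (by linarith : r ≤ r + ε)).trans hK1D) hr1
  · refine Filter.Eventually.of_forall fun a => fun x hx => ?_
    obtain ⟨hs, ht'⟩ := hball x hx
    have hpK2 := hmemK2 x hs a
    refine norm_Fder_le hr0 hδ ?_ (hM₀ _ hpK2) (hM₁ _ hpK2)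
    have h5 := norm_Qpoly_circle_ge (t := x.2) (r := r) hr0.le a.1 a.2
    have h6 : ‖x.2‖ * (2*r) ≤ (‖t₀‖+ε) * (2*r) := by nlinarith
    linarith
  · exact integrable_const _
  · refine Filter.Eventually.of_forall fun a => fun x hx => ?_
    obtain ⟨hs, ht'⟩ := hball x hx
    refine hasFDerivAt_Fint ?_ (Qpoly_circle_ne (by linarith) a.1 a.2)
    exact hf.differentiableAt ((hD.prod hD).mem_nhds (hK2S (hmemK2 x hs a)))

/-! ### Independence of the radius -/

lemma double_swap (G : ℂ → ℂ → ℂ) (z : ℂ) (ra rb : ℝ)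
    (hk : Continuous fun a : ℝ × ℝ => G (circleMap z ra a.1) (circleMap z rb a.2)) :
    (∮ ζ₁ in C(z,ra), ∮ ζ₂ in C(z,rb), G ζ₁ ζ₂) =
      ∮ ζ₂ in C(z,rb), ∮ ζ₁ in C(z,ra), G ζ₁ ζ₂ := by
  have hc : Continuous fun a : ℝ × ℝ => (circleMap 0 ra a.1 * I) *
      ((circleMap 0 rb a.2 * I) * G (circleMap z ra a.1) (circleMap z rb a.2)) :=
    (((continuous_circleMap 0 ra).comp continuous_fst).mul continuous_const).mul
      (((((continuous_circleMap 0 rb).comp continuous_snd).mul continuous_const)).mul hk)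
  have hk' : Continuous fun b : ℝ × ℝ => G (circleMap z ra b.2) (circleMap z rb b.1) := by
    have h := hk.comp (continuous_snd.prodMk continuous_fst :
      Continuous fun b : ℝ × ℝ => ((b.2 : ℝ), (b.1 : ℝ)))
    exact h
  have hc' : Continuous fun b : ℝ × ℝ => (circleMap 0 ra b.2 * I) *
      ((circleMap 0 rb b.1 * I) * G (circleMap z ra b.2) (circleMap z rb b.1)) :=
    (((continuous_circleMap 0 ra).comp continuous_snd).mul continuous_const).mul
      (((((continuous_circleMap 0 rb).comp continuous_fst).mul continuous_const)).mul hk')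
  calc (∮ ζ₁ in C(z,ra), ∮ ζ₂ in C(z,rb), G ζ₁ ζ₂)
      = ∫ θ₁ in (0:ℝ)..(2*π), ∫ θ₂ in (0:ℝ)..(2*π),
          (circleMap 0 ra θ₁ * I) * ((circleMap 0 rb θ₂ * I) *
            G (circleMap z ra θ₁) (circleMap z rb θ₂)) := double_circleIntegral_eq G z ra rb
    _ = ∫ a, (circleMap 0 ra a.1 * I) * ((circleMap 0 rb a.2 * I) *
          G (circleMap z ra a.1) (circleMap z rb a.2)) ∂(μθ.prod μθ) := iterated_eq_prod hc
    _ = ∫ b, (circleMap 0 ra b.2 * I) * ((circleMap 0 rb b.1 * I) *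
          G (circleMap z ra b.2) (circleMap z rb b.1)) ∂(μθ.prod μθ) :=
        (MeasureTheory.integral_prod_swap fun a : ℝ × ℝ => (circleMap 0 ra a.1 * I) *
          ((circleMap 0 rb a.2 * I) * G (circleMap z ra a.1) (circleMap z rb a.2))).symm
    _ = ∫ θ₂ in (0:ℝ)..(2*π), ∫ θ₁ in (0:ℝ)..(2*π),
          (circleMap 0 ra θ₁ * I) * ((circleMap 0 rb θ₂ * I) *
            G (circleMap z ra θ₁) (circleMap z rb θ₂)) := (iterated_eq_prod hc').symm
    _ = ∫ θ₂ in (0:ℝ)..(2*π), ∫ θ₁ in (0:ℝ)..(2*π),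
          (circleMap 0 rb θ₂ * I) * ((circleMap 0 ra θ₁ * I) *
            G (circleMap z ra θ₁) (circleMap z rb θ₂)) := by
        refine intervalIntegral.integral_congr fun θ₂ _ => ?_
        refine intervalIntegral.integral_congr fun θ₁ _ => ?_
        ring
    _ = ∮ ζ₂ in C(z,rb), ∮ ζ₁ in C(z,ra), G ζ₁ ζ₂ :=
        (double_circleIntegral_eq (fun ζ₂ ζ₁ => G ζ₁ ζ₂) z rb ra).symm

lemma diffAt_snd (hD : IsOpen D) (hf : DifferentiableOn ℂ f (D ×ˢ D)) {z t ζ₁ ζ₂ : ℂ}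
    (h₁D : ζ₁ ∈ D) (h₂D : ζ₂ ∈ D) (hQ : Qpoly z t ζ₁ ζ₂ ≠ 0) :
    DifferentiableAt ℂ (fun w => f (ζ₁, w) / Qpoly z t ζ₁ w) ζ₂ := by
  have h1 : DifferentiableAt ℂ (fun w : ℂ => f (ζ₁, w)) ζ₂ := by
    have hfd : DifferentiableAt ℂ f (ζ₁, ζ₂) :=
      hf.differentiableAt ((hD.prod hD).mem_nhds ⟨h₁D, h₂D⟩)
    exact hfd.comp ζ₂ ((differentiableAt_const ζ₁).prodMk differentiableAt_id)
  have h2 : DifferentiableAt ℂ (fun w : ℂ => Qpoly z t ζ₁ w) ζ₂ := by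
    unfold Qpoly; fun_prop
  exact h1.div h2 hQ

lemma diffAt_fst (hD : IsOpen D) (hf : DifferentiableOn ℂ f (D ×ˢ D)) {z t ζ₁ ζ₂ : ℂ}
    (h₁D : ζ₁ ∈ D) (h₂D : ζ₂ ∈ D) (hQ : Qpoly z t ζ₁ ζ₂ ≠ 0) :
    DifferentiableAt ℂ (fun w => f (w, ζ₂) / Qpoly z t w ζ₂) ζ₁ := by
  have h1 : DifferentiableAt ℂ (fun w : ℂ => f (w, ζ₂)) ζ₁ := by
    have hfd : DifferentiableAt ℂ f (ζ₁, ζ₂) :=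
      hf.differentiableAt ((hD.prod hD).mem_nhds ⟨h₁D, h₂D⟩)
    exact hfd.comp ζ₁ (differentiableAt_id.prodMk (differentiableAt_const ζ₂))
  have h2 : DifferentiableAt ℂ (fun w : ℂ => Qpoly z t w ζ₂) ζ₁ := by
    unfold Qpoly; fun_prop
  exact h1.div h2 hQ

lemma norm_sub_of_mem_annulus {z w : ℂ} {r₁ r₂ : ℝ}
    (hw : w ∈ closedBall z r₂ \ ball z r₁) : r₁ ≤ ‖w - z‖ := by
  have := hw.2
  rw [mem_ball, not_lt, dist_eq_norm] at this
  linarith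

lemma Tgen_mono (hD : IsOpen D) (hf : DifferentiableOn ℂ f (D ×ˢ D)) {z t : ℂ} {r₁ r₂ : ℝ}
    (ht1 : 2 * ‖t‖ < r₁) (h12 : r₁ ≤ r₂)
    (hr2 : ENNReal.ofReal r₂ < EMetric.infEdist z Dᶜ) :
    Tgen f z t r₁ = Tgen f z t r₂ := by
  have ht0 : (0:ℝ) ≤ ‖t‖ := norm_nonneg _
  have hr₁0 : 0 < r₁ := by linarith
  have ht2 : 2 * ‖t‖ < r₂ := lt_of_lt_of_le ht1 h12
  have hsub : closedBall z r₂ ⊆ D := subset_of_lt_infEdist hr2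
  set G : ℂ → ℂ → ℂ := fun ζ₁ ζ₂ => f (ζ₁, ζ₂) / Qpoly z t ζ₁ ζ₂ with hG
  -- radius change in the second variable
  have inner : ∀ ζ₁, ζ₁ ∈ D → 2 * ‖t‖ < ‖ζ₁ - z‖ →
      (∮ ζ₂ in C(z, r₂), G ζ₁ ζ₂) = ∮ ζ₂ in C(z, r₁), G ζ₁ ζ₂ := by
    intro ζ₁ h₁D h₁t
    refine circleIntegral_eq_of_differentiable_on_annulus_off_countable hr₁0 h12
      Set.countable_empty ?_ ?_
    · intro ζ₂ hζ₂
      have h₂D : ζ₂ ∈ D := hsub hζ₂.1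
      have h₂t : 2 * ‖t‖ < ‖ζ₂ - z‖ := lt_of_lt_of_le ht1 (norm_sub_of_mem_annulus hζ₂)
      exact (diffAt_snd hD hf h₁D h₂D (Qpoly_ne z t ζ₁ ζ₂ h₁t h₂t)).continuousAt.continuousWithinAt
    · intro ζ₂ hζ₂
      have h₂D : ζ₂ ∈ D := hsub (ball_subset_closedBall hζ₂.1.1)
      have h₂t : 2 * ‖t‖ < ‖ζ₂ - z‖ := by
        have h5 := hζ₂.1.2
        rw [mem_closedBall, not_le, dist_eq_norm] at h5
        linarith
      exact diffAt_snd hD hf h₁D h₂D (Qpoly_ne z t ζ₁ ζ₂ h₁t h₂t)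
  -- radius change in the first variable
  have outer : ∀ ζ₂, ζ₂ ∈ D → 2 * ‖t‖ < ‖ζ₂ - z‖ →
      (∮ ζ₁ in C(z, r₂), G ζ₁ ζ₂) = ∮ ζ₁ in C(z, r₁), G ζ₁ ζ₂ := by
    intro ζ₂ h₂D h₂t
    refine circleIntegral_eq_of_differentiable_on_annulus_off_countable hr₁0 h12
      Set.countable_empty ?_ ?_
    · intro ζ₁ hζ₁
      have h₁D : ζ₁ ∈ D := hsub hζ₁.1
      have h₁t : 2 * ‖t‖ < ‖ζ₁ - z‖ := lt_of_lt_of_le ht1 (norm_sub_of_mem_annulus hζ₁)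
      exact (diffAt_fst hD hf h₁D h₂D (Qpoly_ne z t ζ₁ ζ₂ h₁t h₂t)).continuousAt.continuousWithinAt
    · intro ζ₁ hζ₁
      have h₁D : ζ₁ ∈ D := hsub (ball_subset_closedBall hζ₁.1.1)
      have h₁t : 2 * ‖t‖ < ‖ζ₁ - z‖ := by
        have h5 := hζ₁.1.2
        rw [mem_closedBall, not_le, dist_eq_norm] at h5
        linarith
      exact diffAt_fst hD hf h₁D h₂D (Qpoly_ne z t ζ₁ ζ₂ h₁t h₂t)
  -- continuity of the curve integrand for the swaps
  have hnormcm : ∀ (rr : ℝ), 0 ≤ rr → ∀ θ : ℝ, ‖circleMap z rr θ - z‖ = rr := by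
    intro rr h0 θ
    rw [circleMap_eq_add z rr θ]
    have h4 : z + circleMap 0 rr θ - z = circleMap 0 rr θ := by ring
    rw [h4, norm_circleMap rr h0]
  have hmemcm : ∀ (rr : ℝ), 0 ≤ rr → rr ≤ r₂ → ∀ θ : ℝ, circleMap z rr θ ∈ D := by
    intro rr h0 hle θ
    apply hsub
    rw [mem_closedBall, dist_eq_norm, hnormcm rr h0 θ]
    exact hle
  have hcont : ∀ ra rb : ℝ, 2 * ‖t‖ < ra → ra ≤ r₂ → 2 * ‖t‖ < rb → rb ≤ r₂ →
      Continuous fun a : ℝ × ℝ => G (circleMap z ra a.1) (circleMap z rb a.2) := by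
    intro ra rb hta hra htb hrb
    have hra0 : 0 < ra := by linarith
    have hrb0 : 0 < rb := by linarith
    have hc1 : Continuous fun a : ℝ × ℝ => circleMap z ra a.1 :=
      (continuous_circleMap z ra).comp continuous_fst
    have hc2 : Continuous fun a : ℝ × ℝ => circleMap z rb a.2 :=
      (continuous_circleMap z rb).comp continuous_snd
    have hqc : Continuous fun a : ℝ × ℝ => (circleMap z ra a.1, circleMap z rb a.2) :=
      hc1.prodMk hc2
    have hQc : Continuous fun a : ℝ × ℝ =>
        Qpoly z t (circleMap z ra a.1) (circleMap z rb a.2) := by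
      unfold Qpoly
      exact ((hc1.sub continuous_const).mul (hc2.sub continuous_const)).add
        (continuous_const.mul (hc1.sub hc2))
    rw [continuous_iff_continuousAt]
    intro a
    have hfa : ContinuousAt (fun a : ℝ × ℝ =>
        f (circleMap z ra a.1, circleMap z rb a.2)) a := by
      have hmem : (circleMap z ra a.1, circleMap z rb a.2) ∈ D ×ˢ D :=
        ⟨hmemcm ra hra0.le hra a.1, hmemcm rb hrb0.le hrb a.2⟩
      exact ContinuousAt.comp (x := a)
        (f := fun a : ℝ × ℝ => (circleMap z ra a.1, circleMap z rb a.2)) (g := f)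
        ((hf.differentiableAt ((hD.prod hD).mem_nhds hmem)).continuousAt) hqc.continuousAt
    refine ContinuousAt.div hfa hQc.continuousAt ?_
    exact Qpoly_ne z t _ _ (by rw [hnormcm ra hra0.le]; exact hta)
      (by rw [hnormcm rb hrb0.le]; exact htb)
  -- the chain of equalities
  unfold Tgen
  congr 1
  show (∮ ζ₁ in C(z,r₁), ∮ ζ₂ in C(z,r₁), G ζ₁ ζ₂) =
    ∮ ζ₁ in C(z,r₂), ∮ ζ₂ in C(z,r₂), G ζ₁ ζ₂
  have hsphmem : ∀ (rr : ℝ), 0 < rr → rr ≤ r₂ → ∀ ζ ∈ sphere z rr,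
      ζ ∈ D ∧ 2 * ‖t‖ < ‖ζ - z‖ ∧ rr = ‖ζ - z‖ → True := fun _ _ _ _ _ _ => trivial
  calc (∮ ζ₁ in C(z,r₁), ∮ ζ₂ in C(z,r₁), G ζ₁ ζ₂)
      = ∮ ζ₁ in C(z,r₁), ∮ ζ₂ in C(z,r₂), G ζ₁ ζ₂ := by
        refine circleIntegral.integral_congr hr₁0.le fun ζ₁ hζ₁ => ?_
        have hn : ‖ζ₁ - z‖ = r₁ := mem_sphere_iff_norm.mp hζ₁
        have h₁D : ζ₁ ∈ D := hsub (closedBall_subset_closedBall h12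
          (sphere_subset_closedBall hζ₁))
        exact (inner ζ₁ h₁D (by rw [hn]; exact ht1)).symm
    _ = ∮ ζ₂ in C(z,r₂), ∮ ζ₁ in C(z,r₁), G ζ₁ ζ₂ :=
        double_swap G z r₁ r₂ (hcont r₁ r₂ ht1 h12 ht2 le_rfl)
    _ = ∮ ζ₂ in C(z,r₂), ∮ ζ₁ in C(z,r₂), G ζ₁ ζ₂ := by
        refine circleIntegral.integral_congr (by linarith : (0:ℝ) ≤ r₂) fun ζ₂ hζ₂ => ?_
        have hn : ‖ζ₂ - z‖ = r₂ := mem_sphere_iff_norm.mp hζ₂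
        have h₂D : ζ₂ ∈ D := hsub (sphere_subset_closedBall hζ₂)
        exact (outer ζ₂ h₂D (by rw [hn]; exact ht2)).symm
    _ = ∮ ζ₁ in C(z,r₂), ∮ ζ₂ in C(z,r₂), G ζ₁ ζ₂ :=
        (double_swap G z r₂ r₂ (hcont r₂ r₂ ht2 le_rfl ht2 le_rfl)).symm

lemma Tgen_indep (hD : IsOpen D) (hf : DifferentiableOn ℂ f (D ×ˢ D)) {z t : ℂ} {r r' : ℝ}
    (h1 : 2 * ‖t‖ < r) (h1' : ENNReal.ofReal r < EMetric.infEdist z Dᶜ)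
    (h2 : 2 * ‖t‖ < r') (h2' : ENNReal.ofReal r' < EMetric.infEdist z Dᶜ) :
    Tgen f z t r = Tgen f z t r' := by
  rcases le_total r r' with h | h
  · exact Tgen_mono hD hf h1 h h2'
  · exact (Tgen_mono hD hf h2 h h1').symm

/-! ### The canonical radius and the glued function -/

def radA (D : Set ℂ) (p : ℂ × ℂ) : ℝ :=
  if EMetric.infEdist p.1 Dᶜ = ⊤ then 2*‖p.2‖+1
  else (2*‖p.2‖ + (EMetric.infEdist p.1 Dᶜ).toReal)/2

lemma radA_adm {p : ℂ × ℂ} (hp : ENNReal.ofReal (2*‖p.2‖) < EMetric.infEdist p.1 Dᶜ) :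
    2*‖p.2‖ < radA D p ∧ ENNReal.ofReal (radA D p) < EMetric.infEdist p.1 Dᶜ := by
  unfold radA
  rcases eq_or_ne (EMetric.infEdist p.1 Dᶜ) ⊤ with he | he
  · rw [if_pos he]
    exact ⟨by linarith, by rw [he]; exact ENNReal.ofReal_lt_top⟩
  · rw [if_neg he]
    have h2 : 2*‖p.2‖ < (EMetric.infEdist p.1 Dᶜ).toReal :=
      (ENNReal.ofReal_lt_iff_lt_toReal (by positivity) he).mp hp
    refine ⟨by linarith, ?_⟩
    refine (ENNReal.ofReal_lt_iff_lt_toReal ?_ he).mpr (by linarith)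
    positivity

end

end Stmt0


open Stmt0 in
/-- for `f` holomorphic on `D × D`, the denominator `Q` has no zeros on the
product of the circles of radius `r` (whenever `2|t| < r < d(z,∂D)`), and there is a
holomorphic function on `U_D = {(z,t) : z ∈ D, 2|t| < d(z,∂D)}` which is given by the
double contour integral, independently of the choice of admissible radius `r`. -/
theorem statement0 (D : Set ℂ) (hD : IsOpen D) (f : ℂ × ℂ → ℂ)
    (hf : DifferentiableOn ℂ f (D ×ˢ D)) :
    (∀ z ∈ D, ∀ t : ℂ, ENNReal.ofReal (2 * ‖t‖) < distB D z →
      ∀ r : ℝ, 2 * ‖t‖ < r → ENNReal.ofReal r < distB D z →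
        ∀ ζ₁ ∈ sphere z r, ∀ ζ₂ ∈ sphere z r, Qpoly z t ζ₁ ζ₂ ≠ 0) ∧
    ∃ g : ℂ × ℂ → ℂ,
      DifferentiableOn ℂ g
        {p : ℂ × ℂ | p.1 ∈ D ∧ ENNReal.ofReal (2 * ‖p.2‖) < distB D p.1} ∧
      ∀ z ∈ D, ∀ t : ℂ, ENNReal.ofReal (2 * ‖t‖) < distB D z →
        ∀ r : ℝ, 2 * ‖t‖ < r → ENNReal.ofReal r < distB D z →
          g (z, t) = Tgen f z t r := by
  constructor
  · intro z hz t ht r hr1 hr2 ζ₁ hζ₁ ζ₂ hζ₂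
    exact Qpoly_ne z t ζ₁ ζ₂
      (by rw [mem_sphere_iff_norm.mp hζ₁]; exact hr1)
      (by rw [mem_sphere_iff_norm.mp hζ₂]; exact hr1)
  · refine ⟨fun p => Tgen f p.1 p.2 (radA D p), ?_, ?_⟩
    · intro p₀ hp₀
      obtain ⟨hp₀D, hp₀lt⟩ := hp₀
      have hp₀lt' : ENNReal.ofReal (2 * ‖p₀.2‖) < EMetric.infEdist p₀.1 Dᶜ := hp₀lt
      have hadm := radA_adm (D := D) (p := p₀) hp₀lt'
      have hdiffAt : DifferentiableAt ℂ (fun x : ℂ × ℂ => Tgen f x.1 x.2 (radA D p₀)) p₀ := by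
        have h := differentiableAt_Tgen hD hf (z₀ := p₀.1) (t₀ := p₀.2) hadm.1 hadm.2
        simpa using h
      have c2 : Continuous fun p : ℂ × ℂ => EMetric.infEdist p.1 Dᶜ :=
        EMetric.continuous_infEdist.comp continuous_fst
      have c1 : Continuous fun p : ℂ × ℂ => ENNReal.ofReal (2 * ‖p.2‖) :=
        ENNReal.continuous_ofReal.comp (continuous_const.mul (continuous_norm.comp continuous_snd))
      have c3 : Continuous fun p : ℂ × ℂ => 2 * ‖p.2‖ :=
        continuous_const.mul (continuous_norm.comp continuous_snd)
      have hWopen : IsOpen {p : ℂ × ℂ |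
          ENNReal.ofReal (2 * ‖p.2‖) < EMetric.infEdist p.1 Dᶜ ∧
          2 * ‖p.2‖ < radA D p₀ ∧
          ENNReal.ofReal (radA D p₀) < EMetric.infEdist p.1 Dᶜ} := by
        rw [Set.setOf_and, Set.setOf_and]
        exact (isOpen_lt c1 c2).inter
          ((isOpen_lt c3 continuous_const).inter (isOpen_lt continuous_const c2))
      have hmem : p₀ ∈ {p : ℂ × ℂ |
          ENNReal.ofReal (2 * ‖p.2‖) < EMetric.infEdist p.1 Dᶜ ∧
          2 * ‖p.2‖ < radA D p₀ ∧
          ENNReal.ofReal (radA D p₀) < EMetric.infEdist p.1 Dᶜ} :=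
        ⟨hp₀lt', hadm.1, hadm.2⟩
      have hev : (fun p : ℂ × ℂ => Tgen f p.1 p.2 (radA D p)) =ᶠ[nhds p₀]
          fun x : ℂ × ℂ => Tgen f x.1 x.2 (radA D p₀) := by
        refine Filter.eventually_of_mem (hWopen.mem_nhds hmem) fun p hp => ?_
        obtain ⟨hA, hB, hC⟩ := hp
        have hadm' := radA_adm (D := D) (p := p) hA
        exact Tgen_indep hD hf hadm'.1 hadm'.2 hB hC
      exact (hdiffAt.congr_of_eventuallyEq hev).differentiableWithinAt
    · intro z hz t ht r hr1 hr2
      have ht' : ENNReal.ofReal (2 * ‖t‖) < EMetric.infEdist z Dᶜ := ht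
      have hadm := radA_adm (D := D) (p := ((z, t) : ℂ × ℂ)) ht'
      exact Tgen_indep hD hf hadm.1 hadm.2 hr1 hr2
end
end

section
/- Let D ⊆ ℂ be an open set and f holomorphic on D×D. For every z ∈ D, the power series Σ_{ℓ=0}^{∞} (t^ℓ/ℓ!) (R_ℓ f)(z) converges for all t ∈ ℂ with 2|t| < d(z,∂D), and its sum equals (Tf)(z,t); equivalently, the ℓ-th Taylor coefficient in t at t = 0 of t ↦ (Tf)(z,t) is (1/ℓ!)(R_ℓ f)(z) for every ℓ ∈ ℕ. -/
open Complex Metric MeasureTheory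

noncomputable section

/-- Partial derivative in the first variable. -/
def pd1 (f : ℂ × ℂ → ℂ) (p : ℂ × ℂ) : ℂ := deriv (fun w => f (w, p.2)) p.1

/-- Partial derivative in the second variable. -/
def pd2 (f : ℂ × ℂ → ℂ) (p : ℂ × ℂ) : ℂ := deriv (fun w => f (p.1, w)) p.2

/-- The `ℓ`-th Rankin–Cohen bracket
`(R_ℓ f)(z) = Σ_{j=0}^{ℓ} (−1)^j (ℓ choose j)² ∂^ℓ f/∂ζ₁^{ℓ−j}∂ζ₂^{j} (z,z)`. -/
def RCb (ℓ : ℕ) (f : ℂ × ℂ → ℂ) (z : ℂ) : ℂ :=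
  ∑ j ∈ Finset.range (ℓ + 1),
    (-1 : ℂ) ^ j * (ℓ.choose j : ℂ) ^ 2 * (pd1^[ℓ - j] (pd2^[j] f)) (z, z)

lemma cauchyDeriv {g : ℂ → ℂ} {z : ℂ} {r : ℝ} (hr : 0 < r)
    (hg : DifferentiableOn ℂ g (closedBall z r)) (n : ℕ) :
    (∮ ζ in C(z, r), g ζ / (ζ - z) ^ (n + 1)) =
      (2 * Real.pi * I) / (n.factorial : ℂ) * iteratedDeriv n g z := by
  lift r to NNReal using hr.le
  have hr' : 0 < r := by exact_mod_cast hr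
  have h := hg.hasFPowerSeriesOnBall hr'
  have h2 := h.factorial_smul (y := (1 : ℂ)) n
  rw [cauchyPowerSeries_apply] at h2
  have h3 : iteratedDeriv n g z = iteratedFDeriv ℂ n g z fun _ => 1 :=
    iteratedDeriv_eq_iteratedFDeriv
  rw [← h3] at h2
  have h4 : (∮ ζ in C(z, (r:ℝ)), ((1:ℂ) / (ζ - z)) ^ n • (ζ - z)⁻¹ • g ζ)
      = ∮ ζ in C(z, (r:ℝ)), g ζ / (ζ - z) ^ (n + 1) := by
    refine circleIntegral.integral_congr hr.le fun ζ hζ => ?_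
    have hne : ζ - z ≠ 0 := sub_ne_zero.2 (ne_of_mem_sphere hζ hr.ne')
    simp only [smul_eq_mul, one_div, inv_pow, pow_succ, mul_inv, div_eq_mul_inv]
    ring
  rw [h4] at h2
  have h2πI : (2 * Real.pi * I : ℂ) ≠ 0 := by
    simp [Real.pi_ne_zero, I_ne_zero]
  have hfac : ((n.factorial : ℂ)) ≠ 0 := by exact_mod_cast n.factorial_ne_zero
  rw [nsmul_eq_mul, smul_eq_mul] at h2
  field_simp at h2 ⊢
  linear_combination h2

lemma derivBound {g : ℂ → ℂ} {w : ℂ} {r M : ℝ} (hr : 0 < r)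
    (hg : DifferentiableOn ℂ g (closedBall w r))
    (hM : ∀ ζ ∈ sphere w r, ‖g ζ‖ ≤ M) : ‖deriv g w‖ ≤ M / r := by
  have h := cauchyDeriv hr hg 1
  rw [iteratedDeriv_one] at h
  have hb : ‖∮ ζ in C(w, r), g ζ / (ζ - w) ^ (1 + 1)‖ ≤ 2 * Real.pi * r * (M / r ^ 2) := by
    refine circleIntegral.norm_integral_le_of_norm_le_const hr.le fun ζ hζ => ?_
    have hζ' : ‖ζ - w‖ = r := by
      simpa [dist_eq_norm] using mem_sphere_iff_norm.mp hζ
    rw [norm_div, norm_pow, hζ']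
    gcongr
    exact hM ζ hζ
  rw [h] at hb
  have h2 : ‖(2 * (Real.pi:ℂ) * I) / (Nat.factorial 1 : ℂ) * deriv g w‖
      = 2 * Real.pi * ‖deriv g w‖ := by
    rw [norm_mul, norm_div]
    simp [Complex.norm_real, _root_.abs_of_nonneg Real.pi_pos.le]
  rw [h2] at hb
  have hπ : 0 < 2 * Real.pi := by positivity
  rw [sq] at hb
  calc ‖deriv g w‖ = (2 * Real.pi * ‖deriv g w‖) / (2 * Real.pi) := by field_simp
    _ ≤ (2 * Real.pi * r * (M / (r * r))) / (2 * Real.pi) := by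
        gcongr
    _ = M / r := by field_simp

lemma pd2_iter (f : ℂ × ℂ → ℂ) (k : ℕ) (ζ w : ℂ) :
    pd2^[k] f (ζ, w) = iteratedDeriv k (fun u => f (ζ, u)) w := by
  induction k generalizing f with
  | zero => simp
  | succ k ih =>
    rw [Function.iterate_succ_apply, ih (pd2 f), iteratedDeriv_succ']
    rfl

lemma pd1_iter (g : ℂ × ℂ → ℂ) (j : ℕ) (w ζ : ℂ) :
    pd1^[j] g (w, ζ) = iteratedDeriv j (fun u => g (u, ζ)) w := by
  induction j generalizing g with
  | zero => simp
  | succ j ih =>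
    rw [Function.iterate_succ_apply, ih (pd1 g), iteratedDeriv_succ']
    rfl

lemma slice1_differentiableAt {D : Set ℂ} (hD : IsOpen D) {f : ℂ × ℂ → ℂ}
    (hf : DifferentiableOn ℂ f (D ×ˢ D)) {w ζ : ℂ} (hw : w ∈ D) (hζ : ζ ∈ D) :
    DifferentiableAt ℂ (fun u => f (u, ζ)) w := by
  have h1 : DifferentiableAt ℂ f (w, ζ) :=
    hf.differentiableAt ((hD.prod hD).mem_nhds ⟨hw, hζ⟩)
  exact h1.comp w (differentiableAt_id.prodMk (differentiableAt_const ζ))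

lemma slice2_differentiableAt {D : Set ℂ} (hD : IsOpen D) {f : ℂ × ℂ → ℂ}
    (hf : DifferentiableOn ℂ f (D ×ˢ D)) {w ζ : ℂ} (hw : w ∈ D) (hζ : ζ ∈ D) :
    DifferentiableAt ℂ (fun u => f (w, u)) ζ := by
  have h1 : DifferentiableAt ℂ f (w, ζ) :=
    hf.differentiableAt ((hD.prod hD).mem_nhds ⟨hw, hζ⟩)
  exact h1.comp ζ ((differentiableAt_const w).prodMk differentiableAt_id)

lemma pd1_eq_fderiv {D : Set ℂ} (hD : IsOpen D) {f : ℂ × ℂ → ℂ}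
    (hf : DifferentiableOn ℂ f (D ×ˢ D)) {w ζ : ℂ} (hw : w ∈ D) (hζ : ζ ∈ D) :
    pd1 f (w, ζ) = fderiv ℂ f (w, ζ) (1, 0) := by
  have h1 : DifferentiableAt ℂ f (w, ζ) :=
    hf.differentiableAt ((hD.prod hD).mem_nhds ⟨hw, hζ⟩)
  have h2 : HasDerivAt (fun u : ℂ => (u, ζ)) ((1 : ℂ), (0 : ℂ)) w :=
    (hasDerivAt_id w).prodMk (hasDerivAt_const w ζ)
  exact (h1.hasFDerivAt.comp_hasDerivAt w h2).deriv

lemma psi_differentiableOn {D : Set ℂ} (hD : IsOpen D) {f : ℂ × ℂ → ℂ}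
    (hf : DifferentiableOn ℂ f (D ×ˢ D)) {z : ℂ} {ρ : ℝ} (hρ : 0 < ρ)
    (hball : closedBall z ρ ⊆ D) (k : ℕ) :
    DifferentiableOn ℂ (fun w => pd2^[k] f (w, z)) (ball z ρ) := by
  have hzD : z ∈ D := hball (mem_closedBall_self hρ.le)
  have hsphD : ∀ θ : ℝ, circleMap z ρ θ ∈ D := fun θ =>
    hball (sphere_subset_closedBall (circleMap_mem_sphere z hρ.le θ))
  have hdne : ∀ θ : ℝ, (circleMap z ρ θ - z) ^ (k + 1) ≠ 0 := fun θ =>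
    pow_ne_zero _ (sub_ne_zero.2 (circleMap_ne_center hρ.ne'))
  have hc2 : ∀ w ∈ D, Continuous fun θ => f (w, circleMap z ρ θ) := by
    intro w hw
    exact hf.continuousOn.comp_continuous
      (continuous_const.prodMk (continuous_circleMap z ρ))
      (fun θ => ⟨hw, hsphD θ⟩)
  have hdc : Continuous fun θ : ℝ => (circleMap z ρ θ - z) ^ (k + 1) :=
    ((continuous_circleMap z ρ).sub continuous_const).pow _
  have hcc : Continuous fun θ : ℝ => circleMap 0 ρ θ * I :=
    (continuous_circleMap 0 ρ).mul continuous_const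
  -- representation
  have hrep : ∀ w ∈ D, pd2^[k] f (w, z) =
      (k.factorial : ℂ) / (2 * Real.pi * I) *
        ∮ ζ in C(z, ρ), f (w, ζ) / (ζ - z) ^ (k + 1) := by
    intro w hw
    have hg : DifferentiableOn ℂ (fun u => f (w, u)) (closedBall z ρ) := fun u hu =>
      (slice2_differentiableAt hD hf hw (hball hu)).differentiableWithinAt
    rw [pd2_iter, cauchyDeriv hρ hg k]
    have h2πI : (2 * Real.pi * I : ℂ) ≠ 0 := by
      simp [Real.pi_ne_zero, I_ne_zero]
    have hfac : ((k.factorial : ℂ)) ≠ 0 := by exact_mod_cast k.factorial_ne_zero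
    field_simp
  -- differentiability of the integral
  have hint : ∀ w₀ ∈ D, DifferentiableAt ℂ
      (fun w => ∮ ζ in C(z, ρ), f (w, ζ) / (ζ - z) ^ (k + 1)) w₀ := by
    intro w₀ hw₀
    obtain ⟨δ, hδ, hδD⟩ := Metric.isOpen_iff.mp hD w₀ hw₀
    set ε := δ / 3 with hε
    have hε0 : 0 < ε := by positivity
    have hcbD : closedBall w₀ (2 * ε) ⊆ D := fun u hu => hδD (by
      have := mem_closedBall.mp hu
      exact mem_ball.mpr (lt_of_le_of_lt this (by rw [hε]; linarith)))
    -- compact bound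
    obtain ⟨M, hM⟩ : ∃ M, ∀ p ∈ (closedBall w₀ (2 * ε)) ×ˢ (sphere z ρ), ‖f p‖ ≤ M := by
      have hK : IsCompact ((closedBall w₀ (2 * ε)) ×ˢ (sphere z ρ)) :=
        (isCompact_closedBall _ _).prod (isCompact_sphere _ _)
      have hKD : ((closedBall w₀ (2 * ε)) ×ˢ (sphere z ρ)) ⊆ D ×ˢ D := fun p hp =>
        ⟨hcbD hp.1, hball (sphere_subset_closedBall hp.2)⟩
      exact hK.exists_bound_of_continuousOn (hf.continuousOn.mono hKD)
    set F : ℂ → ℝ → ℂ := fun w θ => deriv (circleMap z ρ) θ •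
      (f (w, circleMap z ρ θ) / (circleMap z ρ θ - z) ^ (k + 1)) with hF
    set F' : ℂ → ℝ → ℂ := fun w θ => deriv (circleMap z ρ) θ •
      (pd1 f (w, circleMap z ρ θ) / (circleMap z ρ θ - z) ^ (k + 1)) with hF'
    have hFcont : ∀ w ∈ D, Continuous (F w) := by
      intro w hw
      simp only [hF, deriv_circleMap]
      exact hcc.smul ((hc2 w hw).div hdc (fun θ => hdne θ))
    have key := intervalIntegral.hasDerivAt_integral_of_dominated_loc_of_deriv_le
      (F := F) (F' := F') (x₀ := w₀) (a := 0) (b := 2 * Real.pi)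
      (bound := fun _ => ρ * ((M / ε) / ρ ^ (k + 1))) (μ := volume) (ball_mem_nhds w₀ hε0)
      ?_ ?_ ?_ ?_ ?_ ?_
    · have : (fun w => ∮ ζ in C(z, ρ), f (w, ζ) / (ζ - z) ^ (k + 1)) =
          fun w => ∫ θ in (0 : ℝ)..(2 * Real.pi), F w θ := by
        funext w; rfl
      rw [this]
      exact key.2.differentiableAt
    · filter_upwards [hD.mem_nhds hw₀] with w hw
      exact (hFcont w hw).aestronglyMeasurable
    · exact (hFcont w₀ hw₀).intervalIntegrable _ _
    · -- measurability of F' w₀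
      have heq : F' w₀ = fun θ => deriv (circleMap z ρ) θ •
          ((fderiv ℂ f (w₀, circleMap z ρ θ)) (1, 0) /
            (circleMap z ρ θ - z) ^ (k + 1)) := by
        funext θ
        simp only [hF']
        rw [pd1_eq_fderiv hD hf hw₀ (hsphD θ)]
      rw [heq]
      apply Measurable.aestronglyMeasurable
      apply Measurable.fun_smul
      · exact (by simpa [deriv_circleMap] using hcc : Continuous fun θ =>
          deriv (circleMap z ρ) θ).measurable
      · apply Measurable.div
        · exact (measurable_fderiv_apply_const ℂ f (1, 0)).comp
            ((continuous_const.prodMk (continuous_circleMap z ρ)).measurable)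
        · exact hdc.measurable
    · -- bound
      refine Filter.Eventually.of_forall fun θ => fun _ w hwball => ?_
      have hwD : w ∈ D := hcbD (closedBall_subset_closedBall (by linarith) <|
        ball_subset_closedBall hwball)
      have hpd : ‖pd1 f (w, circleMap z ρ θ)‖ ≤ M / ε := by
        apply derivBound hε0 (g := fun u => f (u, circleMap z ρ θ))
        · intro u hu
          have huD : u ∈ D := hcbD (by
            rw [mem_closedBall] at hu ⊢
            have h1 : dist w w₀ < ε := mem_ball.mp hwball
            calc dist u w₀ ≤ dist u w + dist w w₀ := dist_triangle _ _ _
              _ ≤ ε + ε := by gcongr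
              _ = 2 * ε := by ring)
          exact (slice1_differentiableAt hD hf huD (hsphD θ)).differentiableWithinAt
        · intro u hu
          apply hM
          constructor
          · have h1 : dist u w = ε := mem_sphere.mp hu
            have h2 : dist w w₀ < ε := mem_ball.mp hwball
            rw [mem_closedBall]
            calc dist u w₀ ≤ dist u w + dist w w₀ := dist_triangle _ _ _
              _ ≤ ε + ε := by rw [h1]; linarith
              _ = 2 * ε := by ring
          · exact circleMap_mem_sphere z hρ.le θ
      simp only [hF', norm_smul, deriv_circleMap, norm_mul, Complex.norm_I, mul_one,
        norm_div, norm_pow]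
      have h1 : ‖circleMap 0 ρ θ‖ = ρ := by
        simp [circleMap, _root_.abs_of_nonneg hρ.le]
      have h2 : ‖circleMap z ρ θ - z‖ = ρ := by
        simp [circleMap, _root_.abs_of_nonneg hρ.le]
      rw [h1, h2]
      gcongr
    · exact intervalIntegrable_const
    · -- differentiability in w
      refine Filter.Eventually.of_forall fun θ => fun _ w hwball => ?_
      have hwD : w ∈ D := hδD (ball_subset_ball (by linarith) hwball)
      have hA : DifferentiableAt ℂ (fun u => f (u, circleMap z ρ θ)) w :=
        slice1_differentiableAt hD hf hwD (hsphD θ)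
      exact (hA.hasDerivAt.div_const ((circleMap z ρ θ - z) ^ (k + 1))).const_smul
        (deriv (circleMap z ρ) θ)
  -- assemble
  intro w₀ hw₀
  have hw₀D : w₀ ∈ D := hball (ball_subset_closedBall hw₀)
  have heq : (fun w => pd2^[k] f (w, z)) =ᶠ[nhds w₀]
      (fun w => (k.factorial : ℂ) / (2 * Real.pi * I) *
        ∮ ζ in C(z, ρ), f (w, ζ) / (ζ - z) ^ (k + 1)) := by
    filter_upwards [hD.mem_nhds hw₀D] with w hw
    exact hrep w hw
  have hda : DifferentiableAt ℂ (fun w => (k.factorial : ℂ) / (2 * Real.pi * I) *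
      ∮ ζ in C(z, ρ), f (w, ζ) / (ζ - z) ^ (k + 1)) w₀ :=
    (hint w₀ hw₀D).const_mul _
  exact (heq.differentiableAt_iff.mpr hda).differentiableWithinAt

lemma hasSum_circleIntegral {F : ℕ → ℂ → ℂ} {G : ℂ → ℂ} {z : ℂ} {r : ℝ} (hr : 0 < r)
    {a : ℕ → ℝ} (hFc : ∀ n, ContinuousOn (F n) (sphere z r))
    (hFb : ∀ n, ∀ ζ ∈ sphere z r, ‖F n ζ‖ ≤ a n) (ha : Summable a)
    (hFG : ∀ ζ ∈ sphere z r, HasSum (fun n => F n ζ) (G ζ)) :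
    HasSum (fun n => ∮ ζ in C(z, r), F n ζ) (∮ ζ in C(z, r), G ζ) := by
  set H : ℕ → ℝ → ℂ := fun n θ => deriv (circleMap z r) θ • F n (circleMap z r θ) with hH
  have hsph : ∀ θ : ℝ, circleMap z r θ ∈ sphere z r := circleMap_mem_sphere z hr.le
  have hHcont : ∀ n, Continuous (H n) := by
    intro n
    simp only [hH, deriv_circleMap]
    exact ((continuous_circleMap 0 r).mul continuous_const).smul
      ((hFc n).comp_continuous (continuous_circleMap z r) hsph)
  have hInt : ∀ n, Integrable (H n) (volume.restrict (Set.Ioc (0:ℝ) (2 * Real.pi))) :=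
    fun n => ((hHcont n).integrableOn_Ioc (a := 0) (b := 2 * Real.pi))
  have hHb : ∀ n θ, ‖H n θ‖ ≤ r * a n := by
    intro n θ
    have h1 : ‖deriv (circleMap z r) θ‖ = r := by
      simp [deriv_circleMap, circleMap, _root_.abs_of_nonneg hr.le]
    rw [hH]
    simp only [norm_smul, h1]
    exact mul_le_mul_of_nonneg_left (hFb n _ (hsph θ)) hr.le
  have hNorm : Summable fun n => ∫ θ in Set.Ioc (0:ℝ) (2 * Real.pi), ‖H n θ‖ := by
    apply Summable.of_nonneg_of_le
      (fun n => integral_nonneg (fun θ => norm_nonneg _))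
      (fun n => ?_) ((ha.mul_left r).mul_right (2 * Real.pi))
    calc ∫ θ in Set.Ioc (0:ℝ) (2 * Real.pi), ‖H n θ‖
        ≤ ∫ _ in Set.Ioc (0:ℝ) (2 * Real.pi), r * a n := by
          apply integral_mono (hInt n).norm (integrable_const _) (fun θ => hHb n θ)
      _ = r * a n * (2 * Real.pi) := by
          rw [MeasureTheory.integral_const, measureReal_restrict_apply_univ, Real.volume_real_Ioc]
          rw [smul_eq_mul, max_eq_left (by have := Real.two_pi_pos; linarith : (0:ℝ) ≤ 2 * Real.pi - 0)]
          ring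
  have main := MeasureTheory.hasSum_integral_of_summable_integral_norm hInt hNorm
  have h1 : ∀ n, (∮ ζ in C(z, r), F n ζ) =
      ∫ θ in Set.Ioc (0:ℝ) (2 * Real.pi), H n θ := by
    intro n
    rw [circleIntegral, intervalIntegral.integral_of_le Real.two_pi_pos.le]
  have h2 : (∮ ζ in C(z, r), G ζ) = ∫ θ in Set.Ioc (0:ℝ) (2 * Real.pi), ∑' n, H n θ := by
    rw [circleIntegral, intervalIntegral.integral_of_le Real.two_pi_pos.le]
    apply MeasureTheory.integral_congr_ae
    apply Filter.Eventually.of_forall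
    intro θ
    exact (((hFG _ (hsph θ)).const_smul (deriv (circleMap z r) θ)).tsum_eq).symm
  rw [h2]
  simpa only [h1] using main

lemma circleIntegral_finset_sum {ι : Type*} {s : Finset ι} {g : ι → ℂ → ℂ} {z : ℂ} {r : ℝ}
    (hr : 0 ≤ r) (hg : ∀ i ∈ s, ContinuousOn (g i) (sphere z r)) :
    (∮ ζ in C(z, r), ∑ i ∈ s, g i ζ) = ∑ i ∈ s, ∮ ζ in C(z, r), g i ζ := by
  simp only [circleIntegral, Finset.smul_sum, deriv_circleMap]
  refine intervalIntegral.integral_finset_sum fun i hi => Continuous.intervalIntegrable ?_ _ _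
  exact ((continuous_circleMap 0 r).mul continuous_const).smul
      ((hg i hi).comp_continuous (continuous_circleMap z r) (circleMap_mem_sphere z hr))

lemma closedBall_subset_of_lt_infEdist {z : ℂ} {D : Set ℂ} {r : ℝ}
    (h : ENNReal.ofReal r < EMetric.infEdist z Dᶜ) : closedBall z r ⊆ D := by
  intro w hw
  by_contra hwD
  have h1 : EMetric.infEdist z Dᶜ ≤ edist z w := EMetric.infEdist_le_edist_of_mem hwD
  have h2 : edist z w ≤ ENNReal.ofReal r := by
    rw [edist_dist]
    exact ENNReal.ofReal_le_ofReal (by rw [dist_comm]; exact mem_closedBall.mp hw)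
  exact absurd (h.trans_le (h1.trans h2)) (lt_irrefl _)

lemma coeff_identity {t P X : ℂ} {ℓ k : ℕ} (hk : k ≤ ℓ) :
    ((-t) ^ ℓ * P * ((-1 : ℂ) ^ (k + ℓ) * (ℓ.choose k : ℂ) / (k.factorial : ℂ))) *
      (P / (((ℓ - k).factorial : ℂ)) * X)
    = t ^ ℓ * P ^ 2 / (ℓ.factorial : ℂ) * ((-1 : ℂ) ^ k * (ℓ.choose k : ℂ) ^ 2 * X) := by
  have hs : (-t) ^ ℓ * ((-1 : ℂ) ^ (k + ℓ)) = t ^ ℓ * (-1 : ℂ) ^ k := by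
    rw [pow_add, neg_pow]
    have hsq : ((-1 : ℂ) ^ ℓ) * ((-1 : ℂ) ^ ℓ) = 1 := by
      rw [← pow_add, ← two_mul, pow_mul]
      norm_num
    calc (-1 : ℂ) ^ ℓ * t ^ ℓ * ((-1 : ℂ) ^ k * (-1 : ℂ) ^ ℓ)
        = t ^ ℓ * (-1 : ℂ) ^ k * ((-1 : ℂ) ^ ℓ * (-1 : ℂ) ^ ℓ) := by ring
      _ = t ^ ℓ * (-1 : ℂ) ^ k := by rw [hsq, mul_one]
  have hfk : ((k.factorial : ℂ)) ≠ 0 := Nat.cast_ne_zero.mpr k.factorial_ne_zero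
  have hflk : (((ℓ - k).factorial : ℂ)) ≠ 0 := Nat.cast_ne_zero.mpr (ℓ - k).factorial_ne_zero
  have hfl : ((ℓ.factorial : ℂ)) ≠ 0 := Nat.cast_ne_zero.mpr ℓ.factorial_ne_zero
  have hC : ((ℓ.choose k : ℂ)) = (ℓ.factorial : ℂ) / ((k.factorial : ℂ) *
      (((ℓ - k).factorial : ℂ))) := by
    rw [Nat.cast_choose ℂ hk]
  have h2l : ((-1 : ℂ)) ^ (ℓ * 2) = 1 := by rw [mul_comm ℓ 2, pow_mul]; norm_num
  rw [hC]
  field_simp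
  linear_combination (P ^ 2 * (ℓ.factorial : ℂ) * X) * hs +
    ((-1 : ℂ) ^ k * t ^ ℓ * P ^ 2 * X * (1 - (ℓ.factorial : ℂ))) * h2l


/-- the series `Σ_ℓ (t^ℓ/ℓ!) (R_ℓ f)(z)` converges for `2|t| < d(z,∂D)`
with sum `(Tf)(z,t)` (the contour integral over any admissible radius `r`); i.e. the
`ℓ`-th Taylor coefficient of `t ↦ (Tf)(z,t)` at `t = 0` is `(1/ℓ!) (R_ℓ f)(z)`. -/
theorem statement3 (D : Set ℂ) (hD : IsOpen D) (f : ℂ × ℂ → ℂ)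
    (hf : DifferentiableOn ℂ f (D ×ˢ D)) :
    ∀ z ∈ D, ∀ t : ℂ, ENNReal.ofReal (2 * ‖t‖) < distB D z →
      ∀ r : ℝ, 2 * ‖t‖ < r → ENNReal.ofReal r < distB D z →
        HasSum (fun ℓ : ℕ => t ^ ℓ / (Nat.factorial ℓ : ℂ) * RCb ℓ f z)
          (Tgen f z t r) := by
  intro z hz t _ r htr hrD
  have hr0 : 0 < r := lt_of_le_of_lt (by positivity) htr
  have hcb : closedBall z r ⊆ D := closedBall_subset_of_lt_infEdist hrD
  obtain ⟨ρ, hrρ, hρD⟩ : ∃ ρ : ℝ, r < ρ ∧ closedBall z ρ ⊆ D := by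
    obtain ⟨x, hx0, h1, h2⟩ := ENNReal.lt_iff_exists_real_btwn.mp hrD
    exact ⟨x, (ENNReal.ofReal_lt_ofReal_iff_of_nonneg hr0.le).mp h1,
      closedBall_subset_of_lt_infEdist h2⟩
  have hρ0 : 0 < ρ := hr0.trans hrρ
  have hzD : z ∈ D := hcb (mem_closedBall_self hr0.le)
  have hsphD : ∀ ζ ∈ sphere z r, ζ ∈ D := fun w hw => hcb (sphere_subset_closedBall hw)
  have h2πI : (2 * (Real.pi : ℂ) * I) ≠ 0 := by
    simp [Real.pi_ne_zero, I_ne_zero]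
  -- ψ
  set ψ : ℕ → ℂ → ℂ := fun k w => pd2^[k] f (w, z) with hψdef
  have hψdiff : ∀ k, DifferentiableOn ℂ (ψ k) (closedBall z r) := fun k =>
    (psi_differentiableOn hD hf hρ0 hρD k).mono (closedBall_subset_ball hrρ)
  have hψcont : ∀ k, ContinuousOn (ψ k) (sphere z r) := fun k =>
    ((hψdiff k).continuousOn).mono sphere_subset_closedBall
  -- bound on f
  obtain ⟨M, hM0, hM⟩ : ∃ M, 0 ≤ M ∧ ∀ ζ₁ ∈ sphere z r, ∀ ζ₂ ∈ sphere z r,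
      ‖f (ζ₁, ζ₂)‖ ≤ M := by
    obtain ⟨C, hC⟩ := ((isCompact_sphere z r).prod (isCompact_sphere z r)
      ).exists_bound_of_continuousOn (hf.continuousOn.mono fun p hp =>
        ⟨hsphD _ hp.1, hsphD _ hp.2⟩)
    exact ⟨max C 0, le_max_right _ _, fun ζ₁ h1 ζ₂ h2 =>
      (hC (ζ₁, ζ₂) ⟨h1, h2⟩).trans (le_max_left _ _)⟩
  set q : ℝ := 2 * ‖t‖ / r with hqdef
  have hq0 : 0 ≤ q := by positivity
  have hq1 : q < 1 := (div_lt_one hr0).mpr htr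
  set B : ℕ → ℂ → ℂ → ℂ := fun ℓ ζ₁ ζ₂ =>
    f (ζ₁, ζ₂) * (-t * (ζ₁ - ζ₂)) ^ ℓ / ((ζ₁ - z) * (ζ₂ - z)) ^ (ℓ + 1) with hBdef
  have hnorm : ∀ ζ ∈ sphere z r, ‖ζ - z‖ = r := fun ζ hζ => by
    simpa [dist_eq_norm] using mem_sphere_iff_norm.mp hζ
  have hne : ∀ ζ ∈ sphere z r, ζ - z ≠ 0 := fun ζ hζ => by
    intro h
    have := hnorm ζ hζ
    rw [h, norm_zero] at this
    exact hr0.ne this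
  have hdist2 : ∀ ζ₁ ∈ sphere z r, ∀ ζ₂ ∈ sphere z r, ‖ζ₁ - ζ₂‖ ≤ 2 * r := by
    intro ζ₁ h1 ζ₂ h2
    calc ‖ζ₁ - ζ₂‖ = dist ζ₁ ζ₂ := (dist_eq_norm _ _).symm
      _ ≤ dist ζ₁ z + dist z ζ₂ := dist_triangle _ _ _
      _ = r + r := by rw [mem_sphere.mp h1, dist_comm, mem_sphere.mp h2]
      _ = 2 * r := by ring
  -- pointwise geometric series
  have hgeom : ∀ ζ₁ ∈ sphere z r, ∀ ζ₂ ∈ sphere z r,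
      HasSum (fun ℓ => B ℓ ζ₁ ζ₂) (f (ζ₁, ζ₂) / Qpoly z t ζ₁ ζ₂) := by
    intro ζ₁ h1 ζ₂ h2
    set aa := (ζ₁ - z) * (ζ₂ - z) with haadef
    have haa0 : aa ≠ 0 := mul_ne_zero (hne _ h1) (hne _ h2)
    have haan : ‖aa‖ = r * r := by rw [haadef, norm_mul, hnorm _ h1, hnorm _ h2]
    set u := -t * (ζ₁ - ζ₂) / aa with hudef
    have hu : ‖u‖ < 1 := by
      rw [hudef, norm_div, haan, norm_mul, norm_neg]
      calc ‖t‖ * ‖ζ₁ - ζ₂‖ / (r * r) ≤ ‖t‖ * (2 * r) / (r * r) := by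
            gcongr
            exact hdist2 ζ₁ h1 ζ₂ h2
        _ = q := by rw [hqdef]; field_simp
        _ < 1 := hq1
    have hu1 : (1 : ℂ) - u ≠ 0 := by
      intro h
      have : u = 1 := by linear_combination -h
      rw [this] at hu
      simp at hu
    have hgeo := (hasSum_geometric_of_norm_lt_one hu).mul_left (f (ζ₁, ζ₂) / aa)
    have hfun : (fun ℓ => f (ζ₁, ζ₂) / aa * u ^ ℓ) = fun ℓ => B ℓ ζ₁ ζ₂ := by
      funext ℓ
      simp only [hBdef, hudef, ← haadef, div_pow, pow_succ]
      rw [div_mul_div_comm]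
      ring
    have hval : f (ζ₁, ζ₂) / aa * (1 - u)⁻¹ = f (ζ₁, ζ₂) / Qpoly z t ζ₁ ζ₂ := by
      have hQ : Qpoly z t ζ₁ ζ₂ = aa * (1 - u) := by
        rw [Qpoly, hudef, ← haadef]
        field_simp
        ring
      rw [hQ]
      field_simp
    rw [hfun, hval] at hgeo
    exact hgeo
  -- bound on B
  have hBb : ∀ ℓ, ∀ ζ₁ ∈ sphere z r, ∀ ζ₂ ∈ sphere z r,
      ‖B ℓ ζ₁ ζ₂‖ ≤ M / (r * r) * q ^ ℓ := by
    intro ℓ ζ₁ h1 ζ₂ h2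
    rw [hBdef]
    simp only [norm_div, norm_mul, norm_pow, norm_mul, norm_neg]
    rw [hnorm _ h1, hnorm _ h2]
    calc ‖f (ζ₁, ζ₂)‖ * (‖t‖ * ‖ζ₁ - ζ₂‖) ^ ℓ / (r * r) ^ (ℓ + 1)
        ≤ M * (‖t‖ * (2 * r)) ^ ℓ / (r * r) ^ (ℓ + 1) := by
          gcongr
          · exact hM ζ₁ h1 ζ₂ h2
          · exact hdist2 ζ₁ h1 ζ₂ h2
      _ = M / (r * r) * q ^ ℓ := by
          rw [hqdef, pow_succ, div_pow, mul_pow]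
          field_simp
          ring
  have hsumq : Summable (fun ℓ => M / (r * r) * q ^ ℓ) :=
    (summable_geometric_of_lt_one hq0 hq1).mul_left _
  -- continuity of slices
  have hfslice : ∀ ζ₁ ∈ sphere z r, ContinuousOn (fun ζ₂ => f (ζ₁, ζ₂)) (sphere z r) := by
    intro ζ₁ h1
    exact hf.continuousOn.comp (continuousOn_const.prodMk continuousOn_id)
      (fun ζ₂ hζ₂ => ⟨hsphD _ h1, hsphD _ hζ₂⟩)
  have hBcont : ∀ ℓ, ∀ ζ₁ ∈ sphere z r,
      ContinuousOn (fun ζ₂ => B ℓ ζ₁ ζ₂) (sphere z r) := by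
    intro ℓ ζ₁ h1
    rw [hBdef]
    apply ContinuousOn.div
    · exact (hfslice ζ₁ h1).mul
        (((continuous_const.mul (continuous_const.sub continuous_id)).pow ℓ).continuousOn)
    · exact (((continuous_const.sub continuous_const).mul
        (continuous_id.sub continuous_const)).pow (ℓ + 1)).continuousOn
    · intro ζ₂ h2
      exact pow_ne_zero _ (mul_ne_zero (hne _ h1) (hne _ h2))
  -- inner HasSum
  have hinner : ∀ ζ₁ ∈ sphere z r,
      HasSum (fun ℓ => ∮ ζ₂ in C(z, r), B ℓ ζ₁ ζ₂)
        (∮ ζ₂ in C(z, r), f (ζ₁, ζ₂) / Qpoly z t ζ₁ ζ₂) := fun ζ₁ h1 =>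
    hasSum_circleIntegral hr0 (fun ℓ => hBcont ℓ ζ₁ h1)
      (fun ℓ ζ₂ h2 => hBb ℓ ζ₁ h1 ζ₂ h2) hsumq (fun ζ₂ h2 => hgeom ζ₁ h1 ζ₂ h2)
  have hslice2 : ∀ ζ₁ ∈ sphere z r, DifferentiableOn ℂ (fun u => f (ζ₁, u)) (closedBall z r) := by
    intro ζ₁ h1 u hu
    have h1' : DifferentiableAt ℂ f (ζ₁, u) :=
      hf.differentiableAt ((hD.prod hD).mem_nhds ⟨hsphD _ h1, hcb hu⟩)
    exact (h1'.comp u ((differentiableAt_const ζ₁).prodMk differentiableAt_id)).differentiableWithinAt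
  -- φ
  set φ : ℕ → ℂ → ℂ := fun ℓ w => ∑ k ∈ Finset.range (ℓ + 1),
    (-1 : ℂ) ^ (k + ℓ) * (ℓ.choose k : ℂ) / (k.factorial : ℂ) * (w - z) ^ k * ψ k w with hφdef
  -- inner closed form
  have hS : ∀ ℓ : ℕ, ∀ ζ₁ ∈ sphere z r, (∮ ζ₂ in C(z, r), B ℓ ζ₁ ζ₂)
      = (-t) ^ ℓ * (2 * Real.pi * I) * φ ℓ ζ₁ / (ζ₁ - z) ^ (ℓ + 1) := by
    intro ℓ ζ₁ h1
    have h1ne := hne ζ₁ h1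
    have hkey : Set.EqOn (fun ζ₂ => B ℓ ζ₁ ζ₂)
        (fun ζ₂ => ∑ k ∈ Finset.range (ℓ + 1),
          ((-t) ^ ℓ * (-1 : ℂ) ^ (k + ℓ) * (ℓ.choose k : ℂ) * (ζ₁ - z) ^ k / (ζ₁ - z) ^ (ℓ + 1)) *
            (f (ζ₁, ζ₂) / (ζ₂ - z) ^ (k + 1))) (sphere z r) := by
      intro ζ₂ h2
      have h2ne := hne ζ₂ h2
      have hbin : (ζ₁ - ζ₂) ^ ℓ = ∑ k ∈ Finset.range (ℓ + 1),
          (-1 : ℂ) ^ (k + ℓ) * (ζ₁ - z) ^ k * (ζ₂ - z) ^ (ℓ - k) * (ℓ.choose k : ℂ) := by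
        have h := sub_pow (ζ₁ - z) (ζ₂ - z) ℓ
        rwa [sub_sub_sub_cancel_right] at h
      simp only [hBdef]
      rw [show -t * (ζ₁ - ζ₂) = (-t) * (ζ₁ - ζ₂) from rfl, mul_pow, hbin, Finset.mul_sum,
        Finset.mul_sum, Finset.sum_div]
      refine Finset.sum_congr rfl fun k hk => ?_
      have hkℓ : k ≤ ℓ := Nat.lt_succ_iff.mp (Finset.mem_range.mp hk)
      have hsplit : (ζ₂ - z) ^ (ℓ + 1) = (ζ₂ - z) ^ (ℓ - k) * (ζ₂ - z) ^ (k + 1) := by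
        rw [← pow_add]; congr 1; omega
      rw [mul_pow (ζ₁ - z) (ζ₂ - z), hsplit]
      field_simp
    rw [circleIntegral.integral_congr hr0.le hkey]
    have hgc : ∀ k ∈ Finset.range (ℓ + 1), ContinuousOn (fun ζ₂ : ℂ =>
        ((-t) ^ ℓ * (-1 : ℂ) ^ (k + ℓ) * (ℓ.choose k : ℂ) * (ζ₁ - z) ^ k / (ζ₁ - z) ^ (ℓ + 1)) *
          (f (ζ₁, ζ₂) / (ζ₂ - z) ^ (k + 1))) (sphere z r) := fun k _ =>
      continuousOn_const.mul ((hfslice ζ₁ h1).div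
        (((continuous_id.sub continuous_const).pow (k + 1)).continuousOn)
        (fun ζ₂ h2 => pow_ne_zero _ (hne _ h2)))
    rw [circleIntegral_finset_sum hr0.le hgc]
    have hterm : ∀ k ∈ Finset.range (ℓ + 1),
        (∮ ζ₂ in C(z, r), ((-t) ^ ℓ * (-1 : ℂ) ^ (k + ℓ) * (ℓ.choose k : ℂ) * (ζ₁ - z) ^ k /
            (ζ₁ - z) ^ (ℓ + 1)) * (f (ζ₁, ζ₂) / (ζ₂ - z) ^ (k + 1)))
        = ((-t) ^ ℓ * (-1 : ℂ) ^ (k + ℓ) * (ℓ.choose k : ℂ) * (ζ₁ - z) ^ k /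
            (ζ₁ - z) ^ (ℓ + 1)) *
          ((2 * Real.pi * I) / (k.factorial : ℂ) * ψ k ζ₁) := by
      intro k _
      rw [circleIntegral.integral_const_mul]
      congr 1
      rw [cauchyDeriv hr0 (hslice2 ζ₁ h1) k, ← pd2_iter]
    rw [Finset.sum_congr rfl hterm]
    simp only [hφdef]
    rw [Finset.mul_sum, Finset.sum_div]
    refine Finset.sum_congr rfl fun k _ => ?_
    have hfk : ((k.factorial : ℂ)) ≠ 0 := Nat.cast_ne_zero.mpr k.factorial_ne_zero
    field_simp
  -- continuity and bound of the inner integrals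
  have hφcont : ∀ ℓ, ContinuousOn (φ ℓ) (sphere z r) := by
    intro ℓ
    simp only [hφdef]
    refine continuousOn_finset_sum _ fun k _ => ?_
    exact (continuousOn_const.mul ((continuous_id.sub continuous_const).pow k).continuousOn).mul
      (hψcont k)
  have hScont : ∀ ℓ, ContinuousOn (fun ζ₁ => ∮ ζ₂ in C(z, r), B ℓ ζ₁ ζ₂) (sphere z r) := by
    intro ℓ
    refine ContinuousOn.congr ?_ (fun ζ₁ h1 => hS ℓ ζ₁ h1)
    exact (continuousOn_const.mul (hφcont ℓ)).div
      ((continuous_id.sub continuous_const).pow (ℓ + 1)).continuousOn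
      (fun ζ₁ h1 => pow_ne_zero _ (hne _ h1))
  have hSb : ∀ ℓ : ℕ, ∀ ζ₁ ∈ sphere z r, ‖∮ ζ₂ in C(z, r), B ℓ ζ₁ ζ₂‖ ≤
      2 * Real.pi * r * (M / (r * r) * q ^ ℓ) := fun ℓ ζ₁ h1 =>
    circleIntegral.norm_integral_le_of_norm_le_const hr0.le (fun ζ₂ h2 => hBb ℓ ζ₁ h1 ζ₂ h2)
  have houter := hasSum_circleIntegral hr0 hScont hSb (hsumq.mul_left (2 * Real.pi * r)) hinner
  -- value of the outer integrals
  have houtval : ∀ ℓ : ℕ, (∮ ζ₁ in C(z, r), ∮ ζ₂ in C(z, r), B ℓ ζ₁ ζ₂)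
      = t ^ ℓ * (2 * Real.pi * I) ^ 2 / (ℓ.factorial : ℂ) * RCb ℓ f z := by
    intro ℓ
    rw [circleIntegral.integral_congr hr0.le (fun ζ₁ h1 => hS ℓ ζ₁ h1)]
    have hkey2 : Set.EqOn (fun ζ₁ => (-t) ^ ℓ * (2 * Real.pi * I) * φ ℓ ζ₁ / (ζ₁ - z) ^ (ℓ + 1))
        (fun ζ₁ => ∑ k ∈ Finset.range (ℓ + 1),
          ((-t) ^ ℓ * (2 * Real.pi * I) * ((-1 : ℂ) ^ (k + ℓ) * (ℓ.choose k : ℂ) /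
            (k.factorial : ℂ))) * (ψ k ζ₁ / (ζ₁ - z) ^ ((ℓ - k) + 1))) (sphere z r) := by
      intro ζ₁ h1
      have h1ne := hne ζ₁ h1
      simp only [hφdef]
      rw [Finset.mul_sum, Finset.sum_div]
      refine Finset.sum_congr rfl fun k hk => ?_
      have hkℓ : k ≤ ℓ := Nat.lt_succ_iff.mp (Finset.mem_range.mp hk)
      have hsplit : (ζ₁ - z) ^ (ℓ + 1) = (ζ₁ - z) ^ k * (ζ₁ - z) ^ ((ℓ - k) + 1) := by
        rw [← pow_add]; congr 1; omega
      have hfk : ((k.factorial : ℂ)) ≠ 0 := Nat.cast_ne_zero.mpr k.factorial_ne_zero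
      rw [hsplit]
      field_simp
    rw [circleIntegral.integral_congr hr0.le hkey2]
    have hgc2 : ∀ k ∈ Finset.range (ℓ + 1), ContinuousOn (fun ζ₁ : ℂ =>
        ((-t) ^ ℓ * (2 * Real.pi * I) * ((-1 : ℂ) ^ (k + ℓ) * (ℓ.choose k : ℂ) /
          (k.factorial : ℂ))) * (ψ k ζ₁ / (ζ₁ - z) ^ ((ℓ - k) + 1))) (sphere z r) := fun k _ =>
      continuousOn_const.mul ((hψcont k).div
        (((continuous_id.sub continuous_const).pow ((ℓ - k) + 1)).continuousOn)
        (fun ζ₁ h1 => pow_ne_zero _ (hne _ h1)))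
    rw [circleIntegral_finset_sum hr0.le hgc2]
    have hterm2 : ∀ k ∈ Finset.range (ℓ + 1),
        (∮ ζ₁ in C(z, r), ((-t) ^ ℓ * (2 * Real.pi * I) * ((-1 : ℂ) ^ (k + ℓ) *
            (ℓ.choose k : ℂ) / (k.factorial : ℂ))) * (ψ k ζ₁ / (ζ₁ - z) ^ ((ℓ - k) + 1)))
        = ((-t) ^ ℓ * (2 * Real.pi * I) * ((-1 : ℂ) ^ (k + ℓ) * (ℓ.choose k : ℂ) /
            (k.factorial : ℂ))) *
          ((2 * Real.pi * I) / (((ℓ - k).factorial : ℂ)) * pd1^[ℓ - k] (pd2^[k] f) (z, z)) := by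
      intro k _
      rw [circleIntegral.integral_const_mul]
      congr 1
      rw [cauchyDeriv hr0 (hψdiff k) (ℓ - k), ← pd1_iter]
    rw [Finset.sum_congr rfl hterm2]
    rw [RCb, Finset.mul_sum]
    refine Finset.sum_congr rfl fun k hk => ?_
    have hkℓ : k ≤ ℓ := Nat.lt_succ_iff.mp (Finset.mem_range.mp hk)
    exact coeff_identity hkℓ
  -- assemble
  have hmul := houter.mul_left ((1 / (2 * (Real.pi : ℂ) * I)) ^ 2)
  simp only [houtval] at hmul
  have hfinal : (fun ℓ : ℕ => (1 / (2 * (Real.pi : ℂ) * I)) ^ 2 *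
      (t ^ ℓ * (2 * Real.pi * I) ^ 2 / (ℓ.factorial : ℂ) * RCb ℓ f z)) =
      fun ℓ : ℕ => t ^ ℓ / (Nat.factorial ℓ : ℂ) * RCb ℓ f z := by
    funext ℓ
    have hfl : ((ℓ.factorial : ℂ)) ≠ 0 := Nat.cast_ne_zero.mpr ℓ.factorial_ne_zero
    field_simp
  rw [hfinal] at hmul
  exact hmul
end
end

section
/- Let D ⊆ ℂ be an open set and f holomorphic on D×D. Then for all (z,t) ∈ U_D one has T(Pf)(z,t) = −(ϑ_t(ϑ_t+1) Tf)(z,t), where ϑ_t = t ∂/∂t; explicitly, T(Pf)(z,t) = −t² ∂²(Tf)/∂t²(z,t) − 2t ∂(Tf)/∂t(z,t). -/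
open Complex Metric MeasureTheory

noncomputable section

/-- The differential operator
`(Pf)(ζ₁,ζ₂) = (ζ₁−ζ₂)² ∂²f/∂ζ₁∂ζ₂ − (ζ₁−ζ₂)(∂f/∂ζ₁ − ∂f/∂ζ₂)`. -/
def Pop (f : ℂ × ℂ → ℂ) (p : ℂ × ℂ) : ℂ :=
  (p.1 - p.2) ^ 2 * pd1 (pd2 f) p - (p.1 - p.2) * (pd1 f p - pd2 f p)

end

open Complex Metric MeasureTheory Set Filter Topology

noncomputable section


/-- Continuity of a parametric interval integral, `ContinuousOn` version. -/
lemma continuousOn_param_integral {X : Type*} [TopologicalSpace X] {S : Set X}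
    {F : X → ℝ → ℂ}
    (hF : ContinuousOn (fun p : X × ℝ => F p.1 p.2) (S ×ˢ (univ : Set ℝ))) :
    ContinuousOn (fun x => ∫ θ in (0:ℝ)..(2 * Real.pi), F x θ) S := by
  rw [continuousOn_iff_continuous_restrict]
  have : Continuous (Function.uncurry fun (x : S) (θ : ℝ) => F x.1 θ) :=
    hF.comp_continuous
      ((continuous_subtype_val.comp continuous_fst).prodMk continuous_snd)
      (fun q => ⟨q.1.2, trivial⟩)
  exact intervalIntegral.continuous_parametric_intervalIntegral_of_continuous'
    (f := fun (x : S) (θ : ℝ) => F x.1 θ) this 0 (2 * Real.pi)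

/-- Differentiation under a circle integral (fixed circle, complex parameter). -/
lemma hasDerivAt_circleIntegral {g g' : ℂ → ℂ → ℂ} {c : ℂ} {ρ : ℝ} (hρ : 0 ≤ ρ)
    {x₀ : ℂ} {ε C : ℝ} (hε : 0 < ε)
    (h_int : ∀ x ∈ ball x₀ ε, CircleIntegrable (g x) c ρ)
    (h_int' : CircleIntegrable (g' x₀) c ρ)
    (h_bound : ∀ ζ ∈ sphere c ρ, ∀ x ∈ ball x₀ ε, ‖g' x ζ‖ ≤ C)
    (h_deriv : ∀ ζ ∈ sphere c ρ, ∀ x ∈ ball x₀ ε, HasDerivAt (fun y => g y ζ) (g' x ζ) x) :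
    HasDerivAt (fun x => ∮ ζ in C(c, ρ), g x ζ) (∮ ζ in C(c, ρ), g' x₀ ζ) x₀ := by
  have h2π : (0:ℝ) ≤ 2 * Real.pi := by positivity
  have key := intervalIntegral.hasDerivAt_integral_of_dominated_loc_of_deriv_le
    (μ := MeasureTheory.volume) (a := 0) (b := 2 * Real.pi)
    (F := fun x θ => deriv (circleMap c ρ) θ • g x (circleMap c ρ θ))
    (F' := fun x θ => deriv (circleMap c ρ) θ • g' x (circleMap c ρ θ))
    (x₀ := x₀) (bound := fun _ => ρ * C) (s := ball x₀ ε) (ball_mem_nhds x₀ hε)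
    ?_ ?_ ?_ ?_ ?_ ?_
  · exact key.2
  · filter_upwards [ball_mem_nhds x₀ hε] with x hx
    exact ((h_int x hx).out).1.aestronglyMeasurable.mono_measure
      (Measure.restrict_mono (by rw [uIoc_of_le h2π]) le_rfl)
  · exact (h_int x₀ (mem_ball_self hε)).out
  · exact (h_int'.out).1.aestronglyMeasurable.mono_measure
      (Measure.restrict_mono (by rw [uIoc_of_le h2π]) le_rfl)
  · refine Eventually.of_forall fun θ _ x hx => ?_
    rw [norm_smul]
    have h1 : ‖deriv (circleMap c ρ) θ‖ = ρ := by
      simp [deriv_circleMap, norm_circleMap_zero, _root_.abs_of_nonneg hρ]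
    rw [h1]
    exact mul_le_mul_of_nonneg_left
      (h_bound _ (circleMap_mem_sphere c hρ θ) x hx) hρ
  · exact intervalIntegrable_const
  · refine Eventually.of_forall fun θ _ x hx => ?_
    exact (h_deriv _ (circleMap_mem_sphere c hρ θ) x hx).fun_const_smul _

/-- Representation of the derivative at the centre as a circle integral. -/
lemma deriv_rep {g : ℂ → ℂ} {x : ℂ} {ρ : ℝ} (hρ : 0 < ρ)
    (hg : DifferentiableOn ℂ g (closedBall x ρ)) :
    deriv g x = (2 * Real.pi * I : ℂ)⁻¹ • ∮ u in C(x, ρ), (u - x) ^ (-2 : ℤ) • g u :=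
  by
    rw [show (fun u => (u - x) ^ (-2 : ℤ) • g u) = fun u => (1 / (u - x) ^ 2) • g u by
      funext u; simp [zpow_neg, one_div]]
    rw [hg.deriv_eq_smul_circleIntegral hρ, smul_smul,
      inv_mul_cancel₀ (by simp [Real.pi_ne_zero, I_ne_zero]), one_smul]

end
lemma circleMap_eq (c : ℂ) (ρ θ : ℝ) : circleMap c ρ θ = c + circleMap 0 ρ θ := by
  rw [← circleMap_sub_center c ρ θ]; ring

/-- Continuity of a parametric circle integral over a fixed circle. -/
lemma continuousOn_circleIntegral_fixed {X : Type*} [TopologicalSpace X] {S : Set X}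
    {c : ℂ} {ρ : ℝ} (hρ : 0 ≤ ρ) {g : X → ℂ → ℂ}
    (hg : ContinuousOn (fun q : X × ℂ => g q.1 q.2) (S ×ˢ sphere c ρ)) :
    ContinuousOn (fun x => ∮ ζ in C(c, ρ), g x ζ) S := by
  simp only [circleIntegral]
  apply continuousOn_param_integral
  have hmap : ContinuousOn (fun p : X × ℝ => g p.1 (circleMap c ρ p.2)) (S ×ˢ univ) := by
    have : (fun p : X × ℝ => g p.1 (circleMap c ρ p.2)) =
        (fun q : X × ℂ => g q.1 q.2) ∘ (fun p : X × ℝ => (p.1, circleMap c ρ p.2)) := rfl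
    rw [this]
    apply hg.comp (by fun_prop)
    rintro ⟨x, θ⟩ ⟨hx, -⟩
    exact ⟨hx, circleMap_mem_sphere c hρ θ⟩
  have hker : ContinuousOn (fun p : X × ℝ => (circleMap 0 ρ p.2 * I : ℂ)) (S ×ˢ univ) := by
    fun_prop
  refine (hker.smul hmap).congr (fun p hp => ?_)
  simp [deriv_circleMap, smul_eq_mul]

/-- Continuity of the Cauchy-kernel representation integral with moving centre. -/
lemma continuousOn_rep {X : Type*} [TopologicalSpace X] {S : Set X}
    {cen : X → ℂ} {ρ : ℝ} (hρ : 0 < ρ) {h : X → ℂ → ℂ} {T : Set ℂ}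
    (hcen : ContinuousOn cen S)
    (hh : ContinuousOn (fun q : X × ℂ => h q.1 q.2) (S ×ˢ T))
    (hmem : ∀ x ∈ S, ∀ θ : ℝ, circleMap (cen x) ρ θ ∈ T) :
    ContinuousOn
      (fun x => (2 * Real.pi * I : ℂ)⁻¹ •
        ∮ u in C(cen x, ρ), (u - cen x) ^ (-2 : ℤ) • h x u) S := by
  apply ContinuousOn.fun_const_smul
  simp only [circleIntegral]
  apply continuousOn_param_integral
  have h1 : ∀ (x : X) (θ : ℝ),
      deriv (circleMap (cen x) ρ) θ •
        ((circleMap (cen x) ρ θ - cen x) ^ (-2 : ℤ) • h x (circleMap (cen x) ρ θ)) =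
      (circleMap 0 ρ θ * I * (circleMap 0 ρ θ) ^ (-2 : ℤ)) • h x (cen x + circleMap 0 ρ θ) := by
    intro x θ
    rw [deriv_circleMap, circleMap_sub_center, ← circleMap_eq]
    simp [smul_eq_mul]; ring
  have hmap : ContinuousOn (fun p : X × ℝ => h p.1 (cen p.1 + circleMap 0 ρ p.2))
      (S ×ˢ univ) := by
    have : (fun p : X × ℝ => h p.1 (cen p.1 + circleMap 0 ρ p.2)) =
        (fun q : X × ℂ => h q.1 q.2) ∘
          (fun p : X × ℝ => (p.1, cen p.1 + circleMap 0 ρ p.2)) := rfl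
    rw [this]
    apply hh.comp
    · exact continuousOn_fst.prodMk
        ((hcen.comp continuousOn_fst (fun p hp => hp.1)).fun_add (by fun_prop))
    · rintro ⟨x, θ⟩ ⟨hx, -⟩
      refine ⟨hx, ?_⟩
      show cen x + circleMap 0 ρ θ ∈ T
      rw [← circleMap_eq]; exact hmem x hx θ
  have hker : ContinuousOn
      (fun p : X × ℝ => circleMap 0 ρ p.2 * I * (circleMap 0 ρ p.2) ^ (-2 : ℤ))
      (S ×ˢ (univ : Set ℝ)) := by
    apply ContinuousOn.mul (by fun_prop)
    apply ContinuousOn.zpow₀ (by fun_prop)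
    intro p _
    exact Or.inl (circleMap_ne_center hρ.ne')
  exact (hker.smul hmap).congr (fun p hp => h1 p.1 p.2)


noncomputable section Reg
open Complex Metric MeasureTheory Set Filter Topology


variable {f : ℂ × ℂ → ℂ} {U : Set (ℂ × ℂ)}

lemma hasDerivAt_pd1 (hU : IsOpen U) (hf : DifferentiableOn ℂ f U) {p : ℂ × ℂ} (hp : p ∈ U) :
    HasDerivAt (fun w => f (w, p.2)) (pd1 f p) p.1 := by
  have h := hf.differentiableAt (hU.mem_nhds hp)
  have h2 : DifferentiableAt ℂ (fun w : ℂ => f (w, p.2)) p.1 :=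
    h.comp p.1 (differentiableAt_id.prodMk (differentiableAt_const _))
  exact h2.hasDerivAt

lemma hasDerivAt_pd2 (hU : IsOpen U) (hf : DifferentiableOn ℂ f U) {p : ℂ × ℂ} (hp : p ∈ U) :
    HasDerivAt (fun w => f (p.1, w)) (pd2 f p) p.2 := by
  have h := hf.differentiableAt (hU.mem_nhds hp)
  have h2 : DifferentiableAt ℂ (fun w : ℂ => f (p.1, w)) p.2 :=
    h.comp p.2 ((differentiableAt_const _).prodMk differentiableAt_id)
  exact h2.hasDerivAt

lemma pd1_rep (hU : IsOpen U) (hf : DifferentiableOn ℂ f U) {x v : ℂ} {ρ : ℝ} (hρ : 0 < ρ)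
    (hsub : ∀ u ∈ closedBall x ρ, (u, v) ∈ U) :
    pd1 f (x, v) = (2 * Real.pi * I : ℂ)⁻¹ • ∮ u in C(x, ρ), (u - x) ^ (-2 : ℤ) • f (u, v) := by
  have hg : DifferentiableOn ℂ (fun u => f (u, v)) (closedBall x ρ) := fun u hu =>
    ((hf.differentiableAt (hU.mem_nhds (hsub u hu))).comp u
      (differentiableAt_id.prodMk (differentiableAt_const _))).differentiableWithinAt
  exact deriv_rep hρ hg

lemma pd2_rep (hU : IsOpen U) (hf : DifferentiableOn ℂ f U) {x v : ℂ} {ρ : ℝ} (hρ : 0 < ρ)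
    (hsub : ∀ w ∈ closedBall v ρ, (x, w) ∈ U) :
    pd2 f (x, v) = (2 * Real.pi * I : ℂ)⁻¹ • ∮ w in C(v, ρ), (w - v) ^ (-2 : ℤ) • f (x, w) := by
  have hg : DifferentiableOn ℂ (fun w => f (x, w)) (closedBall v ρ) := fun w hw =>
    ((hf.differentiableAt (hU.mem_nhds (hsub w hw))).comp w
      ((differentiableAt_const _).prodMk differentiableAt_id)).differentiableWithinAt
  exact deriv_rep hρ hg

lemma mem_cb_trans {u x z : ℂ} {ρ cR : ℝ} (hu : u ∈ closedBall x ρ) (hx : x ∈ closedBall z cR) :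
    u ∈ closedBall z (cR + ρ) :=
  mem_closedBall.2 <| (dist_triangle u x z).trans <| by
    have h1 := mem_closedBall.1 hu; have h2 := mem_closedBall.1 hx; linarith

lemma sphere_mem_cb {v z : ℂ} {ρ cR : ℝ} (hρ : 0 ≤ ρ) (hv : v ∈ closedBall z cR) (θ : ℝ) :
    circleMap v ρ θ ∈ closedBall z (cR + ρ) :=
  mem_cb_trans (circleMap_mem_closedBall v hρ θ) hv

lemma pd1_contOn (hU : IsOpen U) (hf : DifferentiableOn ℂ f U) {z : ℂ} {cR ρ : ℝ} (hρ : 0 < ρ)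
    (hsub : closedBall z (cR + ρ) ×ˢ closedBall z (cR + ρ) ⊆ U) :
    ContinuousOn (pd1 f) (closedBall z cR ×ˢ closedBall z cR) := by
  have hcont := continuousOn_rep (X := ℂ × ℂ) (S := closedBall z cR ×ˢ closedBall z cR)
    (cen := fun p => p.1) (ρ := ρ) hρ (h := fun q u => f (u, q.2))
    (T := closedBall z (cR + ρ)) continuousOn_fst ?_ ?_
  · refine hcont.congr fun p hp => ?_
    exact pd1_rep hU hf hρ fun u hu =>
      hsub ⟨mem_cb_trans hu hp.1, closedBall_subset_closedBall (by linarith) hp.2⟩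
  · have : (fun q : (ℂ × ℂ) × ℂ => f (q.2, q.1.2)) =
        f ∘ (fun q : (ℂ × ℂ) × ℂ => (q.2, q.1.2)) := rfl
    rw [this]
    apply hf.continuousOn.comp (by fun_prop)
    rintro ⟨⟨x, v⟩, u⟩ ⟨⟨hx, hv⟩, hu⟩
    exact hsub ⟨hu, closedBall_subset_closedBall (by linarith) hv⟩
  · exact fun p hp θ => sphere_mem_cb hρ.le hp.1 θ

lemma pd2_contOn (hU : IsOpen U) (hf : DifferentiableOn ℂ f U) {z : ℂ} {cR ρ : ℝ} (hρ : 0 < ρ)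
    (hsub : closedBall z (cR + ρ) ×ˢ closedBall z (cR + ρ) ⊆ U) :
    ContinuousOn (pd2 f) (closedBall z cR ×ˢ closedBall z cR) := by
  have hcont := continuousOn_rep (X := ℂ × ℂ) (S := closedBall z cR ×ˢ closedBall z cR)
    (cen := fun p => p.2) (ρ := ρ) hρ (h := fun q w => f (q.1, w))
    (T := closedBall z (cR + ρ)) continuousOn_snd ?_ ?_
  · refine hcont.congr fun p hp => ?_
    exact pd2_rep hU hf hρ fun w hw =>
      hsub ⟨closedBall_subset_closedBall (by linarith) hp.1, mem_cb_trans hw hp.2⟩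
  · have : (fun q : (ℂ × ℂ) × ℂ => f (q.1.1, q.2)) =
        f ∘ (fun q : (ℂ × ℂ) × ℂ => (q.1.1, q.2)) := rfl
    rw [this]
    apply hf.continuousOn.comp (by fun_prop)
    rintro ⟨⟨x, v⟩, w⟩ ⟨⟨hx, hv⟩, hw⟩
    exact hsub ⟨closedBall_subset_closedBall (by linarith) hx, hw⟩
  · exact fun p hp θ => sphere_mem_cb hρ.le hp.2 θ

end Reg

noncomputable section Reg2
set_option maxHeartbeats 1000000
open Complex Metric MeasureTheory Set Filter Topology

variable {f : ℂ × ℂ → ℂ} {U : Set (ℂ × ℂ)}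

lemma pd2_deriv_fst (hU : IsOpen U) (hf : DifferentiableOn ℂ f U) {z x v : ℂ} {bR ρ M₁ : ℝ}
    (hρ : 0 < ρ) (hx : x ∈ closedBall z bR) (hv : v ∈ closedBall z bR)
    (hsub : closedBall z (bR + ρ) ×ˢ closedBall z (bR + ρ) ⊆ U)
    (hc₁ : ContinuousOn (pd1 f) (closedBall z (bR + ρ) ×ˢ closedBall z (bR + ρ)))
    (hM₁ : ∀ q ∈ closedBall z (bR + ρ) ×ˢ closedBall z (bR + ρ), ‖pd1 f q‖ ≤ M₁) :
    HasDerivAt (fun y => pd2 f (y, v)) (pd1 (pd2 f) (x, v)) x ∧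
      pd1 (pd2 f) (x, v) = (2 * Real.pi * I : ℂ)⁻¹ •
        ∮ w in C(v, ρ), (w - v) ^ (-2 : ℤ) • pd1 f (x, w) := by
  have hsph : ∀ w ∈ sphere v ρ, w ∈ closedBall z (bR + ρ) := fun w hw =>
    mem_cb_trans (sphere_subset_closedBall hw) hv
  have hball : ∀ y ∈ ball x ρ, y ∈ closedBall z (bR + ρ) := fun y hy =>
    mem_cb_trans (ball_subset_closedBall hy) hx
  have key : HasDerivAt
      (fun y => (2 * Real.pi * I : ℂ)⁻¹ • ∮ w in C(v, ρ), (w - v) ^ (-2 : ℤ) • f (y, w))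
      ((2 * Real.pi * I : ℂ)⁻¹ • ∮ w in C(v, ρ), (w - v) ^ (-2 : ℤ) • pd1 f (x, w)) x := by
    refine HasDerivAt.fun_const_smul _ ?_
    apply hasDerivAt_circleIntegral (g := fun y w => (w - v) ^ (-2 : ℤ) • f (y, w))
      (g' := fun y w => (w - v) ^ (-2 : ℤ) • pd1 f (y, w)) hρ.le hρ
      (C := ρ ^ (-2 : ℤ) * M₁)
    · intro y hy
      apply ContinuousOn.circleIntegrable hρ.le
      apply ContinuousOn.fun_smul
      · exact ContinuousOn.zpow₀ (by fun_prop) _ fun w hw => Or.inl (by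
          simp only [mem_sphere_iff_norm] at hw
          intro h0; rw [sub_eq_zero] at h0; rw [h0] at hw; simp at hw; linarith)
      · have : (fun w => f (y, w)) = f ∘ (fun w => (y, w)) := rfl
        rw [this]
        apply hf.continuousOn.comp (by fun_prop)
        exact fun w hw => hsub (Set.mk_mem_prod (hball y hy) (hsph w hw))
    · apply ContinuousOn.circleIntegrable hρ.le
      apply ContinuousOn.fun_smul
      · exact ContinuousOn.zpow₀ (by fun_prop) _ fun w hw => Or.inl (by
          simp only [mem_sphere_iff_norm] at hw
          intro h0; rw [sub_eq_zero] at h0; rw [h0] at hw; simp at hw; linarith)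
      · have : (fun w => pd1 f (x, w)) = pd1 f ∘ (fun w => (x, w)) := rfl
        rw [this]
        apply hc₁.comp (by fun_prop)
        exact fun w hw => ⟨hball x (mem_ball_self hρ), hsph w hw⟩
    · intro w hw y hy
      rw [norm_smul]
      have h1 : ‖(w - v) ^ (-2 : ℤ)‖ = ρ ^ (-2 : ℤ) := by
        rw [norm_zpow]
        simp only [mem_sphere_iff_norm] at hw
        rw [hw]
      rw [h1]
      apply mul_le_mul_of_nonneg_left _ (by positivity)
      exact hM₁ (y, w) (Set.mk_mem_prod (hball y hy) (hsph w hw))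
    · intro w hw y hy
      exact (hasDerivAt_pd1 hU hf (hsub (Set.mk_mem_prod (hball y hy) (hsph w hw)))).const_smul ((w - v) ^ (-2 : ℤ))
  have hrepeq : ∀ᶠ y in 𝓝 x, pd2 f (y, v) =
      (2 * Real.pi * I : ℂ)⁻¹ • ∮ w in C(v, ρ), (w - v) ^ (-2 : ℤ) • f (y, w) := by
    filter_upwards [ball_mem_nhds x hρ] with y hy
    exact pd2_rep hU hf hρ fun w hw =>
      hsub (Set.mk_mem_prod (hball y hy) (mem_cb_trans hw hv))
  have h2 : HasDerivAt (fun y => pd2 f (y, v))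
      ((2 * Real.pi * I : ℂ)⁻¹ • ∮ w in C(v, ρ), (w - v) ^ (-2 : ℤ) • pd1 f (x, w)) x :=
    key.congr_of_eventuallyEq hrepeq
  have hdval : pd1 (pd2 f) (x, v) =
      (2 * Real.pi * I : ℂ)⁻¹ • ∮ w in C(v, ρ), (w - v) ^ (-2 : ℤ) • pd1 f (x, w) := h2.deriv
  exact ⟨by rw [hdval]; exact h2, hdval⟩

lemma pd12_contOn (hU : IsOpen U) (hf : DifferentiableOn ℂ f U) {z : ℂ} {bR ρ M₁ : ℝ}
    (hρ : 0 < ρ)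
    (hsub : closedBall z (bR + ρ) ×ˢ closedBall z (bR + ρ) ⊆ U)
    (hc₁ : ContinuousOn (pd1 f) (closedBall z (bR + ρ) ×ˢ closedBall z (bR + ρ)))
    (hM₁ : ∀ q ∈ closedBall z (bR + ρ) ×ˢ closedBall z (bR + ρ), ‖pd1 f q‖ ≤ M₁) :
    ContinuousOn (pd1 (pd2 f)) (closedBall z bR ×ˢ closedBall z bR) := by
  have hcont := continuousOn_rep (X := ℂ × ℂ) (S := closedBall z bR ×ˢ closedBall z bR)
    (cen := fun p => p.2) (ρ := ρ) hρ (h := fun q w => pd1 f (q.1, w))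
    (T := closedBall z (bR + ρ)) continuousOn_snd ?_ ?_
  · refine hcont.congr fun p hp => ?_
    exact (pd2_deriv_fst hU hf hρ hp.1 hp.2 hsub hc₁ hM₁).2
  · have : (fun q : (ℂ × ℂ) × ℂ => pd1 f (q.1.1, q.2)) =
        pd1 f ∘ (fun q : (ℂ × ℂ) × ℂ => (q.1.1, q.2)) := rfl
    rw [this]
    apply hc₁.comp (by fun_prop)
    rintro ⟨⟨x, v⟩, w⟩ ⟨⟨hx, hv⟩, hw⟩
    exact ⟨closedBall_subset_closedBall (by linarith) hx, hw⟩
  · exact fun p hp θ => sphere_mem_cb hρ.le hp.2 θ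

end Reg2

noncomputable section Alg
open Complex Metric MeasureTheory Set Filter Topology
set_option maxHeartbeats 4000000


def Af (f : ℂ × ℂ → ℂ) (z t x v : ℂ) : ℂ :=
  ((x - v) ^ 2 * pd2 f (x, v) - (x - v) * f (x, v)) / Qpoly z t x v

def Adf (f : ℂ × ℂ → ℂ) (z t x v : ℂ) : ℂ :=
  (2 * (x - v) * pd2 f (x, v) + (x - v) ^ 2 * pd1 (pd2 f) (x, v) - f (x, v)
      - (x - v) * pd1 f (x, v)) / Qpoly z t x v
    - ((x - v) ^ 2 * pd2 f (x, v) - (x - v) * f (x, v)) * (v - z + t) / (Qpoly z t x v) ^ 2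

def Bf (f : ℂ × ℂ → ℂ) (z t x v : ℂ) : ℂ :=
  f (x, v) * ((x - v) ^ 2 * (v - z + t) - (x - v) * Qpoly z t x v) / (Qpoly z t x v) ^ 2

def Bdf (f : ℂ × ℂ → ℂ) (z t x v : ℂ) : ℂ :=
  pd2 f (x, v) * ((x - v) ^ 2 * (v - z + t) - (x - v) * Qpoly z t x v) / (Qpoly z t x v) ^ 2
    + f (x, v) *
      (((-2) * (x - v) * (v - z + t) + (x - v) ^ 2 + Qpoly z t x v - (x - v) * ((x - z) - t))
          * Qpoly z t x v
        - ((x - v) ^ 2 * (v - z + t) - (x - v) * Qpoly z t x v) * 2 * ((x - z) - t))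
        / (Qpoly z t x v) ^ 3

def Kf (z t x v : ℂ) : ℂ :=
  2 * t * (x - v) / (Qpoly z t x v) ^ 2 - 2 * t ^ 2 * (x - v) ^ 2 / (Qpoly z t x v) ^ 3

lemma fr_div1 (P Q : ℂ) (hQ : Q ≠ 0) : P / Q = P * Q ^ 2 / Q ^ 3 := by
  field_simp

lemma fr_div2 (X Y Q : ℂ) (hQ : Q ≠ 0) : X / Q - Y / Q ^ 2 = (X * Q ^ 2 - Y * Q) / Q ^ 3 := by
  field_simp

lemma fr_div3 (X Y Q : ℂ) (hQ : Q ≠ 0) : X / Q ^ 2 + Y / Q ^ 3 = (X * Q + Y) / Q ^ 3 := by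
  field_simp

lemma fr_div4 (X Y Q : ℂ) (hQ : Q ≠ 0) : X / Q ^ 2 - Y / Q ^ 3 = (X * Q - Y) / Q ^ 3 := by
  field_simp

lemma key_identity (f : ℂ × ℂ → ℂ) {z t x v : ℂ} (hQ : Qpoly z t x v ≠ 0) :
    Pop f (x, v) / Qpoly z t x v = Adf f z t x v + Bdf f z t x v + f (x, v) * Kf z t x v := by
  have hrel : Qpoly z t x v = (x - z) * (v - z) + t * (x - v) := rfl
  have hA : Adf f z t x v =
      ((2 * (x - v) * pd2 f (x, v) + (x - v) ^ 2 * pd1 (pd2 f) (x, v) - f (x, v)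
          - (x - v) * pd1 f (x, v)) * Qpoly z t x v ^ 2
        - ((x - v) ^ 2 * pd2 f (x, v) - (x - v) * f (x, v)) * (v - z + t) * Qpoly z t x v)
        / Qpoly z t x v ^ 3 := by
    simp only [Adf]; rw [fr_div2 _ _ _ hQ]
  have hB : Bdf f z t x v =
      ((pd2 f (x, v) * ((x - v) ^ 2 * (v - z + t) - (x - v) * Qpoly z t x v)) * Qpoly z t x v
        + f (x, v) *
          (((-2) * (x - v) * (v - z + t) + (x - v) ^ 2 + Qpoly z t x v
              - (x - v) * ((x - z) - t)) * Qpoly z t x v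
            - ((x - v) ^ 2 * (v - z + t) - (x - v) * Qpoly z t x v) * 2 * ((x - z) - t)))
        / Qpoly z t x v ^ 3 := by
    simp only [Bdf]; rw [fr_div3 _ _ _ hQ]
  have hK : f (x, v) * Kf z t x v =
      f (x, v) * (2 * t * (x - v) * Qpoly z t x v - 2 * t ^ 2 * (x - v) ^ 2)
        / Qpoly z t x v ^ 3 := by
    simp only [Kf]; rw [fr_div4 _ _ _ hQ, mul_div_assoc]
  have hP : Pop f (x, v) / Qpoly z t x v
      = Pop f (x, v) * Qpoly z t x v ^ 2 / Qpoly z t x v ^ 3 := fr_div1 _ _ hQ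
  rw [hP, hA, hB, hK, ← add_div, ← add_div]
  congr 1
  simp only [Pop]
  rw [hrel]
  ring

lemma hasDerivAt_Qpoly_fst (z t v x : ℂ) :
    HasDerivAt (fun y => Qpoly z t y v) (v - z + t) x := by
  have h : HasDerivAt (fun y : ℂ => (y - z) * (v - z) + t * (y - v)) ((v - z) + t) x := by
    exact (((hasDerivAt_id' x).sub_const z).mul_const (v - z)).add
      (((hasDerivAt_id' x).sub_const v).const_mul t) |>.congr_deriv (by ring)
  exact h

lemma hasDerivAt_Qpoly_snd (z t x v : ℂ) :
    HasDerivAt (fun w => Qpoly z t x w) ((x - z) - t) v := by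
  have h : HasDerivAt (fun w : ℂ => (x - z) * (w - z) + t * (x - w)) ((x - z) - t) v := by
    exact ((((hasDerivAt_id' v).sub_const z).const_mul (x - z))).add
      (((hasDerivAt_const v x).sub (hasDerivAt_id' v)).const_mul t) |>.congr_deriv (by ring)
  exact h

lemma hasDerivAt_A (f : ℂ × ℂ → ℂ) {z t x v : ℂ} (hQ : Qpoly z t x v ≠ 0)
    (hd1 : HasDerivAt (fun y => f (y, v)) (pd1 f (x, v)) x)
    (hd2 : HasDerivAt (fun y => pd2 f (y, v)) (pd1 (pd2 f) (x, v)) x) :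
    HasDerivAt (fun y => Af f z t y v) (Adf f z t x v) x := by
  have hnum : HasDerivAt (fun y => (y - v) ^ 2 * pd2 f (y, v) - (y - v) * f (y, v))
      (2 * (x - v) * pd2 f (x, v) + (x - v) ^ 2 * pd1 (pd2 f) (x, v)
        - (f (x, v) + (x - v) * pd1 f (x, v))) x := by
    have h1 : HasDerivAt (fun y : ℂ => (y - v) ^ 2) (2 * (x - v)) x := by
      simpa using ((hasDerivAt_id' x).sub_const v).fun_pow 2
    exact ((h1.mul hd2).sub (((hasDerivAt_id' x).sub_const v).mul hd1)).congr_deriv (by ring)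
  have h := hnum.div (hasDerivAt_Qpoly_fst z t v x) hQ
  refine h.congr_deriv ?_
  unfold Adf
  field_simp
  ring

lemma hasDerivAt_B (f : ℂ × ℂ → ℂ) {z t x v : ℂ} (hQ : Qpoly z t x v ≠ 0)
    (hd2 : HasDerivAt (fun w => f (x, w)) (pd2 f (x, v)) v) :
    HasDerivAt (fun w => Bf f z t x w) (Bdf f z t x v) v := by
  have hQd := hasDerivAt_Qpoly_snd z t x v
  have hnum : HasDerivAt
      (fun w => f (x, w) * ((x - w) ^ 2 * (w - z + t) - (x - w) * Qpoly z t x w))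
      (pd2 f (x, v) * ((x - v) ^ 2 * (v - z + t) - (x - v) * Qpoly z t x v)
        + f (x, v) * ((-2) * (x - v) * (v - z + t) + (x - v) ^ 2 + Qpoly z t x v
          - (x - v) * ((x - z) - t))) v := by
    have hw : HasDerivAt (fun w : ℂ => x - w) (-1) v := by
      simpa using (hasDerivAt_const v x).fun_sub (hasDerivAt_id' v)
    have hw2 : HasDerivAt (fun w : ℂ => (x - w) ^ 2) (2 * (x - v) * (-1)) v := by
      simpa using hw.fun_pow 2
    have hlin : HasDerivAt (fun w : ℂ => w - z + t) 1 v := by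
      simpa using ((hasDerivAt_id' v).sub_const z).add_const t
    have hin : HasDerivAt
        (fun w => (x - w) ^ 2 * (w - z + t) - (x - w) * Qpoly z t x w)
        ((2 * (x - v) * (-1)) * (v - z + t) + (x - v) ^ 2 * 1
          - ((-1) * Qpoly z t x v + (x - v) * ((x - z) - t))) v :=
      (hw2.mul hlin).sub (hw.mul hQd)
    exact (hd2.mul hin).congr_deriv (by ring)
  have hden : HasDerivAt (fun w => (Qpoly z t x w) ^ 2)
      (2 * Qpoly z t x v ^ 1 * ((x - z) - t)) v := hQd.pow 2
  have h := hnum.div hden (pow_ne_zero 2 hQ)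
  refine h.congr_deriv ?_
  unfold Bdf
  field_simp
  ring

end Alg

noncomputable section Jpart
open Complex Metric MeasureTheory Set Filter Topology
set_option maxHeartbeats 1000000

lemma Qpoly_lower (z s a b : ℂ) :
    ‖a - z‖ * ‖b - z‖ - ‖s‖ * (‖a - z‖ + ‖b - z‖) ≤ ‖Qpoly z s a b‖ := by
  have e : Qpoly z s a b = (a - z) * (b - z) + s * (a - b) := rfl
  have h1 : ‖(a - z) * (b - z)‖ - ‖s * (a - b)‖ ≤ ‖Qpoly z s a b‖ := by
    rw [e]
    have h := norm_add_le ((a - z) * (b - z) + s * (a - b)) (-(s * (a - b)))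
    simp only [add_neg_cancel_right, norm_neg] at h
    linarith
  have h2 : ‖s * (a - b)‖ ≤ ‖s‖ * (‖a - z‖ + ‖b - z‖) := by
    rw [norm_mul]
    apply mul_le_mul_of_nonneg_left _ (norm_nonneg s)
    calc ‖a - b‖ = ‖(a - z) - (b - z)‖ := by ring_nf
      _ ≤ ‖a - z‖ + ‖b - z‖ := norm_sub_le _ _
  rw [norm_mul] at h1
  linarith

def Jint (f : ℂ × ℂ → ℂ) (z s : ℂ) (r : ℝ) (n : ℕ) : ℂ :=
  ∮ ζ₁ in C(z, r), ∮ ζ₂ in C(z, r),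
    f (ζ₁, ζ₂) * (ζ₁ - ζ₂) ^ n / (Qpoly z s ζ₁ ζ₂) ^ (n + 1)

lemma hasDerivAt_Qpoly_param (z a b x : ℂ) :
    HasDerivAt (fun y => Qpoly z y a b) (a - b) x := by
  have h : HasDerivAt (fun y : ℂ => (a - z) * (b - z) + y * (a - b)) (a - b) x := by
    simpa using (((hasDerivAt_id' x).mul_const (a - b)).const_add ((a - z) * (b - z)))
  exact h

lemma pointwise_deriv_J (P : ℂ) (z a b x : ℂ) (n : ℕ) (hQ : Qpoly z x a b ≠ 0) :
    HasDerivAt (fun y => P * (a - b) ^ n / (Qpoly z y a b) ^ (n + 1))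
      (-((n : ℂ) + 1) * (P * (a - b) ^ (n + 1) / (Qpoly z x a b) ^ (n + 2))) x := by
  have hden := (hasDerivAt_Qpoly_param z a b x).fun_pow (n + 1)
  have h := (hasDerivAt_const x (P * (a - b) ^ n)).div hden (pow_ne_zero _ hQ)
  refine h.congr_deriv ?_
  have hpow : ((Qpoly z x a b) ^ (n + 1)) ^ 2 = (Qpoly z x a b) ^ n * (Qpoly z x a b) ^ (n + 2) := by
    rw [← pow_mul, ← pow_add]; congr 1; ring
  rw [zero_mul, zero_sub, hpow, ← mul_div_assoc,
    div_eq_div_iff (mul_ne_zero (pow_ne_zero _ hQ) (pow_ne_zero _ hQ)) (pow_ne_zero _ hQ)]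
  simp only [Nat.add_sub_cancel]
  push_cast
  ring

lemma integrand_contOn (f : ℂ × ℂ → ℂ) (z x : ℂ) {r : ℝ}
    (hc : ContinuousOn f (sphere z r ×ˢ sphere z r)) (m : ℕ)
    (hQ0 : ∀ a ∈ sphere z r, ∀ b ∈ sphere z r, Qpoly z x a b ≠ 0) :
    ContinuousOn (fun q : ℂ × ℂ => f q * (q.1 - q.2) ^ m / (Qpoly z x q.1 q.2) ^ (m + 1))
      (sphere z r ×ˢ sphere z r) := by
  apply ContinuousOn.div
  · exact hc.mul (by fun_prop)
  · have : Continuous (fun q : ℂ × ℂ => Qpoly z x q.1 q.2) := by unfold Qpoly; fun_prop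
    exact (this.pow (m + 1)).continuousOn
  · rintro ⟨a, b⟩ ⟨ha, hb⟩
    exact pow_ne_zero _ (hQ0 a ha b hb)

lemma Jint_hasDerivAt (f : ℂ × ℂ → ℂ) (z : ℂ) {r : ℝ} (hr : 0 < r) (n : ℕ)
    (hc : ContinuousOn f (sphere z r ×ˢ sphere z r)) {s₀ : ℂ} (hs₀ : 2 * ‖s₀‖ < r) :
    HasDerivAt (fun s => Jint f z s r n) (-((n : ℂ) + 1) * Jint f z s₀ r (n + 1)) s₀ := by
  obtain ⟨M, hM⟩ := (isCompact_sphere z r |>.prod (isCompact_sphere z r)).exists_bound_of_continuousOn hc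
  have hM0 : 0 ≤ M := le_trans (norm_nonneg _) (hM (circleMap z r 0, circleMap z r 0)
    ⟨circleMap_mem_sphere z hr.le 0, circleMap_mem_sphere z hr.le 0⟩)
  set ε := (r - 2 * ‖s₀‖) / 4 with hε_def
  have hε : 0 < ε := by rw [hε_def]; linarith
  set q₀ := r * (r - 2 * ‖s₀‖) / 2 with hq₀_def
  have hq₀ : 0 < q₀ := by rw [hq₀_def]; nlinarith
  -- Q lower bound on the torus for parameters in the ball
  have hQb : ∀ x ∈ ball s₀ ε, ∀ a ∈ sphere z r, ∀ b ∈ sphere z r,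
      q₀ ≤ ‖Qpoly z x a b‖ := by
    intro x hx a ha b hb
    have hxn : ‖x‖ ≤ ‖s₀‖ + ε := by
      calc ‖x‖ = ‖s₀ + (x - s₀)‖ := by ring_nf
        _ ≤ ‖s₀‖ + ‖x - s₀‖ := norm_add_le _ _
        _ ≤ ‖s₀‖ + ε := by
            have := mem_ball_iff_norm.1 hx; linarith
    have hlow := Qpoly_lower z x a b
    rw [mem_sphere_iff_norm] at ha hb
    rw [ha, hb] at hlow
    have hxnn : (0:ℝ) ≤ ‖x‖ := norm_nonneg x
    nlinarith
  have hQ0 : ∀ x ∈ ball s₀ ε, ∀ a ∈ sphere z r, ∀ b ∈ sphere z r, Qpoly z x a b ≠ 0 := by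
    intro x hx a ha b hb h0
    have := hQb x hx a ha b hb
    rw [h0, norm_zero] at this; linarith
  have hw2r : ∀ a ∈ sphere z r, ∀ b ∈ sphere z r, ‖a - b‖ ≤ 2 * r := by
    intro a ha b hb
    rw [mem_sphere_iff_norm] at ha hb
    calc ‖a - b‖ = ‖(a - z) - (b - z)‖ := by ring_nf
      _ ≤ ‖a - z‖ + ‖b - z‖ := norm_sub_le _ _
      _ = 2 * r := by rw [ha, hb]; ring
  -- uniform bound for the differentiated inner integrand
  set Cin := ((n : ℝ) + 1) * (M * (2 * r) ^ (n + 1) / q₀ ^ (n + 2)) with hCin_def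
  have hbound : ∀ x ∈ ball s₀ ε, ∀ a ∈ sphere z r, ∀ b ∈ sphere z r,
      ‖-((n : ℂ) + 1) * (f (a, b) * (a - b) ^ (n + 1) / (Qpoly z x a b) ^ (n + 2))‖ ≤ Cin := by
    intro x hx a ha b hb
    rw [norm_mul, norm_div, norm_mul, norm_pow, norm_pow]
    have h1 : ‖-((n : ℂ) + 1)‖ = (n : ℝ) + 1 := by
      rw [norm_neg]
      norm_cast
    rw [h1, hCin_def]
    apply mul_le_mul_of_nonneg_left _ (by positivity)
    apply div_le_div₀ (by positivity)
    · apply mul_le_mul (hM (a,b) ⟨ha, hb⟩) (pow_le_pow_left₀ (norm_nonneg _) (hw2r a ha b hb) _)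
        (by positivity) hM0
    · positivity
    · exact pow_le_pow_left₀ hq₀.le (hQb x hx a ha b hb) _
  -- inner derivative
  have hinner : ∀ x ∈ ball s₀ ε, ∀ a ∈ sphere z r,
      HasDerivAt (fun y => ∮ ζ₂ in C(z, r), f (a, ζ₂) * (a - ζ₂) ^ n / (Qpoly z y a ζ₂) ^ (n + 1))
        (∮ ζ₂ in C(z, r),
          -((n : ℂ) + 1) * (f (a, ζ₂) * (a - ζ₂) ^ (n + 1) / (Qpoly z x a ζ₂) ^ (n + 2))) x := by
    intro x hx a ha
    have hε' : 0 < ε - dist x s₀ := by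
      rw [sub_pos]; exact mem_ball.1 hx
    have hsub : ball x (ε - dist x s₀) ⊆ ball s₀ ε := by
      intro u hu
      rw [mem_ball] at hu ⊢
      calc dist u s₀ ≤ dist u x + dist x s₀ := dist_triangle u x s₀
        _ < (ε - dist x s₀) + dist x s₀ := by linarith
        _ = ε := by ring
    apply hasDerivAt_circleIntegral (g := fun y ζ₂ => f (a, ζ₂) * (a - ζ₂) ^ n / (Qpoly z y a ζ₂) ^ (n + 1))
      (g' := fun y ζ₂ => -((n : ℂ) + 1) * (f (a, ζ₂) * (a - ζ₂) ^ (n + 1) / (Qpoly z y a ζ₂) ^ (n + 2)))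
      hr.le hε'
    · intro y hy
      apply ContinuousOn.circleIntegrable hr.le
      have hmap : ContinuousOn (fun ζ₂ : ℂ => (a, ζ₂)) (sphere z r) := by fun_prop
      have hcomp : ContinuousOn
          (fun ζ₂ : ℂ => f (a, ζ₂) * (a - ζ₂) ^ n / Qpoly z y a ζ₂ ^ (n + 1))
          (sphere z r) :=
        (integrand_contOn f z y hc n (hQ0 y (hsub hy))).comp hmap
          (fun ζ₂ hζ₂ => ⟨ha, hζ₂⟩)
      exact hcomp
    · apply ContinuousOn.circleIntegrable hr.le
      have hmap : ContinuousOn (fun ζ₂ : ℂ => (a, ζ₂)) (sphere z r) := by fun_prop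
      have hcomp : ContinuousOn
          (fun ζ₂ : ℂ => f (a, ζ₂) * (a - ζ₂) ^ (n + 1) / Qpoly z x a ζ₂ ^ (n + 2))
          (sphere z r) :=
        (integrand_contOn f z x hc (n + 1) (hQ0 x (hsub (mem_ball_self hε')))).comp hmap
          (fun ζ₂ hζ₂ => ⟨ha, hζ₂⟩)
      exact continuousOn_const.mul hcomp
    · intro ζ₂ hζ₂ y hy
      exact hbound y (hsub hy) a ha ζ₂ hζ₂
    · intro ζ₂ hζ₂ y hy
      exact pointwise_deriv_J (f (a, ζ₂)) z a ζ₂ y n (hQ0 y (hsub hy) a ha ζ₂ hζ₂)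
  -- outer application
  have houter : HasDerivAt
      (fun x => ∮ ζ₁ in C(z, r), ∮ ζ₂ in C(z, r),
        f (ζ₁, ζ₂) * (ζ₁ - ζ₂) ^ n / (Qpoly z x ζ₁ ζ₂) ^ (n + 1))
      (∮ ζ₁ in C(z, r), ∮ ζ₂ in C(z, r),
        -((n : ℂ) + 1) * (f (ζ₁, ζ₂) * (ζ₁ - ζ₂) ^ (n + 1) / (Qpoly z s₀ ζ₁ ζ₂) ^ (n + 2))) s₀ := by
    apply hasDerivAt_circleIntegral
      (g := fun x ζ₁ => ∮ ζ₂ in C(z, r), f (ζ₁, ζ₂) * (ζ₁ - ζ₂) ^ n / (Qpoly z x ζ₁ ζ₂) ^ (n + 1))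
      (g' := fun x ζ₁ => ∮ ζ₂ in C(z, r),
        -((n : ℂ) + 1) * (f (ζ₁, ζ₂) * (ζ₁ - ζ₂) ^ (n + 1) / (Qpoly z x ζ₁ ζ₂) ^ (n + 2)))
      hr.le hε
    · intro x hx
      apply ContinuousOn.circleIntegrable hr.le
      apply continuousOn_circleIntegral_fixed hr.le
      exact (integrand_contOn f z x hc n (hQ0 x hx)).comp (by fun_prop)
        (fun q hq => ⟨hq.1, hq.2⟩)
    · apply ContinuousOn.circleIntegrable hr.le
      apply continuousOn_circleIntegral_fixed hr.le
      have hbase : ContinuousOn (fun q : ℂ × ℂ =>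
          f q * (q.1 - q.2) ^ (n + 1) / (Qpoly z s₀ q.1 q.2) ^ (n + 2))
          (sphere z r ×ˢ sphere z r) :=
        integrand_contOn f z s₀ hc (n + 1) (hQ0 s₀ (mem_ball_self hε))
      have hjoint : ContinuousOn (fun q : ℂ × ℂ =>
          -((n : ℂ) + 1) * (f q * (q.1 - q.2) ^ (n + 1) / (Qpoly z s₀ q.1 q.2) ^ (n + 2)))
          (sphere z r ×ˢ sphere z r) := continuousOn_const.mul hbase
      exact hjoint.comp (by fun_prop) (fun q hq => ⟨hq.1, hq.2⟩)
    · intro ζ₁ hζ₁ x hx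
      apply circleIntegral.norm_integral_le_of_norm_le_const hr.le
      intro ζ₂ hζ₂
      exact hbound x hx ζ₁ hζ₁ ζ₂ hζ₂
    · intro ζ₁ hζ₁ x hx
      exact hinner x hx ζ₁ hζ₁
  have heq : (∮ ζ₁ in C(z, r), ∮ ζ₂ in C(z, r),
      -((n : ℂ) + 1) * (f (ζ₁, ζ₂) * (ζ₁ - ζ₂) ^ (n + 1) / (Qpoly z s₀ ζ₁ ζ₂) ^ (n + 2)))
      = -((n : ℂ) + 1) * Jint f z s₀ r (n + 1) := by
    unfold Jint
    rw [← circleIntegral.integral_const_mul]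
    congr 1
    funext ζ₁
    rw [← circleIntegral.integral_const_mul]
  rw [heq] at houter
  exact houter

end Jpart

noncomputable section LHS1
open Complex Metric MeasureTheory Set Filter Topology
set_option maxHeartbeats 1000000

lemma circleIntegral_add {f g : ℂ → ℂ} {c : ℂ} {R : ℝ}
    (hf : CircleIntegrable f c R) (hg : CircleIntegrable g c R) :
    (∮ w in C(c, R), (f w + g w)) = (∮ w in C(c, R), f w) + ∮ w in C(c, R), g w := by
  have h := circleIntegral.integral_sub hf hg.neg
  simp only [Pi.neg_apply, sub_neg_eq_add] at h
  have hneg : (∮ w in C(c, R), -g w) = - ∮ w in C(c, R), g w := by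
    simpa using circleIntegral.integral_const_mul (-1) g c R
  rw [h, hneg]
  ring

lemma contOn_slice {g : ℂ × ℂ → ℂ} {S : Set (ℂ × ℂ)} (hg : ContinuousOn g S) {x : ℂ}
    {T : Set ℂ} (hT : ∀ v ∈ T, (x, v) ∈ S) : ContinuousOn (fun v => g (x, v)) T := by
  have : (fun v => g (x, v)) = g ∘ (fun v => (x, v)) := rfl
  rw [this]
  exact hg.comp (by fun_prop) hT

lemma contOn_Qpoly (z t : ℂ) : Continuous (fun q : ℂ × ℂ => Qpoly z t q.1 q.2) := by
  unfold Qpoly; fun_prop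

variable {f : ℂ × ℂ → ℂ} {z t : ℂ}

lemma contOn_Af {W : Set (ℂ × ℂ)}
    (h2 : ContinuousOn (pd2 f) W) (hfc : ContinuousOn f W)
    (hQ : ∀ q ∈ W, Qpoly z t q.1 q.2 ≠ 0) :
    ContinuousOn (fun q : ℂ × ℂ => Af f z t q.1 q.2) W := by
  unfold Af
  apply ContinuousOn.div _ ((contOn_Qpoly z t).continuousOn) hQ
  have h2' : ContinuousOn (fun q : ℂ × ℂ => pd2 f (q.1, q.2)) W := h2
  have hfc' : ContinuousOn (fun q : ℂ × ℂ => f (q.1, q.2)) W := hfc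
  exact ((by fun_prop : ContinuousOn (fun q : ℂ × ℂ => (q.1 - q.2) ^ 2) W).mul h2').sub
    ((by fun_prop : ContinuousOn (fun q : ℂ × ℂ => q.1 - q.2) W).mul hfc')

lemma contOn_Adf {W : Set (ℂ × ℂ)}
    (h1 : ContinuousOn (pd1 f) W) (h2 : ContinuousOn (pd2 f) W)
    (h12 : ContinuousOn (pd1 (pd2 f)) W) (hfc : ContinuousOn f W)
    (hQ : ∀ q ∈ W, Qpoly z t q.1 q.2 ≠ 0) :
    ContinuousOn (fun q : ℂ × ℂ => Adf f z t q.1 q.2) W := by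
  unfold Adf
  have h1' : ContinuousOn (fun q : ℂ × ℂ => pd1 f (q.1, q.2)) W := h1
  have h2' : ContinuousOn (fun q : ℂ × ℂ => pd2 f (q.1, q.2)) W := h2
  have h12' : ContinuousOn (fun q : ℂ × ℂ => pd1 (pd2 f) (q.1, q.2)) W := h12
  have hfc' : ContinuousOn (fun q : ℂ × ℂ => f (q.1, q.2)) W := hfc
  have hQc := (contOn_Qpoly z t).continuousOn (s := W)
  apply ContinuousOn.sub
  · apply ContinuousOn.div _ hQc hQ
    exact (((by fun_prop : ContinuousOn (fun q : ℂ × ℂ => 2 * (q.1 - q.2)) W).mul h2').add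
      ((by fun_prop : ContinuousOn (fun q : ℂ × ℂ => (q.1 - q.2) ^ 2) W).mul h12')).sub
      hfc' |>.sub ((by fun_prop : ContinuousOn (fun q : ℂ × ℂ => q.1 - q.2) W).mul h1')
  · apply ContinuousOn.div _ (hQc.pow 2) (fun q hq => pow_ne_zero 2 (hQ q hq))
    exact (((by fun_prop : ContinuousOn (fun q : ℂ × ℂ => (q.1 - q.2) ^ 2) W).mul h2').sub
      ((by fun_prop : ContinuousOn (fun q : ℂ × ℂ => q.1 - q.2) W).mul hfc')).mul
      (by fun_prop : ContinuousOn (fun q : ℂ × ℂ => q.2 - z + t) W)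

lemma contOn_Bdf {W : Set (ℂ × ℂ)}
    (h2 : ContinuousOn (pd2 f) W) (hfc : ContinuousOn f W)
    (hQ : ∀ q ∈ W, Qpoly z t q.1 q.2 ≠ 0) :
    ContinuousOn (fun q : ℂ × ℂ => Bdf f z t q.1 q.2) W := by
  unfold Bdf
  have h2' : ContinuousOn (fun q : ℂ × ℂ => pd2 f (q.1, q.2)) W := h2
  have hfc' : ContinuousOn (fun q : ℂ × ℂ => f (q.1, q.2)) W := hfc
  have hQc := (contOn_Qpoly z t).continuousOn (s := W)
  apply ContinuousOn.add
  · apply ContinuousOn.div _ (hQc.pow 2) (fun q hq => pow_ne_zero 2 (hQ q hq))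
    exact h2'.mul (((by fun_prop : ContinuousOn (fun q : ℂ × ℂ => (q.1 - q.2) ^ 2) W).mul
        (by fun_prop : ContinuousOn (fun q : ℂ × ℂ => q.2 - z + t) W)).sub
      ((by fun_prop : ContinuousOn (fun q : ℂ × ℂ => q.1 - q.2) W).mul hQc))
  · apply ContinuousOn.div _ (hQc.pow 3) (fun q hq => pow_ne_zero 3 (hQ q hq))
    apply hfc'.mul
    apply ContinuousOn.sub
    · exact ((((by fun_prop : ContinuousOn (fun q : ℂ × ℂ => (-2 : ℂ) * (q.1 - q.2)) W).mul
        (by fun_prop : ContinuousOn (fun q : ℂ × ℂ => q.2 - z + t) W)).add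
        (by fun_prop : ContinuousOn (fun q : ℂ × ℂ => (q.1 - q.2) ^ 2) W)).add hQc |>.sub
        ((by fun_prop : ContinuousOn (fun q : ℂ × ℂ => q.1 - q.2) W).mul
          (by fun_prop : ContinuousOn (fun q : ℂ × ℂ => q.1 - z - t) W))).mul hQc
    · exact ((((by fun_prop : ContinuousOn (fun q : ℂ × ℂ => (q.1 - q.2) ^ 2) W).mul
        (by fun_prop : ContinuousOn (fun q : ℂ × ℂ => q.2 - z + t) W)).sub
        ((by fun_prop : ContinuousOn (fun q : ℂ × ℂ => q.1 - q.2) W).mul hQc)).mul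
        continuousOn_const).mul
        (by fun_prop : ContinuousOn (fun q : ℂ × ℂ => q.1 - z - t) W)

lemma contOn_fK {W : Set (ℂ × ℂ)} (hfc : ContinuousOn f W)
    (hQ : ∀ q ∈ W, Qpoly z t q.1 q.2 ≠ 0) :
    ContinuousOn (fun q : ℂ × ℂ => f q * Kf z t q.1 q.2) W := by
  unfold Kf
  have hQc := (contOn_Qpoly z t).continuousOn (s := W)
  apply hfc.mul
  apply ContinuousOn.sub
  · exact ContinuousOn.div (by fun_prop) (hQc.pow 2) (fun q hq => pow_ne_zero 2 (hQ q hq))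
  · exact ContinuousOn.div (by fun_prop) (hQc.pow 3) (fun q hq => pow_ne_zero 3 (hQ q hq))

end LHS1

noncomputable section LHS2
open Complex Metric MeasureTheory Set Filter Topology
set_option maxHeartbeats 2000000

lemma CircleIntegrable.constMul {g : ℂ → ℂ} {c : ℂ} {R : ℝ}
    (hg : CircleIntegrable g c R) (a : ℂ) :
    CircleIntegrable (fun v => a * g v) c R := by
  unfold CircleIntegrable at *
  exact hg.const_mul a

lemma lhs_eq {f : ℂ × ℂ → ℂ} {U : Set (ℂ × ℂ)} (hU : IsOpen U) (hf : DifferentiableOn ℂ f U)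
    {z t : ℂ} {r R : ℝ} (hr0 : 0 < r) (ht : 2 * ‖t‖ < r) (hrR : r < R)
    (hsub : closedBall z R ×ˢ closedBall z R ⊆ U) :
    (∮ ζ₁ in C(z, r), ∮ ζ₂ in C(z, r), Pop f (ζ₁, ζ₂) / Qpoly z t ζ₁ ζ₂)
      = 2 * t * Jint f z t r 1 - 2 * t ^ 2 * Jint f z t r 2 := by
  have htn : 0 ≤ ‖t‖ := norm_nonneg t
  set ρ := (R - r) / 4 with hρ_def
  have hρ : 0 < ρ := by rw [hρ_def]; linarith
  set b' := r + 2 * ρ with hb'_def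
  set c' := r + 3 * ρ with hc'_def
  have hbc : b' + ρ = c' := by rw [hb'_def, hc'_def]; ring
  have hcR : c' + ρ = R := by rw [hc'_def, hρ_def]; ring
  have hrb : r < b' := by rw [hb'_def]; linarith
  have hbc' : b' < c' := by rw [hb'_def, hc'_def]; linarith
  have hc'R : c' < R := by rw [hc'_def, hρ_def]; linarith
  have hsubc : closedBall z (c' + ρ) ×ˢ closedBall z (c' + ρ) ⊆ U := by rw [hcR]; exact hsub
  have hc₁ : ContinuousOn (pd1 f) (closedBall z c' ×ˢ closedBall z c') :=
    pd1_contOn hU hf hρ hsubc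
  have hc₂ : ContinuousOn (pd2 f) (closedBall z c' ×ˢ closedBall z c') :=
    pd2_contOn hU hf hρ hsubc
  obtain ⟨M₁, hM₁⟩ := ((isCompact_closedBall z c').prod
    (isCompact_closedBall z c')).exists_bound_of_continuousOn hc₁
  have hsubb : closedBall z (b' + ρ) ×ˢ closedBall z (b' + ρ) ⊆ U := by
    rw [hbc]
    exact (Set.prod_mono (closedBall_subset_closedBall hc'R.le)
      (closedBall_subset_closedBall hc'R.le)).trans hsub
  have hc₁b : ContinuousOn (pd1 f) (closedBall z (b' + ρ) ×ˢ closedBall z (b' + ρ)) := by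
    rw [hbc]; exact hc₁
  have hM₁b : ∀ q ∈ closedBall z (b' + ρ) ×ˢ closedBall z (b' + ρ), ‖pd1 f q‖ ≤ M₁ := by
    rw [hbc]; exact hM₁
  have hder12 : ∀ x ∈ closedBall z b', ∀ v ∈ closedBall z b',
      HasDerivAt (fun y => pd2 f (y, v)) (pd1 (pd2 f) (x, v)) x := fun x hx v hv =>
    (pd2_deriv_fst hU hf hρ hx hv hsubb hc₁b hM₁b).1
  have hc₁₂ : ContinuousOn (pd1 (pd2 f)) (closedBall z b' ×ˢ closedBall z b') :=
    pd12_contOn hU hf hρ hsubb hc₁b hM₁b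
  have hfc : ContinuousOn f (closedBall z R ×ˢ closedBall z R) := hf.continuousOn.mono hsub
  -- annulus and Q bounds
  set δ := min ρ ((r - 2 * ‖t‖) / 2) with hδ_def
  have hδ : 0 < δ := lt_min hρ (by linarith)
  have hδρ : δ ≤ ρ := min_le_left _ _
  have hδE : δ ≤ (r - 2 * ‖t‖) / 2 := min_le_right _ _
  have hQann : ∀ x v : ℂ, r - δ ≤ ‖x - z‖ → ‖x - z‖ ≤ r + δ → v ∈ sphere z r →
      Qpoly z t x v ≠ 0 := by
    intro x v h1 h2 hv
    have hlow := Qpoly_lower z t x v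
    rw [mem_sphere_iff_norm] at hv
    rw [hv] at hlow
    have hpos : 0 < r * (r - 2 * ‖t‖) / 2 := by nlinarith
    have hkey : r * (r - 2 * ‖t‖) / 2 ≤ ‖x - z‖ * r - ‖t‖ * (‖x - z‖ + r) := by nlinarith
    intro h0
    rw [h0, norm_zero] at hlow
    linarith
  have hQsph : ∀ a ∈ sphere z r, ∀ b ∈ sphere z r, Qpoly z t a b ≠ 0 := by
    intro a ha b hb
    rw [mem_sphere_iff_norm] at ha
    exact hQann a b (by rw [ha]; linarith) (by rw [ha]; linarith) hb
  have hsphb : sphere z r ⊆ closedBall z b' :=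
    sphere_subset_closedBall.trans (closedBall_subset_closedBall hrb.le)
  have hsphc : sphere z r ⊆ closedBall z c' :=
    sphere_subset_closedBall.trans (closedBall_subset_closedBall (by linarith))
  have hsphR : sphere z r ⊆ closedBall z R :=
    sphere_subset_closedBall.trans (closedBall_subset_closedBall (by linarith))
  have hUsph : ∀ a ∈ sphere z r, ∀ b ∈ sphere z r, (a, b) ∈ U := fun a ha b hb =>
    hsub (Set.mk_mem_prod (hsphR ha) (hsphR hb))
  -- annulus set
  set Ann := {x : ℂ | r - δ ≤ ‖x - z‖ ∧ ‖x - z‖ ≤ r + δ} with hAnn_def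
  have hnorm_cont : Continuous fun x : ℂ => ‖x - z‖ := (continuous_id.sub continuous_const).norm
  have hAnn_closed : IsClosed Ann := by
    have : Ann = {x : ℂ | r - δ ≤ ‖x - z‖} ∩ {x : ℂ | ‖x - z‖ ≤ r + δ} := rfl
    rw [this]
    exact (isClosed_le continuous_const hnorm_cont).inter
      (isClosed_le hnorm_cont continuous_const)
  have hAnn_compact : IsCompact Ann := by
    apply (isCompact_closedBall z (r + δ)).of_isClosed_subset hAnn_closed
    intro x hx
    exact mem_closedBall_iff_norm.2 hx.2
  have hAnn_b : Ann ⊆ closedBall z b' := by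
    intro x hx
    apply mem_closedBall_iff_norm.2
    have := hx.2
    have : ‖x - z‖ ≤ r + δ := hx.2
    rw [hb'_def]
    linarith [hδρ]
  have hAnn_c : Ann ⊆ closedBall z c' := hAnn_b.trans
    (closedBall_subset_closedBall hbc'.le)
  have hAnn_R : Ann ⊆ closedBall z R := hAnn_c.trans
    (closedBall_subset_closedBall hc'R.le)
  have hsph_Ann : sphere z r ⊆ Ann := by
    intro x hx
    rw [mem_sphere_iff_norm] at hx
    exact ⟨by rw [hx]; linarith, by rw [hx]; linarith⟩
  have hball_Ann : ∀ ζ₁ ∈ sphere z r, ball ζ₁ δ ⊆ Ann := by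
    intro ζ₁ hζ₁ x hx
    rw [mem_sphere_iff_norm] at hζ₁
    rw [mem_ball, dist_eq_norm] at hx
    constructor
    · calc r - δ = ‖ζ₁ - z‖ - δ := by rw [hζ₁]
        _ ≤ ‖x - z‖ := by
            have := norm_sub_le (ζ₁ - x) (z - x)
            have h2 : ‖ζ₁ - z‖ ≤ ‖ζ₁ - x‖ + ‖x - z‖ := by
              calc ‖ζ₁ - z‖ = ‖(ζ₁ - x) + (x - z)‖ := by ring_nf
                _ ≤ ‖ζ₁ - x‖ + ‖x - z‖ := norm_add_le _ _
            have h3 : ‖ζ₁ - x‖ = ‖x - ζ₁‖ := norm_sub_rev _ _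
            linarith
    · calc ‖x - z‖ = ‖(x - ζ₁) + (ζ₁ - z)‖ := by ring_nf
        _ ≤ ‖x - ζ₁‖ + ‖ζ₁ - z‖ := norm_add_le _ _
        _ ≤ δ + r := by rw [hζ₁]; linarith
        _ = r + δ := by ring
  have hQAnn : ∀ q : ℂ × ℂ, q ∈ Ann ×ˢ sphere z r → Qpoly z t q.1 q.2 ≠ 0 := by
    rintro ⟨x, v⟩ ⟨hx, hv⟩
    exact hQann x v hx.1 hx.2 hv
  have hQsph' : ∀ q : ℂ × ℂ, q ∈ sphere z r ×ˢ sphere z r → Qpoly z t q.1 q.2 ≠ 0 := by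
    rintro ⟨a, b⟩ ⟨ha, hb⟩
    exact hQsph a ha b hb
  have hsub_prod : Ann ×ˢ sphere z r ⊆ closedBall z b' ×ˢ closedBall z b' :=
    Set.prod_mono hAnn_b hsphb
  have hsub_prod_c : Ann ×ˢ sphere z r ⊆ closedBall z c' ×ˢ closedBall z c' :=
    Set.prod_mono hAnn_c hsphc
  have hsub_sph : sphere z r ×ˢ sphere z r ⊆ closedBall z b' ×ˢ closedBall z b' :=
    Set.prod_mono hsphb hsphb
  have hsub_sph_c : sphere z r ×ˢ sphere z r ⊆ closedBall z c' ×ˢ closedBall z c' :=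
    Set.prod_mono hsphc hsphc
  have hfc_sph : ContinuousOn f (sphere z r ×ˢ sphere z r) :=
    hfc.mono (Set.prod_mono hsphR hsphR)
  -- continuity of Adf on annulus × sphere, with bound
  have hcont_Adf : ContinuousOn (fun q : ℂ × ℂ => Adf f z t q.1 q.2) (Ann ×ˢ sphere z r) :=
    contOn_Adf (hc₁.mono hsub_prod_c) (hc₂.mono hsub_prod_c)
      (hc₁₂.mono hsub_prod) (hfc.mono (Set.prod_mono hAnn_R hsphR)) hQAnn
  obtain ⟨CA, hCA⟩ := (hAnn_compact.prod (isCompact_sphere z r)).exists_bound_of_continuousOn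
    hcont_Adf
  -- inner circle integrability of Adf, fK, Bdf
  have iA : ∀ ζ₁ ∈ sphere z r, CircleIntegrable (fun v => Adf f z t ζ₁ v) z r := by
    intro ζ₁ hζ₁
    apply ContinuousOn.circleIntegrable hr0.le
    exact contOn_slice hcont_Adf (fun v hv => Set.mk_mem_prod (hsph_Ann hζ₁) hv)
  have hcont_fK : ContinuousOn (fun q : ℂ × ℂ => f q * Kf z t q.1 q.2)
      (sphere z r ×ˢ sphere z r) := contOn_fK hfc_sph hQsph'
  have iK : ∀ ζ₁ ∈ sphere z r, CircleIntegrable (fun v => f (ζ₁, v) * Kf z t ζ₁ v) z r := by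
    intro ζ₁ hζ₁
    apply ContinuousOn.circleIntegrable hr0.le
    exact contOn_slice hcont_fK (fun v hv => Set.mk_mem_prod hζ₁ hv)
  have hcont_Bdf : ContinuousOn (fun q : ℂ × ℂ => Bdf f z t q.1 q.2)
      (sphere z r ×ˢ sphere z r) :=
    contOn_Bdf (hc₂.mono hsub_sph_c) (hfc.mono (Set.prod_mono hsphR hsphR)) hQsph'
  have iB : ∀ ζ₁ ∈ sphere z r, CircleIntegrable (fun v => Bdf f z t ζ₁ v) z r := by
    intro ζ₁ hζ₁
    apply ContinuousOn.circleIntegrable hr0.le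
    exact contOn_slice hcont_Bdf (fun v hv => Set.mk_mem_prod hζ₁ hv)
  -- Step A : inner identity
  have stepA : ∀ ζ₁ ∈ sphere z r,
      (∮ ζ₂ in C(z, r), Pop f (ζ₁, ζ₂) / Qpoly z t ζ₁ ζ₂)
        = (∮ ζ₂ in C(z, r), Adf f z t ζ₁ ζ₂)
          + ∮ ζ₂ in C(z, r), f (ζ₁, ζ₂) * Kf z t ζ₁ ζ₂ := by
    intro ζ₁ hζ₁
    have hcongr : Set.EqOn (fun v => Pop f (ζ₁, v) / Qpoly z t ζ₁ v)
        (fun v => Adf f z t ζ₁ v + Bdf f z t ζ₁ v + f (ζ₁, v) * Kf z t ζ₁ v)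
        (sphere z r) := fun v hv => key_identity f (hQsph ζ₁ hζ₁ v hv)
    rw [circleIntegral.integral_congr hr0.le hcongr,
      circleIntegral_add (f := fun v => Adf f z t ζ₁ v + Bdf f z t ζ₁ v)
        (g := fun v => f (ζ₁, v) * Kf z t ζ₁ v) ((iA ζ₁ hζ₁).add (iB ζ₁ hζ₁)) (iK ζ₁ hζ₁),
      circleIntegral_add (f := fun v => Adf f z t ζ₁ v) (g := fun v => Bdf f z t ζ₁ v)
        (iA ζ₁ hζ₁) (iB ζ₁ hζ₁)]
    have hB0 : (∮ ζ₂ in C(z, r), Bdf f z t ζ₁ ζ₂) = 0 := by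
      apply circleIntegral.integral_eq_zero_of_hasDerivWithinAt hr0.le
        (f := fun w => Bf f z t ζ₁ w)
      intro v hv
      exact (hasDerivAt_B f (hQsph ζ₁ hζ₁ v hv)
        (hasDerivAt_pd2 hU hf (hUsph ζ₁ hζ₁ v hv))).hasDerivWithinAt
    rw [hB0]
    ring
  -- outer integrability
  have oA : CircleIntegrable (fun ζ₁ => ∮ ζ₂ in C(z, r), Adf f z t ζ₁ ζ₂) z r := by
    apply ContinuousOn.circleIntegrable hr0.le
    apply continuousOn_circleIntegral_fixed hr0.le
    exact hcont_Adf.mono (Set.prod_mono hsph_Ann (subset_refl _))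
  have oK : CircleIntegrable (fun ζ₁ => ∮ ζ₂ in C(z, r), f (ζ₁, ζ₂) * Kf z t ζ₁ ζ₂) z r := by
    apply ContinuousOn.circleIntegrable hr0.le
    exact continuousOn_circleIntegral_fixed hr0.le hcont_fK
  -- the A part vanishes
  have hΦ : ∀ ζ₁ ∈ sphere z r,
      HasDerivAt (fun x => ∮ ζ₂ in C(z, r), Af f z t x ζ₂)
        (∮ ζ₂ in C(z, r), Adf f z t ζ₁ ζ₂) ζ₁ := by
    intro ζ₁ hζ₁
    apply hasDerivAt_circleIntegral (g := fun x v => Af f z t x v)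
      (g' := fun x v => Adf f z t x v) hr0.le hδ (C := CA)
    · intro x hx
      apply ContinuousOn.circleIntegrable hr0.le
      have hxAnn : x ∈ Ann := hball_Ann ζ₁ hζ₁ hx
      have hcA : ContinuousOn (fun q : ℂ × ℂ => Af f z t q.1 q.2) (Ann ×ˢ sphere z r) :=
        contOn_Af (hc₂.mono hsub_prod_c) (hfc.mono (Set.prod_mono hAnn_R hsphR)) hQAnn
      exact contOn_slice hcA (fun v hv => Set.mk_mem_prod hxAnn hv)
    · exact iA ζ₁ hζ₁
    · intro v hv x hx
      exact hCA (x, v) (Set.mk_mem_prod (hball_Ann ζ₁ hζ₁ hx) hv)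
    · intro v hv x hx
      have hxAnn : x ∈ Ann := hball_Ann ζ₁ hζ₁ hx
      apply hasDerivAt_A f (hQann x v hxAnn.1 hxAnn.2 hv)
      · exact hasDerivAt_pd1 hU hf (hsub (Set.mk_mem_prod (hAnn_R hxAnn) (hsphR hv)))
      · exact hder12 x (hAnn_b hxAnn) v (hsphb hv)
  have hA0 : (∮ ζ₁ in C(z, r), ∮ ζ₂ in C(z, r), Adf f z t ζ₁ ζ₂) = 0 := by
    apply circleIntegral.integral_eq_zero_of_hasDerivWithinAt hr0.le
      (f := fun x => ∮ ζ₂ in C(z, r), Af f z t x ζ₂)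
    exact fun ζ₁ hζ₁ => (hΦ ζ₁ hζ₁).hasDerivWithinAt
  -- K part rewriting
  have innerint : ∀ m : ℕ, ∀ ζ₁ ∈ sphere z r,
      CircleIntegrable (fun v => f (ζ₁, v) * (ζ₁ - v) ^ m / Qpoly z t ζ₁ v ^ (m + 1)) z r := by
    intro m ζ₁ hζ₁
    apply ContinuousOn.circleIntegrable hr0.le
    exact contOn_slice (integrand_contOn f z t hfc_sph m hQsph)
      (fun v hv => Set.mk_mem_prod hζ₁ hv)
  have stepC : ∀ ζ₁ ∈ sphere z r,
      (∮ ζ₂ in C(z, r), f (ζ₁, ζ₂) * Kf z t ζ₁ ζ₂)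
        = 2 * t * (∮ ζ₂ in C(z, r), f (ζ₁, ζ₂) * (ζ₁ - ζ₂) ^ 1 / Qpoly z t ζ₁ ζ₂ ^ (1 + 1))
          - 2 * t ^ 2 *
            ∮ ζ₂ in C(z, r), f (ζ₁, ζ₂) * (ζ₁ - ζ₂) ^ 2 / Qpoly z t ζ₁ ζ₂ ^ (2 + 1) := by
    intro ζ₁ hζ₁
    have hfun : (fun v => f (ζ₁, v) * Kf z t ζ₁ v)
        = fun v => 2 * t * (f (ζ₁, v) * (ζ₁ - v) ^ 1 / Qpoly z t ζ₁ v ^ (1 + 1))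
          - 2 * t ^ 2 * (f (ζ₁, v) * (ζ₁ - v) ^ 2 / Qpoly z t ζ₁ v ^ (2 + 1)) := by
      funext v
      unfold Kf
      norm_num
      ring
    rw [hfun, circleIntegral.integral_sub
      ((innerint 1 ζ₁ hζ₁).constMul (2 * t)) ((innerint 2 ζ₁ hζ₁).constMul (2 * t ^ 2)),
      circleIntegral.integral_const_mul, circleIntegral.integral_const_mul]
  -- outer K computation
  have outK : (∮ ζ₁ in C(z, r), ∮ ζ₂ in C(z, r), f (ζ₁, ζ₂) * Kf z t ζ₁ ζ₂)
      = 2 * t * Jint f z t r 1 - 2 * t ^ 2 * Jint f z t r 2 := by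
    rw [circleIntegral.integral_congr hr0.le (fun ζ₁ hζ₁ => stepC ζ₁ hζ₁)]
    have o1 : CircleIntegrable (fun ζ₁ => 2 * t *
        ∮ ζ₂ in C(z, r), f (ζ₁, ζ₂) * (ζ₁ - ζ₂) ^ 1 / Qpoly z t ζ₁ ζ₂ ^ (1 + 1)) z r := by
      apply ContinuousOn.circleIntegrable hr0.le
      apply ContinuousOn.mul continuousOn_const
      exact continuousOn_circleIntegral_fixed hr0.le
        ((integrand_contOn f z t hfc_sph 1 hQsph).mono (subset_refl _))
    have o2 : CircleIntegrable (fun ζ₁ => 2 * t ^ 2 *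
        ∮ ζ₂ in C(z, r), f (ζ₁, ζ₂) * (ζ₁ - ζ₂) ^ 2 / Qpoly z t ζ₁ ζ₂ ^ (2 + 1)) z r := by
      apply ContinuousOn.circleIntegrable hr0.le
      apply ContinuousOn.mul continuousOn_const
      exact continuousOn_circleIntegral_fixed hr0.le
        ((integrand_contOn f z t hfc_sph 2 hQsph).mono (subset_refl _))
    rw [circleIntegral.integral_sub o1 o2,
      circleIntegral.integral_const_mul, circleIntegral.integral_const_mul]
    simp only [Jint]
  -- final assembly
  rw [circleIntegral.integral_congr hr0.le (fun ζ₁ hζ₁ => stepA ζ₁ hζ₁),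
    circleIntegral_add (f := fun ζ₁ => ∮ ζ₂ in C(z, r), Adf f z t ζ₁ ζ₂)
      (g := fun ζ₁ => ∮ ζ₂ in C(z, r), f (ζ₁, ζ₂) * Kf z t ζ₁ ζ₂) oA oK, hA0, zero_add, outK]

end LHS2


noncomputable section Main
open Complex Metric MeasureTheory Set Filter Topology
set_option maxHeartbeats 1000000

/-- `T(Pf)(z,t) = −(ϑ_t(ϑ_t+1) Tf)(z,t) = −t² ∂²(Tf)/∂t² − 2t ∂(Tf)/∂t`
on `U_D`, the contour integrals being computed over any admissible radius `r`
(so that the same radius is admissible for all `s` near `t`). -/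
theorem statement4 (D : Set ℂ) (hD : IsOpen D) (f : ℂ × ℂ → ℂ)
    (hf : DifferentiableOn ℂ f (D ×ˢ D)) :
    ∀ z ∈ D, ∀ t : ℂ, ENNReal.ofReal (2 * ‖t‖) < distB D z →
      ∀ r : ℝ, 2 * ‖t‖ < r → ENNReal.ofReal r < distB D z →
        Tgen (Pop f) z t r =
          -(t ^ 2 * deriv (deriv (fun s => Tgen f z s r)) t
            + 2 * t * deriv (fun s => Tgen f z s r) t) := by
  intro z hz t ht r htr hrd
  have hr0 : 0 < r := lt_of_le_of_lt (by positivity) htr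
  -- find a larger closed ball inside D
  obtain ⟨q, hq0, hq1, hq2⟩ := ENNReal.lt_iff_exists_real_btwn.1 hrd
  have hrq : r < q := by
    by_contra h
    push_neg at h
    exact absurd (ENNReal.ofReal_le_ofReal h) (not_le.2 hq1)
  have hsubD : closedBall z q ⊆ D := by
    intro w hw
    by_contra hwD
    have h1 : EMetric.infEdist z Dᶜ ≤ edist z w := EMetric.infEdist_le_edist_of_mem hwD
    have h2 : edist z w ≤ ENNReal.ofReal q := by
      rw [edist_dist]
      exact ENNReal.ofReal_le_ofReal (by rw [dist_comm]; exact mem_closedBall.1 hw)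
    exact absurd ((h1.trans h2).trans_lt hq2) (lt_irrefl _)
  have hU : IsOpen (D ×ˢ D) := hD.prod hD
  have hsubU : closedBall z q ×ˢ closedBall z q ⊆ D ×ˢ D :=
    Set.prod_mono hsubD hsubD
  have hsphD : sphere z r ⊆ D := fun x hx =>
    hsubD (sphere_subset_closedBall.trans (closedBall_subset_closedBall hrq.le) hx)
  have hfc_sph : ContinuousOn f (sphere z r ×ˢ sphere z r) :=
    hf.continuousOn.mono (Set.prod_mono hsphD hsphD)
  set c2 : ℂ := (1 / (2 * Real.pi * Complex.I)) ^ 2 with hc2_def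
  -- Tgen as Jint
  have hT0 : ∀ s : ℂ, Tgen f z s r = c2 * Jint f z s r 0 := by
    intro s
    rw [Tgen, Jint, hc2_def]
    congr 1
    congr 1
    funext ζ₁
    congr 1
    funext ζ₂
    rw [pow_zero, pow_one, mul_one]
  have hSopen : IsOpen {s : ℂ | 2 * ‖s‖ < r} :=
    isOpen_lt (by fun_prop) continuous_const
  have htS : t ∈ {s : ℂ | 2 * ‖s‖ < r} := htr
  have hJd : ∀ n : ℕ, ∀ s ∈ {s : ℂ | 2 * ‖s‖ < r},
      HasDerivAt (fun s' => Jint f z s' r n) (-((n : ℂ) + 1) * Jint f z s r (n + 1)) s :=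
    fun n s hs => Jint_hasDerivAt f z hr0 n hfc_sph hs
  have hTd : ∀ s ∈ {s : ℂ | 2 * ‖s‖ < r},
      HasDerivAt (fun s' => Tgen f z s' r) (c2 * (-((0 : ℂ) + 1) * Jint f z s r 1)) s := by
    intro s hs
    have h := ((hJd 0 s hs).const_mul c2)
    refine h.congr_of_eventuallyEq (Eventually.of_forall fun s' => hT0 s') |>.congr_deriv ?_
    push_cast
    ring
  set D1 : ℂ → ℂ := fun s => c2 * (-((0 : ℂ) + 1) * Jint f z s r 1) with hD1_def
  have hev : deriv (fun s => Tgen f z s r) =ᶠ[𝓝 t] D1 := by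
    filter_upwards [hSopen.mem_nhds htS] with s hs
    exact (hTd s hs).deriv
  have hD1d := ((hJd 1 t htS).const_mul (-((0 : ℂ) + 1))).const_mul c2
  have hderiv2 : deriv (deriv (fun s => Tgen f z s r)) t
      = c2 * (-((0 : ℂ) + 1) * (-(((1 : ℕ) : ℂ) + 1) * Jint f z t r (1 + 1))) := by
    rw [Filter.EventuallyEq.deriv_eq hev]
    exact hD1d.deriv
  have hderiv1 : deriv (fun s => Tgen f z s r) t = c2 * (-((0 : ℂ) + 1) * Jint f z t r 1) :=
    (hTd t htS).deriv
  -- LHS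
  have hlhs : Tgen (Pop f) z t r
      = c2 * (2 * t * Jint f z t r 1 - 2 * t ^ 2 * Jint f z t r 2) := by
    rw [Tgen, hc2_def]
    congr 1
    exact lhs_eq hU hf hr0 htr hrq hsubU
  rw [hlhs, hderiv1, hderiv2]
  push_cast
  ring
end Main
end

section
/- Let D ⊆ ℂ be open, f holomorphic on D×D, z ∈ D, t ∈ ℂ with 2|t| < d(z,∂D), and let C₁ = C₂ be circles centered at z of radius r with 2|t| < r < d(z,∂D). Then −(2πi)⁻² ∮_{C₁}∮_{C₂} ((ζ₁−ζ₂)(∂f/∂ζ₁ − ∂f/∂ζ₂)(ζ₁,ζ₂)/Q(ζ₁,ζ₂)) dζ₁ dζ₂ = (2πi)⁻² ∮_{C₁}∮_{C₂} (((ζ₁−z)² + (ζ₂−z)²)/Q(ζ₁,ζ₂)²) · f(ζ₁,ζ₂) dζ₁ dζ₂. -/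
open Complex Metric MeasureTheory

noncomputable section

set_option maxHeartbeats 1000000

lemma circleIntegral_deriv_eq_zero {z : ℂ} {r : ℝ} (hr : 0 < r) {h h' : ℂ → ℂ}
    (hd : ∀ ζ ∈ sphere z r, HasDerivAt h (h' ζ) ζ)
    (hc : ContinuousOn h' (sphere z r)) :
    (∮ ζ in C(z, r), h' ζ) = 0 := by
  have key : ∀ θ ∈ Set.uIcc (0:ℝ) (2*Real.pi), HasDerivAt (fun s => h (circleMap z r s))
      (deriv (circleMap z r) θ • h' (circleMap z r θ)) θ := by
    intro θ _
    have h1 := (hd _ (circleMap_mem_sphere z hr.le θ)).comp θ (hasDerivAt_circleMap z r θ)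
    simpa [deriv_circleMap, smul_eq_mul, mul_comm, Function.comp_def] using h1
  have hint : IntervalIntegrable (fun θ => deriv (circleMap z r) θ • h' (circleMap z r θ))
      volume 0 (2*Real.pi) := by
    apply Continuous.intervalIntegrable
    simp only [deriv_circleMap]
    exact ((continuous_circleMap 0 r).mul continuous_const).smul
      (hc.comp_continuous (continuous_circleMap z r) fun θ => circleMap_mem_sphere z hr.le θ)
  have := intervalIntegral.integral_eq_sub_of_hasDerivAt key hint
  rw [circleIntegral, this]
  have : circleMap z r (2*Real.pi) = circleMap z r 0 := by
    simpa using (periodic_circleMap z r) 0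
  rw [this, sub_self]

lemma circleIntegral_swap {z : ℂ} {r : ℝ} (hr : 0 ≤ r) {F : ℂ → ℂ → ℂ}
    (hF : ContinuousOn (fun p : ℂ × ℂ => F p.1 p.2) (sphere z r ×ˢ sphere z r)) :
    (∮ ζ₁ in C(z, r), ∮ ζ₂ in C(z, r), F ζ₁ ζ₂) =
      ∮ ζ₂ in C(z, r), ∮ ζ₁ in C(z, r), F ζ₁ ζ₂ := by
  have hG : Continuous (fun q : ℝ × ℝ => F (circleMap z r q.1) (circleMap z r q.2)) := by
    exact hF.comp_continuous
      (((continuous_circleMap z r).comp continuous_fst).prodMk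
        ((continuous_circleMap z r).comp continuous_snd))
      (fun q => ⟨circleMap_mem_sphere z hr q.1, circleMap_mem_sphere z hr q.2⟩)
  have h2π : (0:ℝ) ≤ 2*Real.pi := by positivity
  have swap : ∀ (H : ℝ → ℝ → ℂ), Continuous (fun q : ℝ × ℝ => H q.1 q.2) →
      (∫ θ₁ in (0:ℝ)..(2*Real.pi), ∫ θ₂ in (0:ℝ)..(2*Real.pi), H θ₁ θ₂)
        = ∫ θ₂ in (0:ℝ)..(2*Real.pi), ∫ θ₁ in (0:ℝ)..(2*Real.pi), H θ₁ θ₂ := by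
    intro H hH
    simp_rw [intervalIntegral.integral_of_le h2π]
    rw [MeasureTheory.integral_integral_swap]
    rw [Measure.prod_restrict, ← Measure.volume_eq_prod]
    have : IntegrableOn (fun q : ℝ × ℝ => H q.1 q.2)
        (Set.Icc (0:ℝ) (2*Real.pi) ×ˢ Set.Icc (0:ℝ) (2*Real.pi)) volume :=
      hH.continuousOn.integrableOn_compact (isCompact_Icc.prod isCompact_Icc)
    exact this.mono_set (Set.prod_mono Set.Ioc_subset_Icc_self Set.Ioc_subset_Icc_self)
  calc (∮ ζ₁ in C(z, r), ∮ ζ₂ in C(z, r), F ζ₁ ζ₂)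
      = ∫ θ₁ in (0:ℝ)..(2*Real.pi), ∫ θ₂ in (0:ℝ)..(2*Real.pi),
          deriv (circleMap z r) θ₁ • deriv (circleMap z r) θ₂ •
            F (circleMap z r θ₁) (circleMap z r θ₂) := by
        simp only [circleIntegral, ← intervalIntegral.integral_smul]
    _ = ∫ θ₂ in (0:ℝ)..(2*Real.pi), ∫ θ₁ in (0:ℝ)..(2*Real.pi),
          deriv (circleMap z r) θ₁ • deriv (circleMap z r) θ₂ •
            F (circleMap z r θ₁) (circleMap z r θ₂) := by
        apply swap
        simp only [deriv_circleMap]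
        exact (((continuous_circleMap 0 r).comp continuous_fst).mul continuous_const).smul
          ((((continuous_circleMap 0 r).comp continuous_snd).mul continuous_const).smul hG)
    _ = ∮ ζ₂ in C(z, r), ∮ ζ₁ in C(z, r), F ζ₁ ζ₂ := by
        simp only [circleIntegral, ← intervalIntegral.integral_smul]
        congr 1; ext θ₂; congr 1; ext θ₁
        rw [smul_comm]

lemma continuousOn_circleIntegral_param {z : ℂ} {r : ℝ} (hr : 0 < r) {F : ℂ → ℂ → ℂ}
    (hF : ContinuousOn (fun p : ℂ × ℂ => F p.1 p.2) (sphere z r ×ˢ sphere z r)) :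
    ContinuousOn (fun ζ₁ => ∮ ζ₂ in C(z, r), F ζ₁ ζ₂) (sphere z r) := by
  have hfib : ∀ ζ₁ ∈ sphere z r, ContinuousOn (fun ζ₂ => F ζ₁ ζ₂) (sphere z r) := by
    intro ζ₁ h₁
    exact hF.comp ((continuousOn_const (c := ζ₁)).prodMk continuousOn_id) fun ζ₂ h₂ => ⟨h₁, h₂⟩
  have hu := ((isCompact_sphere z r).prod (isCompact_sphere z r)).uniformContinuousOn_of_continuous hF
  rw [Metric.uniformContinuousOn_iff] at hu
  rw [Metric.continuousOn_iff]
  intro ζ₁ h₁ ε hε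
  obtain ⟨δ, hδ, hd⟩ := hu (ε / (2*Real.pi*r + 1)) (by positivity)
  refine ⟨δ, hδ, fun ζ₁' h₁' hdist => ?_⟩
  rw [dist_eq_norm, ← circleIntegral.integral_sub ((hfib ζ₁' h₁').circleIntegrable hr.le)
    ((hfib ζ₁ h₁).circleIntegrable hr.le)]
  have hbound : ∀ ζ₂ ∈ sphere z r, ‖F ζ₁' ζ₂ - F ζ₁ ζ₂‖ ≤ ε / (2*Real.pi*r + 1) := by
    intro ζ₂ h₂
    rw [← dist_eq_norm]
    refine le_of_lt (hd (ζ₁', ζ₂) ⟨h₁', h₂⟩ (ζ₁, ζ₂) ⟨h₁, h₂⟩ ?_)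
    rw [Prod.dist_eq]
    exact max_lt hdist (by simpa using hδ)
  have := circleIntegral.norm_integral_le_of_norm_le_const hr.le hbound
  refine lt_of_le_of_lt this ?_
  have h1 : 2 * Real.pi * r < 2 * Real.pi * r + 1 := by linarith
  calc 2 * Real.pi * r * (ε / (2 * Real.pi * r + 1))
      < (2 * Real.pi * r + 1) * (ε / (2 * Real.pi * r + 1)) := by
        apply mul_lt_mul_of_pos_right h1 (by positivity)
    _ = ε := by field_simp

lemma pd1_continuousAt {U : Set (ℂ × ℂ)} (hU : IsOpen U) {f : ℂ × ℂ → ℂ}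
    (hf : DifferentiableOn ℂ f U) {p : ℂ × ℂ} (hp : p ∈ U) :
    ContinuousAt (pd1 f) p := by
  obtain ⟨ε₀, hε₀, hball⟩ := Metric.isOpen_iff.1 hU p hp
  set ε₁ := ε₀ / 2 with hε₁def
  have hε₁ : 0 < ε₁ := by positivity
  have hK : closedBall p ε₁ ⊆ U := fun q hq =>
    hball (lt_of_le_of_lt (mem_closedBall.1 hq) (by rw [hε₁def]; linarith))
  have hdiff : ∀ q ∈ closedBall p ε₁, DifferentiableAt ℂ f q := fun q hq =>
    hf.differentiableAt (hU.mem_nhds (hK hq))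
  have hder : ∀ q : ℂ × ℂ, q ∈ closedBall p ε₁ →
      HasDerivAt (fun w => f (w, q.2)) (pd1 f q) q.1 := by
    intro q hq
    have hcomp : DifferentiableAt ℂ (fun w => f (w, q.2)) q.1 :=
      (hdiff q hq).comp q.1 (differentiableAt_id.prodMk (differentiableAt_const _))
    exact hcomp.hasDerivAt
  have hfc : ContinuousOn f (closedBall p ε₁) := hf.continuousOn.mono hK
  have hu := (isCompact_closedBall p ε₁).uniformContinuousOn_of_continuous hfc
  rw [Metric.uniformContinuousOn_iff] at hu
  rw [Metric.continuousAt_iff]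
  intro ε hε
  set R := ε₁ / 2 with hRdef
  have hR : 0 < R := by positivity
  obtain ⟨δ₀, hδ₀, hδ⟩ := hu (ε / 2 * R) (by positivity)
  refine ⟨min δ₀ R, lt_min hδ₀ hR, ?_⟩
  intro q hq
  set c : ℂ := q.1 - p.1 with hcdef
  have hq1 : dist q.1 p.1 < min δ₀ R := lt_of_le_of_lt (le_max_left _ _ |>.trans_eq (Prod.dist_eq (x := q) (y := p)).symm) hq
  have hq2 : dist q.2 p.2 < min δ₀ R := lt_of_le_of_lt (le_max_right _ _ |>.trans_eq (Prod.dist_eq (x := q) (y := p)).symm) hq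
  -- membership facts
  have hmem1 : ∀ w ∈ closedBall p.1 R, ((w + c, q.2) : ℂ × ℂ) ∈ closedBall p ε₁ := by
    intro w hw
    rw [mem_closedBall, Prod.dist_eq]
    refine max_le ?_ ?_
    · calc dist (w + c) p.1 ≤ dist (w + c) w + dist w p.1 := dist_triangle _ _ _
        _ ≤ ‖c‖ + R := by
            refine add_le_add (le_of_eq ?_) (mem_closedBall.1 hw)
            rw [dist_eq_norm]; ring_nf
        _ ≤ R + R := by
            refine add_le_add ?_ le_rfl
            have : ‖c‖ = dist q.1 p.1 := by rw [dist_eq_norm]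
            rw [this]; exact le_of_lt (lt_of_lt_of_le hq1 (min_le_right _ _))
        _ = ε₁ := by rw [hRdef]; ring
    · have := le_of_lt (lt_of_lt_of_le hq2 (min_le_right _ _))
      calc dist q.2 p.2 ≤ R := this
        _ ≤ ε₁ := by rw [hRdef]; linarith
  have hmem2 : ∀ w ∈ closedBall p.1 R, ((w, p.2) : ℂ × ℂ) ∈ closedBall p ε₁ := by
    intro w hw
    rw [mem_closedBall, Prod.dist_eq]
    refine max_le (le_trans (mem_closedBall.1 hw) (by rw [hRdef]; linarith)) (by simp [hε₁.le])
  -- the auxiliary function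
  set v : ℂ → ℂ := fun w => f (w + c, q.2) - f (w, p.2) with hvdef
  have hvd : DiffContOnCl ℂ v (ball p.1 R) := by
    apply DifferentiableOn.diffContOnCl
    rw [closure_ball p.1 hR.ne']
    intro w hw
    refine DifferentiableAt.differentiableWithinAt ?_
    apply DifferentiableAt.sub
    · exact (hdiff _ (hmem1 w hw)).comp w ((differentiableAt_id.add_const c).prodMk (differentiableAt_const _))
    · exact (hdiff _ (hmem2 w hw)).comp w (differentiableAt_id.prodMk (differentiableAt_const _))
  -- derivative of v at p.1
  have hqmem : q ∈ closedBall p ε₁ := by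
    rw [mem_closedBall]
    have h3 : dist q p < ε₁ := by
      calc dist q p < min δ₀ R := hq
        _ ≤ R := min_le_right _ _
        _ ≤ ε₁ := by rw [hRdef]; linarith
    exact h3.le
  have h1 : HasDerivAt (fun w => f (w + c, q.2)) (pd1 f q) p.1 := by
    have hbase := hder q hqmem
    have he : p.1 + c = q.1 := by rw [hcdef]; ring
    rw [← he] at hbase
    have := hbase.comp p.1 ((hasDerivAt_id p.1).add_const c)
    simpa [Function.comp_def] using this
  have h2 : HasDerivAt (fun w => f (w, p.2)) (pd1 f p) p.1 :=
    hder p (mem_closedBall_self hε₁.le)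
  have hv : HasDerivAt v (pd1 f q - pd1 f p) p.1 := h1.sub h2
  -- bound on sphere
  have hbound : ∀ w ∈ sphere p.1 R, ‖v w‖ ≤ ε / 2 * R := by
    intro w hw
    have hwcb : w ∈ closedBall p.1 R := sphere_subset_closedBall hw
    have hdista : dist ((w + c, q.2) : ℂ × ℂ) ((w, p.2) : ℂ × ℂ) < δ₀ := by
      rw [Prod.dist_eq]
      apply max_lt
      · have : dist (w + c) w = dist q.1 p.1 := by
          rw [dist_eq_norm, dist_eq_norm]; congr 1; ring
        rw [this]; exact lt_of_lt_of_le hq1 (min_le_left _ _)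
      · exact lt_of_lt_of_le hq2 (min_le_left _ _)
    have := hδ _ (hmem1 w hwcb) _ (hmem2 w hwcb) hdista
    rw [dist_eq_norm] at this
    exact le_of_lt this
  have hfin := Complex.norm_deriv_le_of_forall_mem_sphere_norm_le hR hvd hbound
  rw [hv.deriv] at hfin
  rw [dist_eq_norm]
  calc ‖pd1 f q - pd1 f p‖ ≤ ε / 2 * R / R := hfin
    _ = ε / 2 := by field_simp
    _ < ε := by linarith

def gg (f : ℂ × ℂ → ℂ) (z t ζ₁ ζ₂ : ℂ) : ℂ := (ζ₁ - ζ₂) * f (ζ₁, ζ₂) / Qpoly z t ζ₁ ζ₂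

def PP1 (f : ℂ × ℂ → ℂ) (z t ζ₁ ζ₂ : ℂ) : ℂ :=
  ((f (ζ₁, ζ₂) + (ζ₁ - ζ₂) * pd1 f (ζ₁, ζ₂)) * Qpoly z t ζ₁ ζ₂ -
    (ζ₁ - ζ₂) * f (ζ₁, ζ₂) * ((ζ₂ - z) + t)) / Qpoly z t ζ₁ ζ₂ ^ 2

def PP2 (f : ℂ × ℂ → ℂ) (z t ζ₁ ζ₂ : ℂ) : ℂ :=
  ((-f (ζ₁, ζ₂) + (ζ₁ - ζ₂) * pd2 f (ζ₁, ζ₂)) * Qpoly z t ζ₁ ζ₂ -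
    (ζ₁ - ζ₂) * f (ζ₁, ζ₂) * ((ζ₁ - z) - t)) / Qpoly z t ζ₁ ζ₂ ^ 2

lemma hasDerivAt_gg_fst {f : ℂ × ℂ → ℂ} {z t ζ₁ ζ₂ : ℂ}
    (hf1 : HasDerivAt (fun w => f (w, ζ₂)) (pd1 f (ζ₁, ζ₂)) ζ₁)
    (hQ : Qpoly z t ζ₁ ζ₂ ≠ 0) :
    HasDerivAt (fun w => gg f z t w ζ₂) (PP1 f z t ζ₁ ζ₂) ζ₁ := by
  have hN : HasDerivAt (fun w => (w - ζ₂) * f (w, ζ₂))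
      (1 * f (ζ₁, ζ₂) + (ζ₁ - ζ₂) * pd1 f (ζ₁, ζ₂)) ζ₁ :=
    ((hasDerivAt_id ζ₁).sub_const ζ₂).mul hf1
  have hQd : HasDerivAt (fun w => Qpoly z t w ζ₂) (1 * (ζ₂ - z) + t * 1) ζ₁ :=
    (((hasDerivAt_id ζ₁).sub_const z).mul_const (ζ₂ - z)).add
      (((hasDerivAt_id ζ₁).sub_const ζ₂).const_mul t)
  have hdiv := hN.div hQd hQ
  have heq : ((1 * f (ζ₁, ζ₂) + (ζ₁ - ζ₂) * pd1 f (ζ₁, ζ₂)) * Qpoly z t ζ₁ ζ₂ -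
      (ζ₁ - ζ₂) * f (ζ₁, ζ₂) * (1 * (ζ₂ - z) + t * 1)) / Qpoly z t ζ₁ ζ₂ ^ 2
      = PP1 f z t ζ₁ ζ₂ := by
    rw [PP1]; ring_nf
  exact heq ▸ hdiv

lemma hasDerivAt_gg_snd {f : ℂ × ℂ → ℂ} {z t ζ₁ ζ₂ : ℂ}
    (hf2 : HasDerivAt (fun w => f (ζ₁, w)) (pd2 f (ζ₁, ζ₂)) ζ₂)
    (hQ : Qpoly z t ζ₁ ζ₂ ≠ 0) :
    HasDerivAt (fun w => gg f z t ζ₁ w) (PP2 f z t ζ₁ ζ₂) ζ₂ := by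
  have hN : HasDerivAt (fun w => (ζ₁ - w) * f (ζ₁, w))
      ((0 - 1) * f (ζ₁, ζ₂) + (ζ₁ - ζ₂) * pd2 f (ζ₁, ζ₂)) ζ₂ :=
    ((hasDerivAt_const ζ₂ ζ₁).sub (hasDerivAt_id ζ₂)).mul hf2
  have hQd : HasDerivAt (fun w => Qpoly z t ζ₁ w) ((ζ₁ - z) * 1 + t * (0 - 1)) ζ₂ :=
    (((hasDerivAt_id ζ₂).sub_const z).const_mul (ζ₁ - z)).add
      (((hasDerivAt_const ζ₂ ζ₁).sub (hasDerivAt_id ζ₂)).const_mul t)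
  have hdiv := hN.div hQd hQ
  have heq : (((0 - 1) * f (ζ₁, ζ₂) + (ζ₁ - ζ₂) * pd2 f (ζ₁, ζ₂)) * Qpoly z t ζ₁ ζ₂ -
      (ζ₁ - ζ₂) * f (ζ₁, ζ₂) * ((ζ₁ - z) * 1 + t * (0 - 1))) / Qpoly z t ζ₁ ζ₂ ^ 2
      = PP2 f z t ζ₁ ζ₂ := by
    rw [PP2]; ring_nf
  exact heq ▸ hdiv

lemma key_identity_s8 (f : ℂ × ℂ → ℂ) (z t ζ₁ ζ₂ : ℂ) (hQ : Qpoly z t ζ₁ ζ₂ ≠ 0) :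
    (ζ₁ - ζ₂) * (pd1 f (ζ₁, ζ₂) - pd2 f (ζ₁, ζ₂)) / Qpoly z t ζ₁ ζ₂ =
      PP1 f z t ζ₁ ζ₂ - PP2 f z t ζ₁ ζ₂ -
        ((ζ₁ - z) ^ 2 + (ζ₂ - z) ^ 2) / Qpoly z t ζ₁ ζ₂ ^ 2 * f (ζ₁, ζ₂) := by
  rw [PP1, PP2]
  field_simp
  rw [Qpoly]
  ring

lemma pd2_continuousOn {U : Set (ℂ × ℂ)} (hU : IsOpen U) {f : ℂ × ℂ → ℂ}
    (hf : DifferentiableOn ℂ f U) : ContinuousOn (pd2 f) U := by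
  intro p hp
  have hU' : IsOpen (Prod.swap ⁻¹' U : Set (ℂ × ℂ)) := hU.preimage continuous_swap
  have hg : DifferentiableOn ℂ (fun q : ℂ × ℂ => f (q.2, q.1)) (Prod.swap ⁻¹' U) := by
    intro q hq
    exact ((hf.differentiableAt (hU.mem_nhds hq)).comp q
      (differentiableAt_snd.prodMk differentiableAt_fst)).differentiableWithinAt
  have hp' : (Prod.swap p : ℂ × ℂ) ∈ Prod.swap ⁻¹' U := by simpa using hp
  have := (pd1_continuousAt hU' hg hp').comp continuous_swap.continuousAt
  exact this.continuousWithinAt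

/-- `−(2πi)⁻² ∮∮ (ζ₁−ζ₂)(∂f/∂ζ₁ − ∂f/∂ζ₂)/Q dζ₁ dζ₂
  = (2πi)⁻² ∮∮ ((ζ₁−z)² + (ζ₂−z)²)/Q² · f dζ₁ dζ₂`. -/
theorem statement8 (D : Set ℂ) (hD : IsOpen D) (f : ℂ × ℂ → ℂ)
    (hf : DifferentiableOn ℂ f (D ×ˢ D)) (z : ℂ) (hz : z ∈ D) (t : ℂ)
    (ht : ENNReal.ofReal (2 * ‖t‖) < distB D z) (r : ℝ)
    (hr1 : 2 * ‖t‖ < r) (hr2 : ENNReal.ofReal r < distB D z) :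
    -((1 / (2 * Real.pi * Complex.I)) ^ 2 *
        (∮ ζ₁ in C(z, r), (∮ ζ₂ in C(z, r),
          (ζ₁ - ζ₂) * (pd1 f (ζ₁, ζ₂) - pd2 f (ζ₁, ζ₂)) / Qpoly z t ζ₁ ζ₂))) =
      (1 / (2 * Real.pi * Complex.I)) ^ 2 *
        (∮ ζ₁ in C(z, r), (∮ ζ₂ in C(z, r),
          ((ζ₁ - z) ^ 2 + (ζ₂ - z) ^ 2) / (Qpoly z t ζ₁ ζ₂) ^ 2 * f (ζ₁, ζ₂))) := by
  have hrpos : 0 < r := lt_of_le_of_lt (by positivity : (0:ℝ) ≤ 2 * ‖t‖) hr1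
  have hball : closedBall z r ⊆ D := by
    intro w hw
    by_contra hwD
    have h1 : distB D z ≤ edist z w := EMetric.infEdist_le_edist_of_mem hwD
    have h2 : edist z w ≤ ENNReal.ofReal r := by
      rw [edist_dist]
      exact ENNReal.ofReal_le_ofReal (by rw [dist_comm]; exact mem_closedBall.1 hw)
    exact absurd (lt_of_le_of_lt (h1.trans h2) hr2) (lt_irrefl _)
  have hSD : sphere z r ⊆ D := fun w hw => hball (sphere_subset_closedBall hw)
  have hSS : sphere z r ×ˢ sphere z r ⊆ D ×ˢ D := Set.prod_mono hSD hSD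
  have hQne : ∀ ζ₁ ∈ sphere z r, ∀ ζ₂ ∈ sphere z r, Qpoly z t ζ₁ ζ₂ ≠ 0 := by
    intro ζ₁ h₁ ζ₂ h₂ h0
    rw [Qpoly] at h0
    have e1 : (ζ₁ - z) * (ζ₂ - z) = -(t * (ζ₁ - ζ₂)) := eq_neg_of_add_eq_zero_left h0
    have e2 : ‖ζ₁ - z‖ = r := mem_sphere_iff_norm.1 h₁
    have e3 : ‖ζ₂ - z‖ = r := mem_sphere_iff_norm.1 h₂
    have e4 : r * r = ‖t‖ * ‖ζ₁ - ζ₂‖ := by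
      calc r * r = ‖(ζ₁ - z) * (ζ₂ - z)‖ := by rw [norm_mul, e2, e3]
        _ = ‖t‖ * ‖ζ₁ - ζ₂‖ := by rw [e1, norm_neg, norm_mul]
    have e5 : ‖ζ₁ - ζ₂‖ ≤ r + r := by
      calc ‖ζ₁ - ζ₂‖ = ‖(ζ₁ - z) - (ζ₂ - z)‖ := by ring_nf
        _ ≤ ‖ζ₁ - z‖ + ‖ζ₂ - z‖ := norm_sub_le _ _
        _ = r + r := by rw [e2, e3]
    have e6 : (0:ℝ) ≤ ‖t‖ := norm_nonneg t
    nlinarith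
  -- slice derivatives
  have hd1S : ∀ ζ₁ ∈ sphere z r, ∀ ζ₂ ∈ sphere z r,
      HasDerivAt (fun w => f (w, ζ₂)) (pd1 f (ζ₁, ζ₂)) ζ₁ := by
    intro ζ₁ h₁ ζ₂ h₂
    have hmem : ((ζ₁, ζ₂) : ℂ × ℂ) ∈ D ×ˢ D := Set.mk_mem_prod (hSD h₁) (hSD h₂)
    have : DifferentiableAt ℂ (fun w => f (w, ζ₂)) ζ₁ :=
      (hf.differentiableAt ((hD.prod hD).mem_nhds hmem)).comp ζ₁
        (differentiableAt_id.prodMk (differentiableAt_const _))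
    exact this.hasDerivAt
  have hd2S : ∀ ζ₁ ∈ sphere z r, ∀ ζ₂ ∈ sphere z r,
      HasDerivAt (fun w => f (ζ₁, w)) (pd2 f (ζ₁, ζ₂)) ζ₂ := by
    intro ζ₁ h₁ ζ₂ h₂
    have hmem : ((ζ₁, ζ₂) : ℂ × ℂ) ∈ D ×ˢ D := Set.mk_mem_prod (hSD h₁) (hSD h₂)
    have : DifferentiableAt ℂ (fun w => f (ζ₁, w)) ζ₂ :=
      (hf.differentiableAt ((hD.prod hD).mem_nhds hmem)).comp ζ₂
        ((differentiableAt_const _).prodMk differentiableAt_id)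
    exact this.hasDerivAt
  -- continuity
  have hc1 : ContinuousOn (pd1 f) (D ×ˢ D) := fun p hp =>
    (pd1_continuousAt (hD.prod hD) hf hp).continuousWithinAt
  have hc2 : ContinuousOn (pd2 f) (D ×ˢ D) := pd2_continuousOn (hD.prod hD) hf
  have hQcont : Continuous (fun p : ℂ × ℂ => Qpoly z t p.1 p.2) := by
    simp only [Qpoly]; fun_prop
  have hQsqne : ∀ p ∈ sphere z r ×ˢ sphere z r, Qpoly z t p.1 p.2 ^ 2 ≠ 0 :=
    fun p hp => pow_ne_zero 2 (hQne p.1 hp.1 p.2 hp.2)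
  have hfS : ContinuousOn (fun p : ℂ × ℂ => f (p.1, p.2)) (sphere z r ×ˢ sphere z r) :=
    hf.continuousOn.mono hSS
  have hsubc : Continuous (fun p : ℂ × ℂ => p.1 - p.2) := by fun_prop
  have hP1cont : ContinuousOn (fun p : ℂ × ℂ => PP1 f z t p.1 p.2)
      (sphere z r ×ˢ sphere z r) := by
    simp only [PP1]
    exact (((hfS.add (hsubc.continuousOn.mul (hc1.mono hSS))).mul hQcont.continuousOn).sub
      ((hsubc.continuousOn.mul hfS).mul
        (by fun_prop : Continuous fun p : ℂ × ℂ => (p.2 - z) + t).continuousOn)).div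
      ((hQcont.pow 2).continuousOn) hQsqne
  have hP2cont : ContinuousOn (fun p : ℂ × ℂ => PP2 f z t p.1 p.2)
      (sphere z r ×ˢ sphere z r) := by
    simp only [PP2]
    exact ((((hfS.neg).add (hsubc.continuousOn.mul (hc2.mono hSS))).mul hQcont.continuousOn).sub
      ((hsubc.continuousOn.mul hfS).mul
        (by fun_prop : Continuous fun p : ℂ × ℂ => (p.1 - z) - t).continuousOn)).div
      ((hQcont.pow 2).continuousOn) hQsqne
  have hRcont : ContinuousOn
      (fun p : ℂ × ℂ => ((p.1 - z) ^ 2 + (p.2 - z) ^ 2) / Qpoly z t p.1 p.2 ^ 2 * f (p.1, p.2))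
      (sphere z r ×ˢ sphere z r) :=
    (((by fun_prop : Continuous fun p : ℂ × ℂ => (p.1 - z) ^ 2 + (p.2 - z) ^ 2).continuousOn).div
      ((hQcont.pow 2).continuousOn) hQsqne).mul hfS
  -- fiber continuity helpers
  have hfib2 : ∀ {F : ℂ × ℂ → ℂ} (ζ₁ : ℂ), ζ₁ ∈ sphere z r →
      ContinuousOn F (sphere z r ×ˢ sphere z r) →
      ContinuousOn (fun ζ₂ => F (ζ₁, ζ₂)) (sphere z r) :=
    fun ζ₁ h₁ hc => hc.comp ((continuousOn_const (c := ζ₁)).prodMk continuousOn_id) fun ζ₂ h₂ => ⟨h₁, h₂⟩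
  have hfib1 : ∀ {F : ℂ × ℂ → ℂ} (ζ₂ : ℂ), ζ₂ ∈ sphere z r →
      ContinuousOn F (sphere z r ×ˢ sphere z r) →
      ContinuousOn (fun ζ₁ => F (ζ₁, ζ₂)) (sphere z r) :=
    fun ζ₂ h₂ hc => hc.comp (continuousOn_id.prodMk (continuousOn_const (c := ζ₂))) fun ζ₁ h₁ => ⟨h₁, h₂⟩
  -- Step A : inner integral of PP2 vanishes
  have stepA : ∀ ζ₁ ∈ sphere z r, (∮ ζ₂ in C(z, r), PP2 f z t ζ₁ ζ₂) = 0 := by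
    intro ζ₁ h₁
    exact circleIntegral_deriv_eq_zero hrpos
      (fun ζ₂ h₂ => hasDerivAt_gg_snd (hd2S ζ₁ h₁ ζ₂ h₂) (hQne ζ₁ h₁ ζ₂ h₂))
      (hfib2 ζ₁ h₁ hP2cont)
  -- Step B : integral of PP1 in the first variable vanishes
  have stepB : ∀ ζ₂ ∈ sphere z r, (∮ ζ₁ in C(z, r), PP1 f z t ζ₁ ζ₂) = 0 := by
    intro ζ₂ h₂
    exact circleIntegral_deriv_eq_zero hrpos
      (fun ζ₁ h₁ => hasDerivAt_gg_fst (hd1S ζ₁ h₁ ζ₂ h₂) (hQne ζ₁ h₁ ζ₂ h₂))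
      (hfib1 ζ₂ h₂ hP1cont)
  -- Step C : inner identity
  have stepC : ∀ ζ₁ ∈ sphere z r,
      (∮ ζ₂ in C(z, r), (ζ₁ - ζ₂) * (pd1 f (ζ₁, ζ₂) - pd2 f (ζ₁, ζ₂)) / Qpoly z t ζ₁ ζ₂)
        = (∮ ζ₂ in C(z, r), PP1 f z t ζ₁ ζ₂)
          - (∮ ζ₂ in C(z, r),
              ((ζ₁ - z) ^ 2 + (ζ₂ - z) ^ 2) / Qpoly z t ζ₁ ζ₂ ^ 2 * f (ζ₁, ζ₂)) := by
    intro ζ₁ h₁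
    have hcongr : (∮ ζ₂ in C(z, r),
        (ζ₁ - ζ₂) * (pd1 f (ζ₁, ζ₂) - pd2 f (ζ₁, ζ₂)) / Qpoly z t ζ₁ ζ₂)
        = ∮ ζ₂ in C(z, r), (PP1 f z t ζ₁ ζ₂ - PP2 f z t ζ₁ ζ₂ -
            ((ζ₁ - z) ^ 2 + (ζ₂ - z) ^ 2) / Qpoly z t ζ₁ ζ₂ ^ 2 * f (ζ₁, ζ₂)) :=
      circleIntegral.integral_congr hrpos.le
        (fun ζ₂ h₂ => key_identity_s8 f z t ζ₁ ζ₂ (hQne ζ₁ h₁ ζ₂ h₂))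
    rw [hcongr]
    rw [circleIntegral.integral_sub (f := fun ζ₂ => PP1 f z t ζ₁ ζ₂ - PP2 f z t ζ₁ ζ₂)
      (g := fun ζ₂ => ((ζ₁ - z) ^ 2 + (ζ₂ - z) ^ 2) / Qpoly z t ζ₁ ζ₂ ^ 2 * f (ζ₁, ζ₂))
      (((hfib2 ζ₁ h₁ hP1cont).sub (hfib2 ζ₁ h₁ hP2cont)).circleIntegrable hrpos.le)
      ((hfib2 ζ₁ h₁ hRcont).circleIntegrable hrpos.le)]
    rw [circleIntegral.integral_sub (f := fun ζ₂ => PP1 f z t ζ₁ ζ₂) (g := fun ζ₂ => PP2 f z t ζ₁ ζ₂)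
      ((hfib2 ζ₁ h₁ hP1cont).circleIntegrable hrpos.le)
      ((hfib2 ζ₁ h₁ hP2cont).circleIntegrable hrpos.le)]
    rw [stepA ζ₁ h₁, sub_zero]
  -- Step D : outer assembly
  have hTcont : ContinuousOn (fun ζ₁ => ∮ ζ₂ in C(z, r), PP1 f z t ζ₁ ζ₂) (sphere z r) :=
    continuousOn_circleIntegral_param hrpos hP1cont
  have hIRcont : ContinuousOn (fun ζ₁ => ∮ ζ₂ in C(z, r),
      ((ζ₁ - z) ^ 2 + (ζ₂ - z) ^ 2) / Qpoly z t ζ₁ ζ₂ ^ 2 * f (ζ₁, ζ₂)) (sphere z r) :=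
    continuousOn_circleIntegral_param hrpos hRcont
  have hT0 : (∮ ζ₁ in C(z, r), ∮ ζ₂ in C(z, r), PP1 f z t ζ₁ ζ₂) = 0 := by
    rw [circleIntegral_swap hrpos.le hP1cont]
    rw [circleIntegral.integral_congr hrpos.le (fun ζ₂ h₂ => stepB ζ₂ h₂)]
    simp [circleIntegral]
  have hX : (∮ ζ₁ in C(z, r), (∮ ζ₂ in C(z, r),
      (ζ₁ - ζ₂) * (pd1 f (ζ₁, ζ₂) - pd2 f (ζ₁, ζ₂)) / Qpoly z t ζ₁ ζ₂))
      = -(∮ ζ₁ in C(z, r), (∮ ζ₂ in C(z, r),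
          ((ζ₁ - z) ^ 2 + (ζ₂ - z) ^ 2) / Qpoly z t ζ₁ ζ₂ ^ 2 * f (ζ₁, ζ₂))) := by
    rw [circleIntegral.integral_congr hrpos.le (fun ζ₁ h₁ => stepC ζ₁ h₁)]
    rw [circleIntegral.integral_sub (hTcont.circleIntegrable hrpos.le)
      (hIRcont.circleIntegrable hrpos.le)]
    rw [hT0, zero_sub]
  rw [hX]
  ring
end
end
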